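/- arXiv:1509.01485 — 9 statements merged into one kernel-verified Lean document; each statement's English description precedes it below -/
import Mathlib

section
/- Let 1 ≤ q < p < ∞, k ∈ ℕ, and let a_1* ≥ a_2* ≥ ... ≥ a_k* ≥ t ≥ 0 be real numbers. Then (∑_{n=1}^k (a_n*)^p)^{q/p} + t^q·(k+1)^{1/p - 1/q} ≥ (∑_{n=1}^k (a_n*)^p + t^p)^{q/p}. -/
/-!
Put `r = q / p ∈ (0, 1)` and `S = ∑ (a n)^p`. Every `a n` is at least `t`, so `S ≥ k t^p`.
By concavity of `x ↦ x^r`, the increment `(S + t^p)^r - S^r` is therefore at most the increment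
at `k t^p`, which by homogeneity is `t^q ((k+1)^r - k^r)`. Finally
`(k+1)^r - k^r ≤ (k+1)^(r-1) ≤ (k+1)^(1/p - 1/q)`, the last step because `q ≥ 1`.
-/

open Real

lemma antitoneOn_rpow_add_sub_rpow {r c : ℝ} (hr₀ : 0 ≤ r) (hr₁ : r ≤ 1) (hc : 0 ≤ c) :
    AntitoneOn (fun x : ℝ => (x + c) ^ r - x ^ r) (Set.Ici 0) := by
  refine antitoneOn_of_hasDerivWithinAt_nonpos
    (f' := fun x => r * (x + c) ^ (r - 1) - r * x ^ (r - 1)) (convex_Ici 0) ?_ ?_ ?_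
  · exact ((continuousOn_id.add continuousOn_const).rpow_const fun _ _ => Or.inr hr₀).sub
      (continuousOn_id.rpow_const fun _ _ => Or.inr hr₀)
  · intro x hx
    have hx : 0 < x := by simpa using hx
    exact (((hasDerivAt_rpow_const (Or.inl (by positivity))).comp_add_const x c).sub
      (hasDerivAt_rpow_const (Or.inl hx.ne'))).hasDerivWithinAt
  · intro x hx
    have hx : 0 < x := by simpa using hx
    exact sub_nonpos.2 (mul_le_mul_of_nonneg_left
      (rpow_le_rpow_of_nonpos hx (le_add_of_nonneg_right hc) (by linarith)) hr₀)

lemma rpow_add_sub_rpow_le_of_mul_le {r u x S : ℝ} (hr₀ : 0 ≤ r) (hr₁ : r ≤ 1) (hu : 0 ≤ u)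
    (hx : 0 ≤ x) (hS : x * u ≤ S) :
    (S + u) ^ r - S ^ r ≤ u ^ r * ((x + 1) ^ r - x ^ r) := by
  have hxu : 0 ≤ x * u := mul_nonneg hx hu
  calc (S + u) ^ r - S ^ r ≤ (x * u + u) ^ r - (x * u) ^ r :=
        antitoneOn_rpow_add_sub_rpow hr₀ hr₁ hu hxu (hxu.trans hS) hS
    _ = u ^ r * ((x + 1) ^ r - x ^ r) := by
        rw [show x * u + u = (x + 1) * u by ring, mul_rpow (by positivity) hu, mul_rpow hx hu]
        ring

lemma add_one_rpow_sub_rpow_le {r x : ℝ} (hr : r ≤ 1) (hx : 0 ≤ x) :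
    (x + 1) ^ r - x ^ r ≤ (x + 1) ^ (r - 1) := by
  rcases hx.eq_or_lt with rfl | hx
  · simpa using rpow_nonneg le_rfl r
  have hx1 : 0 < x + 1 := by linarith
  have hxr : x * (x + 1) ^ (r - 1) ≤ x ^ r :=
    calc x * (x + 1) ^ (r - 1) ≤ x * x ^ (r - 1) :=
          mul_le_mul_of_nonneg_left (rpow_le_rpow_of_nonpos hx (by linarith) (by linarith)) hx.le
      _ = x ^ r := by rw [rpow_sub_one hx.ne', mul_div_cancel₀ _ hx.ne']
  have hx1r : (x + 1) ^ r = (x + 1) * (x + 1) ^ (r - 1) := by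
    rw [rpow_sub_one hx1.ne', mul_div_cancel₀ _ hx1.ne']
  linarith

theorem stmt0_general (p q : ℝ) (hq : 1 ≤ q) (hqp : q < p) (k : ℕ) (a : ℕ → ℝ) (t : ℝ)
    (hmono : ∀ i j, 1 ≤ i → i ≤ j → j ≤ k → a j ≤ a i)
    (ht0 : 0 ≤ t) (htk : 1 ≤ k → t ≤ a k) :
    (∑ n ∈ Finset.Icc 1 k, a n ^ p) ^ (q / p) + t ^ q * ((k : ℝ) + 1) ^ (1 / p - 1 / q)
      ≥ ((∑ n ∈ Finset.Icc 1 k, a n ^ p) + t ^ p) ^ (q / p) := by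
  have hp : 0 < p := by linarith
  have htq : (t ^ p) ^ (q / p) = t ^ q := by rw [← rpow_mul ht0, mul_div_cancel₀ _ hp.ne']
  have hsum : (k : ℝ) * t ^ p ≤ ∑ n ∈ Finset.Icc 1 k, a n ^ p :=
    calc (k : ℝ) * t ^ p = ∑ n ∈ Finset.Icc 1 k, t ^ p := by simp
      _ ≤ _ := Finset.sum_le_sum fun n hn => by
        obtain ⟨h1n, hnk⟩ := Finset.mem_Icc.1 hn
        exact rpow_le_rpow ht0 ((htk (h1n.trans hnk)).trans (hmono n k h1n hnk le_rfl)) hp.le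
  have hexp : q / p - 1 ≤ 1 / p - 1 / q := by
    rw [div_sub_one hp.ne', show 1 / p - 1 / q = (q - p) / p / q by field_simp,
      le_div_iff₀ (by linarith)]
    nlinarith [div_nonpos_of_nonpos_of_nonneg (by linarith : q - p ≤ 0) hp.le]
  have hr₁ : q / p ≤ 1 := (div_le_one hp).2 hqp.le
  have hstep := rpow_add_sub_rpow_le_of_mul_le (by positivity) hr₁ (rpow_nonneg ht0 p)
    k.cast_nonneg hsum
  have hinc : ((k : ℝ) + 1) ^ (q / p) - (k : ℝ) ^ (q / p) ≤ ((k : ℝ) + 1) ^ (1 / p - 1 / q) :=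
    (add_one_rpow_sub_rpow_le hr₁ k.cast_nonneg).trans
      (rpow_le_rpow_of_exponent_le (by linarith [k.cast_nonneg (α := ℝ)]) hexp)
  rw [htq] at hstep
  linarith [mul_le_mul_of_nonneg_left hinc (rpow_nonneg ht0 q)]

/-- Let `1 ≤ q < p < ∞`, `k ∈ ℕ`, and let
`a 1 ≥ a 2 ≥ ⋯ ≥ a k ≥ t ≥ 0` be real numbers.  Then
`(∑_{n=1}^k (a n)^p)^{q/p} + t^q (k+1)^{1/p - 1/q} ≥ (∑_{n=1}^k (a n)^p + t^p)^{q/p}`. -/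
theorem stmt0 (p q : ℝ) (hq : 1 ≤ q) (hqp : q < p) (k : ℕ) (a : ℕ → ℝ) (t : ℝ)
    (ha0 : ∀ i, 1 ≤ i → i ≤ k → 0 ≤ a i)
    (hmono : ∀ i j, 1 ≤ i → i ≤ j → j ≤ k → a j ≤ a i)
    (ht0 : 0 ≤ t) (htk : 1 ≤ k → t ≤ a k) :
    (∑ n ∈ Finset.Icc 1 k, a n ^ p) ^ (q / p) + t ^ q * ((k : ℝ) + 1) ^ (1 / p - 1 / q)
      ≥ ((∑ n ∈ Finset.Icc 1 k, a n ^ p) + t ^ p) ^ (q / p) :=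
  stmt0_general p q hq hqp k a t hmono ht0 htk
end

section
/- Fix 1 ≤ q < p < ∞. Let (v_n) be a sequence of nonnegative reals with v_n ≥ n^{1/p - 1/q} for all n ≥ 1. Then for every k ∈ ℕ and every nonincreasing sequence of nonnegative reals a_1* ≥ a_2* ≥ ... ≥ a_k*, one has ∑_{n=1}^k (a_n*)^q · v_n ≥ (∑_{n=1}^k (a_n*)^p)^{q/p}. -/
/-!
Put `b n = (a n)^p` and `r = q/p ∈ (0, 1]`. For a nonincreasing nonnegative `b`, adding the
`n`-th term to a partial sum `T ≥ (n - 1) b n` raises `T^r` by at most `(b n)^r n^(r-1)`: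
writing `s = T + b n`, split `s^r = s^(r-1) T + s^(r-1) b n` and use `s ≥ T`, `s ≥ n b n`
together with `r - 1 ≤ 0`. Summing gives `(∑ b n)^r ≤ ∑ (b n)^r n^(r-1)`, and
`n^(r-1) ≤ n^(1/p - 1/q) ≤ v n` because `r - 1 = q (1/p - 1/q)` with `q ≥ 1`.
-/

open Finset

lemma Real.rpow_add_le_rpow_add_mul_rpow {r T x k : ℝ} (hr0 : 0 < r) (hr1 : r ≤ 1)
    (hT : 0 ≤ T) (hx : 0 ≤ x) (hk : 0 < k) (hkx : k * x ≤ T + x) :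
    (T + x) ^ r ≤ T ^ r + x ^ r * k ^ (r - 1) := by
  rcases hx.eq_or_lt with rfl | hx
  · simp [Real.zero_rpow hr0.ne']
  have hs : 0 < T + x := by linarith
  have hT_part : (T + x) ^ (r - 1) * T ≤ T ^ r := by
    rcases hT.eq_or_lt with rfl | hT
    · simp [Real.zero_rpow hr0.ne']
    calc (T + x) ^ (r - 1) * T ≤ T ^ (r - 1) * T := by
          have := Real.rpow_le_rpow_of_nonpos hT (le_add_of_nonneg_right hx.le)
            (sub_nonpos.mpr hr1)
          exact mul_le_mul_of_nonneg_right this hT.le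
      _ = T ^ r := by rw [Real.rpow_sub_one hT.ne', div_mul_cancel₀ _ hT.ne']
  have hx_part : (T + x) ^ (r - 1) * x ≤ x ^ r * k ^ (r - 1) := by
    calc (T + x) ^ (r - 1) * x ≤ (k * x) ^ (r - 1) * x := by
          have := Real.rpow_le_rpow_of_nonpos (mul_pos hk hx) hkx (sub_nonpos.mpr hr1)
          exact mul_le_mul_of_nonneg_right this hx.le
      _ = x ^ r * k ^ (r - 1) := by
          rw [Real.mul_rpow hk.le hx.le, Real.rpow_sub_one hx.ne']
          field_simp
  calc (T + x) ^ r = (T + x) ^ (r - 1) * T + (T + x) ^ (r - 1) * x := by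
        rw [← mul_add, Real.rpow_sub_one hs.ne', div_mul_cancel₀ _ hs.ne']
    _ ≤ T ^ r + x ^ r * k ^ (r - 1) := add_le_add hT_part hx_part

lemma Real.rpow_sum_Icc_le_sum_rpow_mul_rpow_of_antitoneOn {r : ℝ} (hr0 : 0 < r) (hr1 : r ≤ 1)
    (k : ℕ) {b : ℕ → ℝ} (hb0 : ∀ n ∈ Icc 1 k, 0 ≤ b n)
    (hb : AntitoneOn b (Set.Icc 1 k)) :
    (∑ n ∈ Icc 1 k, b n) ^ r ≤ ∑ n ∈ Icc 1 k, b n ^ r * (n : ℝ) ^ (r - 1) := by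
  induction k with
  | zero => simp [Real.zero_rpow hr0.ne']
  | succ k ih =>
    have hIcc : Icc 1 k ⊆ Icc 1 (k + 1) := Icc_subset_Icc_right k.le_succ
    have hlast : k + 1 ∈ Icc 1 (k + 1) := by simp
    have hpartial : k * b (k + 1) ≤ ∑ n ∈ Icc 1 k, b n := by
      have := card_nsmul_le_sum (Icc 1 k) b (b (k + 1)) fun n hn =>
        hb (by simpa using hIcc hn) (by simp) ((mem_Icc.mp hn).2.trans k.le_succ)
      simpa using this
    rw [sum_Icc_succ_top (by omega), sum_Icc_succ_top (by omega)]
    calc (∑ n ∈ Icc 1 k, b n + b (k + 1)) ^ r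
        ≤ (∑ n ∈ Icc 1 k, b n) ^ r + b (k + 1) ^ r * ((k + 1 : ℕ) : ℝ) ^ (r - 1) :=
          Real.rpow_add_le_rpow_add_mul_rpow hr0 hr1
            (sum_nonneg fun n hn => hb0 n (hIcc hn)) (hb0 _ hlast) (by positivity)
            (by push_cast; linarith)
      _ ≤ _ := by
          gcongr
          exact ih (fun n hn => hb0 n (hIcc hn))
            (hb.mono (Set.Icc_subset_Icc_right (by simp)))

theorem stmt1_general (p q : ℝ) (hq : 1 ≤ q) (hqp : q < p) (v : ℕ → ℝ)
    (hv : ∀ n : ℕ, 1 ≤ n → (n : ℝ) ^ (1 / p - 1 / q) ≤ v n)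
    (k : ℕ) (a : ℕ → ℝ)
    (ha0 : ∀ i, 1 ≤ i → i ≤ k → 0 ≤ a i)
    (hmono : ∀ i j, 1 ≤ i → i ≤ j → j ≤ k → a j ≤ a i) :
    ∑ n ∈ Finset.Icc 1 k, a n ^ q * v n ≥ (∑ n ∈ Finset.Icc 1 k, a n ^ p) ^ (q / p) := by
  have hp : 0 < p := by linarith
  have hexp : q / p - 1 ≤ 1 / p - 1 / q := by
    have hpq : 1 / p - 1 / q ≤ 0 := by
      have := one_div_le_one_div_of_le (by linarith) hqp.le; linarith
    have : q / p - 1 = q * (1 / p - 1 / q) := by field_simp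
    rw [this]; nlinarith
  have hpow : ∀ n ∈ Icc 1 k, (a n ^ p) ^ (q / p) = a n ^ q := fun n hn => by
    rw [← Real.rpow_mul (ha0 n (mem_Icc.mp hn).1 (mem_Icc.mp hn).2), mul_div_cancel₀ _ hp.ne']
  calc (∑ n ∈ Icc 1 k, a n ^ p) ^ (q / p)
      ≤ ∑ n ∈ Icc 1 k, (a n ^ p) ^ (q / p) * (n : ℝ) ^ (q / p - 1) :=
        Real.rpow_sum_Icc_le_sum_rpow_mul_rpow_of_antitoneOn (by positivity)
          ((div_le_one hp).mpr hqp.le) k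
          (fun n hn => Real.rpow_nonneg (ha0 n (mem_Icc.mp hn).1 (mem_Icc.mp hn).2) p)
          (fun i hi j hj hij => Real.rpow_le_rpow (ha0 j hj.1 hj.2) (hmono i j hi.1 hij hj.2) hp.le)
    _ ≤ ∑ n ∈ Icc 1 k, a n ^ q * v n := by
        refine sum_le_sum fun n hn => ?_
        have hn1 : (1 : ℝ) ≤ n := by exact_mod_cast (mem_Icc.mp hn).1
        rw [hpow n hn]
        gcongr
        · exact Real.rpow_nonneg (ha0 n (mem_Icc.mp hn).1 (mem_Icc.mp hn).2) q
        · exact (Real.rpow_le_rpow_of_exponent_le hn1 hexp).trans (hv n (mem_Icc.mp hn).1)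

/-- Fix `1 ≤ q < p < ∞`.  If `v n ≥ n^{1/p - 1/q}` for all `n ≥ 1`,
then for every `k` and every nonincreasing sequence of nonnegative reals
`a 1 ≥ ⋯ ≥ a k ≥ 0`, we have `∑_{n=1}^k (a n)^q v n ≥ (∑_{n=1}^k (a n)^p)^{q/p}`. -/
theorem stmt1 (p q : ℝ) (hq : 1 ≤ q) (hqp : q < p) (v : ℕ → ℝ)
    (hv0 : ∀ n : ℕ, 1 ≤ n → 0 ≤ v n)
    (hv : ∀ n : ℕ, 1 ≤ n → (n : ℝ) ^ (1 / p - 1 / q) ≤ v n)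
    (k : ℕ) (a : ℕ → ℝ)
    (ha0 : ∀ i, 1 ≤ i → i ≤ k → 0 ≤ a i)
    (hmono : ∀ i j, 1 ≤ i → i ≤ j → j ≤ k → a j ≤ a i) :
    ∑ n ∈ Finset.Icc 1 k, a n ^ q * v n ≥ (∑ n ∈ Finset.Icc 1 k, a n ^ p) ^ (q / p) :=
  stmt1_general p q hq hqp v hv k a ha0 hmono
end

section
/- Fix 1 ≤ q < p < ∞ and set s = 1/q - 1/p. There exist two nonincreasing sequences w = (w_n) and w̃ = (w̃_n) of positive reals with w_1 = w̃_1 = 1, both tending to 0 and both with divergent series, such that: (1) for every n, either w_n = n^{-s} or w̃_n = n^{-s}; (2) neither ∑_{n=1}^N w_n nor ∑_{n=1}^N w̃_n is bounded below by a constant multiple of N^{q/p}, i.e. liminf_N (∑_{n=1}^N w_n)/N^{q/p} = 0 and liminf_N (∑_{n=1}^N w̃_n)/N^{q/p} = 0. -/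
/-!
Fix milestones `1 = c 0 < c 1 < ⋯`. The weight `w` equals `n ^ (-s)` on the blocks
`[c (2j), c (2j+1)]` and is frozen at its next value `c (2j+2) ^ (-s)` on each gap
`(c (2j+1), c (2j+2))`; `w̃` does the same with the roles of even and odd blocks exchanged, so
every `n` lies in a block of one of them. Each `c (k+1)` is chosen so large that the gap
`(c k, c (k+1))` carries mass at least `1` (divergence), and that at some checkpoint `N` in it
`∑_{n ≤ N} w n ≤ c k + N c (k+1) ^ (-s) ≤ N ^ (q/p) / (k+1)` (the liminf vanishes).
-/

open Filter Topology Finset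

theorem exists_seq_of_forall_exists_step {α : Type*} {P : ℕ → α → α → Prop}
    (h : ∀ k a, ∃ b, P k a b) (a₀ : α) :
    ∃ c : ℕ → α, c 0 = a₀ ∧ ∀ k, P k (c k) (c (k + 1)) := by
  choose f hf using h
  exact ⟨fun k => Nat.rec a₀ f k, rfl, fun k => hf k _⟩

theorem liminf_eq_zero_of_frequently_le {ι : Type*} {l : Filter ι} {f : ι → ℝ}
    (hf : ∀ i, 0 ≤ f i) (h : ∀ ε > 0, ∃ᶠ i in l, f i ≤ ε) : liminf f l = 0 := by
  refine le_antisymm (le_of_forall_pos_le_add fun ε hε => ?_) ?_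
  · rw [zero_add]
    exact liminf_le_of_frequently_le (h ε hε) (isBoundedUnder_of ⟨0, hf⟩)
  · exact le_liminf_of_le (IsCoboundedUnder.of_frequently_le (h 1 one_pos))
      (Eventually.of_forall hf)

theorem not_summable_of_forall_exists_sum_Ioc_ge {f : ℕ → ℝ} {δ : ℝ} (hδ : 0 < δ)
    (h : ∀ n₀, ∃ a b, n₀ ≤ a ∧ δ ≤ ∑ n ∈ Ioc a b, f n) : ¬ Summable f := by
  intro hf
  obtain ⟨s, hs⟩ := hf.vanishing (Iio_mem_nhds hδ)
  obtain ⟨a, b, ha, hab⟩ := h (s.sup id)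
  refine (hs (Ioc a b) (disjoint_left.2 fun n hn hns => ?_)).not_ge hab
  have : n ≤ s.sup id := le_sup (f := id) hns
  rw [mem_Ioc] at hn
  omega

theorem tendsto_sub_mul_rpow_neg_atTop {s : ℝ} (hs : s < 1) (a : ℝ) :
    Tendsto (fun x : ℝ => (x - a) * x ^ (-s)) atTop atTop := by
  refine tendsto_atTop_mono' atTop ?_
    ((tendsto_rpow_atTop (sub_pos.2 hs)).atTop_div_const two_pos)
  filter_upwards [eventually_ge_atTop (2 * a), eventually_gt_atTop 0] with x hxa hx
  rw [sub_eq_add_neg, Real.rpow_add hx, Real.rpow_one]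
  have := Real.rpow_pos_of_pos hx (-s)
  nlinarith

/-- `(b - a) b ^ (-s)` is the mass of a weight frozen at `b ^ (-s)` on `(a, b]`, and
`a + N b ^ (-s)` bounds its partial sum up to a checkpoint `N` in that range. -/
def IsGoodGap (s t ε : ℝ) (a b : ℕ) : Prop :=
  1 ≤ ((b : ℝ) - a) * (b : ℝ) ^ (-s) ∧
    ∃ N, a < N ∧ N ≤ b ∧ (a : ℝ) + N * (b : ℝ) ^ (-s) ≤ ε * (N : ℝ) ^ t

theorem IsGoodGap.lt {s t ε : ℝ} {a b : ℕ} (h : IsGoodGap s t ε a b) : a < b :=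
  let ⟨_, _, haN, hNb, _⟩ := h
  haN.trans_le hNb

theorem IsGoodGap.mono {s t ε ε' : ℝ} {a b : ℕ} (h : IsGoodGap s t ε a b)
    (hε : ε ≤ ε') : IsGoodGap s t ε' a b := by
  obtain ⟨hmass, N, haN, hNb, hN⟩ := h
  exact ⟨hmass, N, haN, hNb, hN.trans (by gcongr)⟩

theorem exists_isGoodGap {s t ε : ℝ} (hs : 0 < s) (hs1 : s < 1) (ht : 0 < t) (hε : 0 < ε)
    (a : ℕ) : ∃ b, IsGoodGap s t ε a b := by
  have hnat := tendsto_natCast_atTop_atTop (R := ℝ)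
  obtain ⟨N, haN, hNa⟩ := ((eventually_gt_atTop a).and
    ((((tendsto_rpow_atTop ht).comp hnat).const_mul_atTop hε).eventually_ge_atTop (2 * a))).exists
  have hNt : 0 < ε * (N : ℝ) ^ t :=
    mul_pos hε (Real.rpow_pos_of_pos (by exact_mod_cast a.zero_le.trans_lt haN) t)
  obtain ⟨b, hNb, hmass, hsmall⟩ := ((eventually_ge_atTop N).and
    ((((tendsto_sub_mul_rpow_neg_atTop hs1 a).comp hnat).eventually_ge_atTop 1).and
    ((((tendsto_rpow_neg_atTop hs).comp hnat).const_mul (N : ℝ)).eventually_lt_const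
      (by rw [mul_zero]; exact half_pos hNt)))).exists
  exact ⟨b, hmass, N, haN, hNb, by simp only [Function.comp_apply] at hNa hsmall; linarith⟩

theorem exists_strictMono_forall_isGoodGap {s t : ℝ} (hs : 0 < s) (hs1 : s < 1) (ht : 0 < t) :
    ∃ c : ℕ → ℕ, StrictMono c ∧ c 0 = 1 ∧
      ∀ k : ℕ, IsGoodGap s t (1 / (k + 1)) (c k) (c (k + 1)) := by
  obtain ⟨c, hc0, hc⟩ := exists_seq_of_forall_exists_step
    (P := fun k a b => IsGoodGap s t (1 / (k + 1)) a b)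
    (fun _ => exists_isGoodGap hs hs1 ht Nat.one_div_pos_of_nat) 1
  exact ⟨c, strictMono_nat_of_lt_succ fun k => (hc k).lt, hc0, hc⟩

/-- The least element of `S` that is `≥ n` (junk value `0` if there is none). -/
noncomputable def nextMem (S : Set ℕ) (n : ℕ) : ℕ := sInf (S ∩ Set.Ici n)

def IsGap (S : Set ℕ) (a b : ℕ) : Prop := b ∈ S ∧ ∀ m, a < m → m < b → m ∉ S

noncomputable def flatWeight (s : ℝ) (S : Set ℕ) (n : ℕ) : ℝ := (nextMem S n : ℝ) ^ (-s)

section FlatWeight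

variable {S : Set ℕ} {s : ℝ}

theorem nextMem_le {n m : ℕ} (hm : m ∈ S) (hnm : n ≤ m) : nextMem S n ≤ m :=
  Nat.sInf_le ⟨hm, hnm⟩

theorem flatWeight_nonneg (n : ℕ) : 0 ≤ flatWeight s S n :=
  Real.rpow_nonneg (Nat.cast_nonneg _) _

variable (hS : ∀ n, ∃ m ∈ S, n ≤ m)
include hS

theorem nextMem_mem_inter (n : ℕ) : nextMem S n ∈ S ∩ Set.Ici n :=
  Nat.sInf_mem (hS n)

theorem le_nextMem (n : ℕ) : n ≤ nextMem S n := (nextMem_mem_inter hS n).2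

theorem nextMem_mono : Monotone (nextMem S) := fun _ n' h =>
  nextMem_le (nextMem_mem_inter hS n').1 (h.trans (le_nextMem hS n'))

theorem nextMem_of_mem {n : ℕ} (hn : n ∈ S) : nextMem S n = n :=
  (nextMem_le hn le_rfl).antisymm (le_nextMem hS n)

theorem nextMem_eq_of_isGap {a b n : ℕ} (hg : IsGap S a b) (han : a < n) (hnb : n ≤ b) :
    nextMem S n = b := by
  refine (nextMem_le hg.1 hnb).antisymm (not_lt.1 fun hlt => ?_)
  exact hg.2 _ (han.trans_le (le_nextMem hS n)) hlt (nextMem_mem_inter hS n).1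

theorem flatWeight_of_mem {n : ℕ} (hn : n ∈ S) : flatWeight s S n = (n : ℝ) ^ (-s) := by
  rw [flatWeight, nextMem_of_mem hS hn]

theorem one_le_cast_nextMem {n : ℕ} (hn : 1 ≤ n) : (1 : ℝ) ≤ nextMem S n := by
  exact_mod_cast hn.trans (le_nextMem hS n)

theorem flatWeight_pos {n : ℕ} (hn : 1 ≤ n) : 0 < flatWeight s S n :=
  Real.rpow_pos_of_pos (one_pos.trans_le (one_le_cast_nextMem hS hn)) _

theorem flatWeight_le_one (hs : 0 ≤ s) {n : ℕ} (hn : 1 ≤ n) : flatWeight s S n ≤ 1 :=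
  Real.rpow_le_one_of_one_le_of_nonpos (one_le_cast_nextMem hS hn) (neg_nonpos.2 hs)

theorem flatWeight_antitoneOn (hs : 0 ≤ s) : AntitoneOn (flatWeight s S) (Set.Ici 1) :=
  fun n hn _ _ h => Real.rpow_le_rpow_of_nonpos (one_pos.trans_le (one_le_cast_nextMem hS hn))
    (by exact_mod_cast nextMem_mono hS h) (neg_nonpos.2 hs)

theorem tendsto_flatWeight (hs : 0 < s) : Tendsto (flatWeight s S) atTop (𝓝 0) :=
  (tendsto_rpow_neg_atTop hs).comp <| tendsto_natCast_atTop_atTop.comp <|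
    tendsto_atTop_mono (le_nextMem hS) tendsto_id

theorem sum_Ioc_flatWeight_of_isGap {a b N : ℕ} (hg : IsGap S a b) (hNb : N ≤ b) :
    ∑ n ∈ Ioc a N, flatWeight s S n = (N - a : ℕ) * (b : ℝ) ^ (-s) := by
  have hconst : ∀ n ∈ Ioc a N, flatWeight s S n = (b : ℝ) ^ (-s) := fun n hn => by
    rw [mem_Ioc] at hn
    rw [flatWeight, nextMem_eq_of_isGap hS hg hn.1 (hn.2.trans hNb)]
  rw [sum_congr rfl hconst, sum_const, Nat.card_Ioc, nsmul_eq_mul]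

theorem sum_Icc_flatWeight_le_of_isGap (hs : 0 ≤ s) {a b N : ℕ} (hg : IsGap S a b)
    (haN : a ≤ N) (hNb : N ≤ b) :
    ∑ n ∈ Icc 1 N, flatWeight s S n ≤ a + N * (b : ℝ) ^ (-s) := by
  have hhead : ∑ n ∈ Ioc 0 a, flatWeight s S n ≤ a := by
    simpa using sum_le_card_nsmul (Ioc 0 a) _ 1 fun n hn =>
      flatWeight_le_one hS hs (mem_Ioc.1 hn).1
  have htail : ∑ n ∈ Ioc a N, flatWeight s S n ≤ N * (b : ℝ) ^ (-s) := by
    rw [sum_Ioc_flatWeight_of_isGap hS hg hNb]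
    gcongr
    exact N.sub_le a
  rw [show Icc 1 N = Ioc 0 N from rfl, ← sum_Ioc_consecutive _ a.zero_le haN]
  exact add_le_add hhead htail

theorem not_summable_flatWeight {t : ℝ} {a b : ℕ → ℕ} {ε : ℕ → ℝ}
    (ha : Tendsto a atTop atTop) (hgap : ∀ j, IsGap S (a j) (b j))
    (hgood : ∀ j, IsGoodGap s t (ε j) (a j) (b j)) : ¬ Summable (flatWeight s S) := by
  refine not_summable_of_forall_exists_sum_Ioc_ge one_pos fun n₀ => ?_
  obtain ⟨j, hj⟩ := (ha.eventually_ge_atTop n₀).exists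
  refine ⟨a j, b j, hj, ?_⟩
  rw [sum_Ioc_flatWeight_of_isGap hS (hgap j) le_rfl, Nat.cast_sub (hgood j).lt.le]
  exact (hgood j).1

theorem liminf_sum_flatWeight_div_rpow_eq_zero (hs : 0 ≤ s) {t : ℝ} {a b : ℕ → ℕ}
    {ε : ℕ → ℝ} (ha : Tendsto a atTop atTop) (hε : Tendsto ε atTop (𝓝 0))
    (hgap : ∀ j, IsGap S (a j) (b j)) (hgood : ∀ j, IsGoodGap s t (ε j) (a j) (b j)) :
    liminf (fun N : ℕ => (∑ n ∈ Icc 1 N, flatWeight s S n) / (N : ℝ) ^ t) atTop = 0 := by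
  refine liminf_eq_zero_of_frequently_le
    (fun N => div_nonneg (sum_nonneg fun n _ => flatWeight_nonneg n) (by positivity))
    fun δ hδ => frequently_atTop.2 fun N₀ => ?_
  obtain ⟨j, hj, hεj⟩ :=
    ((ha.eventually_ge_atTop N₀).and (hε.eventually (ge_mem_nhds hδ))).exists
  obtain ⟨-, N, haN, hNb, hN⟩ := hgood j
  have hNpos : 0 < (N : ℝ) ^ t :=
    Real.rpow_pos_of_pos (by exact_mod_cast (a j).zero_le.trans_lt haN) t
  refine ⟨N, hj.trans haN.le, (div_le_iff₀ hNpos).2 ?_⟩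
  calc ∑ n ∈ Icc 1 N, flatWeight s S n ≤ a j + N * (b j : ℝ) ^ (-s) :=
        sum_Icc_flatWeight_le_of_isGap hS hs (hgap j) haN.le hNb
    _ ≤ ε j * (N : ℝ) ^ t := hN
    _ ≤ δ * (N : ℝ) ^ t := by gcongr

end FlatWeight

section EvenBlocks

def evenBlocks (M : ℕ → ℕ) : Set ℕ := {n | ∃ j, M (2 * j) ≤ n ∧ n ≤ M (2 * j + 1)}

variable {M : ℕ → ℕ}

/-- Repeating `M 0` shifts the odd blocks `[M (2j+1), M (2j+2)]` into even position. -/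
theorem mem_evenBlocks_or_mem_evenBlocks_pred (htop : Tendsto M atTop atTop) {n : ℕ}
    (hn : M 0 ≤ n) : n ∈ evenBlocks M ∨ n ∈ evenBlocks fun k => M (k - 1) := by
  have hex : ∃ k, n < M k := (htop.eventually_gt_atTop n).exists
  obtain ⟨k, hk⟩ : ∃ k, Nat.find hex = k + 1 :=
    Nat.exists_eq_succ_of_ne_zero fun h => by have := Nat.find_spec hex; rw [h] at this; omega
  have hlo : M k ≤ n := not_lt.1 (Nat.find_min hex (by omega))
  have hhi : n < M (k + 1) := hk ▸ Nat.find_spec hex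
  rcases Nat.even_or_odd' k with ⟨j, rfl | rfl⟩
  · exact Or.inl ⟨j, hlo, hhi.le⟩
  · exact Or.inr ⟨j + 1, hlo, hhi.le⟩

variable (hM : Monotone M)
include hM

theorem apply_two_mul_mem_evenBlocks (j : ℕ) : M (2 * j) ∈ evenBlocks M :=
  ⟨j, le_rfl, hM (by omega)⟩

theorem isGap_evenBlocks (j : ℕ) : IsGap (evenBlocks M) (M (2 * j + 1)) (M (2 * j + 2)) := by
  refine ⟨apply_two_mul_mem_evenBlocks hM (j + 1), fun m h1 h2 ⟨i, hi1, hi2⟩ => ?_⟩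
  rcases le_or_gt i j with hij | hij
  · have := hM (show 2 * i + 1 ≤ 2 * j + 1 by omega); omega
  · have := hM (show 2 * j + 2 ≤ 2 * i by omega); omega

theorem exists_mem_evenBlocks_ge (htop : Tendsto M atTop atTop) (n : ℕ) :
    ∃ m ∈ evenBlocks M, n ≤ m := by
  obtain ⟨K, hK⟩ := eventually_atTop.1 (htop.eventually_ge_atTop n)
  exact ⟨_, apply_two_mul_mem_evenBlocks hM K, hK _ (by omega)⟩

theorem flatWeight_evenBlocks {s t : ℝ} (hs : 0 < s) (hM0 : M 0 = 1)
    (htop : Tendsto M atTop atTop)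
    (hgood : ∀ j : ℕ, IsGoodGap s t (1 / (j + 1)) (M (2 * j + 1)) (M (2 * j + 2))) :
    (∀ n ∈ evenBlocks M, flatWeight s (evenBlocks M) n = (n : ℝ) ^ (-s)) ∧
      flatWeight s (evenBlocks M) 1 = 1 ∧
      (∀ n, 1 ≤ n → 0 < flatWeight s (evenBlocks M) n) ∧
      AntitoneOn (flatWeight s (evenBlocks M)) (Set.Ici 1) ∧
      Tendsto (flatWeight s (evenBlocks M)) atTop (𝓝 0) ∧
      ¬ Summable (flatWeight s (evenBlocks M)) ∧
      liminf (fun N : ℕ => (∑ n ∈ Icc 1 N, flatWeight s (evenBlocks M) n) / (N : ℝ) ^ t)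
        atTop = 0 := by
  have hS := exists_mem_evenBlocks_ge hM htop
  have ha : Tendsto (fun j => M (2 * j + 1)) atTop atTop :=
    htop.comp (tendsto_atTop_mono (fun j => show j ≤ 2 * j + 1 by omega) tendsto_id)
  refine ⟨fun n => flatWeight_of_mem hS, ?_, fun n => flatWeight_pos hS,
    flatWeight_antitoneOn hS hs.le, tendsto_flatWeight hS hs,
    not_summable_flatWeight hS ha (isGap_evenBlocks hM) hgood,
    liminf_sum_flatWeight_div_rpow_eq_zero hS hs.le ha tendsto_one_div_add_atTop_nhds_zero_nat
      (isGap_evenBlocks hM) hgood⟩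
  rw [flatWeight_of_mem hS (hM0 ▸ apply_two_mul_mem_evenBlocks hM 0), Nat.cast_one,
    Real.one_rpow]

end EvenBlocks

/-- Fix `1 ≤ q < p < ∞` and set `s = 1/q - 1/p`.  There exist two
nonincreasing positive sequences `w`, `w̃` (indexed by `n ≥ 1`) with `w 1 = w̃ 1 = 1`,
both tending to `0` and both with divergent series, such that (1) for every `n ≥ 1`,
either `w n = n^{-s}` or `w̃ n = n^{-s}`; and (2)
`liminf_N (∑_{n=1}^N w n)/N^{q/p} = 0` and likewise for `w̃`. -/
theorem stmt2 (p q : ℝ) (hq : 1 ≤ q) (hqp : q < p) :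
    ∃ w w' : ℕ → ℝ,
      w 1 = 1 ∧ w' 1 = 1 ∧
      (∀ n : ℕ, 1 ≤ n → 0 < w n) ∧ (∀ n : ℕ, 1 ≤ n → 0 < w' n) ∧
      AntitoneOn w (Set.Ici 1) ∧ AntitoneOn w' (Set.Ici 1) ∧
      Tendsto w atTop (𝓝 0) ∧ Tendsto w' atTop (𝓝 0) ∧
      ¬ Summable w ∧ ¬ Summable w' ∧
      (∀ n : ℕ, 1 ≤ n →
        w n = (n : ℝ) ^ (-(1 / q - 1 / p)) ∨ w' n = (n : ℝ) ^ (-(1 / q - 1 / p))) ∧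
      Filter.liminf (fun N : ℕ => (∑ n ∈ Finset.Icc 1 N, w n) / (N : ℝ) ^ (q / p)) atTop = 0 ∧
      Filter.liminf (fun N : ℕ => (∑ n ∈ Finset.Icc 1 N, w' n) / (N : ℝ) ^ (q / p)) atTop = 0 := by
  have hq0 : 0 < q := one_pos.trans_le hq
  have hs : 0 < 1 / q - 1 / p := sub_pos.2 (one_div_lt_one_div_of_lt hq0 hqp)
  have hs1 : 1 / q - 1 / p < 1 := by
    have := one_div_le_one_div_of_le one_pos hq
    have := one_div_pos.2 (hq0.trans hqp)
    linarith
  obtain ⟨c, hcm, hc0, hc⟩ :=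
    exists_strictMono_forall_isGoodGap hs hs1 (div_pos hq0 (hq0.trans hqp))
  have hmono {i j : ℕ} (h : j ≤ i) : (1 : ℝ) / (i + 1) ≤ 1 / (j + 1) := by gcongr
  obtain ⟨hpow, h1, hpos, hanti, hlim, hsum, hliminf⟩ :=
    flatWeight_evenBlocks hcm.monotone hs hc0 hcm.tendsto_atTop
      fun j => (hc (2 * j + 1)).mono (hmono (by omega))
  obtain ⟨hpow', h1', hpos', hanti', hlim', hsum', hliminf'⟩ :=
    flatWeight_evenBlocks (M := fun k => c (k - 1))
      (fun _ _ h => hcm.monotone (Nat.sub_le_sub_right h 1)) hs hc0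
      (hcm.tendsto_atTop.comp (tendsto_sub_atTop_nat 1))
      fun j => (hc (2 * j)).mono (hmono (by omega))
  refine ⟨_, _, h1, h1', hpos, hpos', hanti, hanti', hlim, hlim', hsum, hsum', fun n hn => ?_,
    hliminf, hliminf'⟩
  exact (mem_evenBlocks_or_mem_evenBlocks_pred hcm.tendsto_atTop (hc0 ▸ hn)).imp
    (hpow n) (hpow' n)
end

section
/- Let 1 ≤ ξ ≤ ω₁ and let A ∈ S_ξ be an element of the ξ-th Schreier family. Then the set {2n : n ∈ A} ∪ {2n+2 : n ∈ A} also belongs to S_ξ. -/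
/-!
Induction on `ξ`. The sets in `S₁` are those with `#A ≤ min A`, and doubling at most doubles both
the cardinality and the minimum. At a successor stage one doubles every block of a decomposition
`A = F₁ ∪ ⋯ ∪ Fₙ`; consecutive doubled blocks can share the point `2 max Fᵢ + 2 = 2 min Fᵢ₊₁`, and
since the families are hereditary this point may be dropped from the earlier block. At a limit
stage `A ∈ S_{ζₙ}` is handled by the induction hypothesis unless `ζₙ = 0`; then `#A ≤ 1`, and the
doubled set has at most two points, all `≥ 2`, hence lies in `S_{ζₙ₊₁}`.
-/

open Ordinal Filter Topology

/-- A system of Schreier families `S ξ` for ordinals `ξ ≤ ω₁`, satisfying the usual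
inductive definition (with some fixed choice of cofinal sequences at limit ordinals),
and with `S ξ` equal to the family of all finite subsets of `ℕ` for `ξ = ω₁`. -/
structure SchreierSystem where
  S : Ordinal → Set (Finset ℕ)
  zero : S 0 = {F : Finset ℕ | F.card ≤ 1}
  succ : ∀ ζ : Ordinal, ζ < ω₁ → S (ζ + 1) =
    {F : Finset ℕ | F = ∅ ∨ ∃ (n : ℕ) (f : Fin n → Finset ℕ),
      (∀ i, f i ∈ S ζ) ∧
      (∀ i j : Fin n, i < j → ∀ a ∈ f i, ∀ b ∈ f j, a < b) ∧
      (∀ a ∈ F, n ≤ a) ∧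
      F = Finset.univ.biUnion f}
  limit : ∀ ξ : Ordinal, Order.IsSuccLimit ξ → ξ < ω₁ →
    ∃ ζs : ℕ → Ordinal, StrictMono ζs ∧ (∀ n, ¬ Order.IsSuccLimit (ζs n)) ∧ (⨆ n, ζs n) = ξ ∧
      S ξ = {F : Finset ℕ | ∃ n : ℕ, F ∈ S (ζs n) ∧ ∀ a ∈ F, n + 1 ≤ a}
  top : ∀ ξ : Ordinal, ω₁ ≤ ξ → S ξ = Set.univ

namespace Finset

def double (A : Finset ℕ) : Finset ℕ :=
  A.image (2 * ·) ∪ A.image (2 * · + 2)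

theorem mem_double {A : Finset ℕ} {b : ℕ} :
    b ∈ A.double ↔ ∃ x ∈ A, b = 2 * x ∨ b = 2 * x + 2 := by
  simp only [double, mem_union, mem_image]
  grind

theorem card_double_le (A : Finset ℕ) : A.double.card ≤ 2 * A.card :=
  (card_union_le _ _).trans (by grind [card_image_le])

theorem double_biUnion {ι : Type*} (s : Finset ι) (f : ι → Finset ℕ) :
    (s.biUnion f).double = s.biUnion fun i => (f i).double := by
  ext b
  simp only [mem_double, mem_biUnion]
  grind

theorem two_mul_le_of_mem_double {A : Finset ℕ} {m : ℕ} (hm : ∀ a ∈ A, m ≤ a) :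
    ∀ b ∈ A.double, 2 * m ≤ b := by
  intro b hb
  obtain ⟨x, hx, hbx⟩ := mem_double.1 hb
  have := hm x hx
  omega

theorem card_double_le_of_card_le {A : Finset ℕ} (hA : ∀ a ∈ A, A.card ≤ a) :
    ∀ b ∈ A.double, A.double.card ≤ b := fun b hb =>
  (card_double_le A).trans (two_mul_le_of_mem_double hA b hb)

end Finset

namespace SchreierSystem

variable (𝒮 : SchreierSystem)

theorem induction {motive : Ordinal → Prop} (ξ : Ordinal)
    (top : ∀ ξ, ω₁ ≤ ξ → motive ξ) (zero : motive 0)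
    (succ : ∀ ζ < ω₁, motive ζ → motive (ζ + 1))
    (limit : ∀ ξ (ζs : ℕ → Ordinal), StrictMono ζs →
      𝒮.S ξ = {F | ∃ n : ℕ, F ∈ 𝒮.S (ζs n) ∧ ∀ a ∈ F, n + 1 ≤ a} →
      (∀ n, motive (ζs n)) → motive ξ) :
    motive ξ := by
  induction ξ using Ordinal.limitRecOn with
  | zero => exact zero
  | add_one ζ ih =>
    rcases le_or_gt ω₁ (ζ + 1) with h | h
    · exact top _ h
    · exact succ ζ ((Order.lt_add_one_iff.2 le_rfl).trans h) ih
  | limit ξ hlim ih =>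
    rcases le_or_gt ω₁ ξ with h | h
    · exact top _ h
    obtain ⟨ζs, hmono, -, hsup, hS⟩ := 𝒮.limit ξ hlim h
    have hlt (n : ℕ) : ζs n < ξ :=
      (hmono n.lt_succ_self).trans_le (hsup ▸ le_ciSup Ordinal.bddAbove_of_small _)
    exact limit ξ ζs hmono hS fun n => ih _ (hlt n)

theorem mem_of_card_le_one {F : Finset ℕ} (hcard : F.card ≤ 1) (hpos : ∀ a ∈ F, 1 ≤ a)
    (ξ : Ordinal) : F ∈ 𝒮.S ξ := by
  induction ξ using 𝒮.induction with
  | top ξ h => simp [𝒮.top ξ h]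
  | zero => simpa [𝒮.zero] using hcard
  | succ ζ hζ ih =>
    rw [𝒮.succ ζ hζ]
    rcases F.eq_empty_or_nonempty with rfl | hne
    · exact Or.inl rfl
    refine Or.inr ⟨1, fun _ => F, fun _ => ih, fun i j hij => absurd hij (by omega), hpos, ?_⟩
    simp
  | limit ξ ζs _ hS ih => rw [hS]; exact ⟨0, ih 0, by simpa using hpos⟩

theorem isLowerSet (ξ : Ordinal) : IsLowerSet (𝒮.S ξ) := by
  induction ξ using 𝒮.induction with
  | top ξ h => simp [𝒮.top ξ h, isLowerSet_univ]
  | zero =>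
    rw [𝒮.zero]
    exact fun F G hGF hF => (Finset.card_le_card hGF).trans hF
  | succ ζ hζ ih =>
    rw [𝒮.succ ζ hζ]
    rintro F G hGF (rfl | ⟨n, f, hf, hord, hmin, rfl⟩)
    · exact Or.inl (Finset.subset_empty.1 hGF)
    refine Or.inr ⟨n, fun i => f i ∩ G, fun i => ih Finset.inter_subset_left (hf i),
      fun i j hij a ha b hb => hord i j hij a (Finset.mem_inter.1 ha).1 b (Finset.mem_inter.1 hb).1,
      fun a ha => hmin a (hGF ha), ?_⟩
    rw [← Finset.biUnion_inter, Finset.inter_eq_right.2 hGF]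
  | limit ξ ζs _ hS ih =>
    rw [hS]
    rintro F G hGF ⟨n, hF, hmin⟩
    exact ⟨n, ih n hGF hF, fun a ha => hmin a (hGF ha)⟩

/-- Overlapping blocks are made disjoint by keeping each point only in the last block
containing it. -/
theorem biUnion_mem_succ {ζ : Ordinal} (hζ : ζ < ω₁) {n : ℕ} (f : Fin n → Finset ℕ)
    (hf : ∀ i, f i ∈ 𝒮.S ζ) (hord : ∀ i j, i < j → ∀ a ∈ f i, ∀ b ∈ f j, a ≤ b)
    (hmin : ∀ a ∈ Finset.univ.biUnion f, n ≤ a) :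
    Finset.univ.biUnion f ∈ 𝒮.S (ζ + 1) := by
  rw [𝒮.succ ζ hζ]
  refine Or.inr ⟨n, fun i => f i \ (Finset.Ioi i).biUnion f,
    fun i => 𝒮.isLowerSet ζ Finset.sdiff_subset (hf i), ?_, hmin, ?_⟩
  · intro i j hij a ha b hb
    rw [Finset.mem_sdiff] at ha hb
    refine (hord i j hij a ha.1 b hb.1).lt_of_ne ?_
    rintro rfl
    exact ha.2 (Finset.mem_biUnion.2 ⟨j, Finset.mem_Ioi.2 hij, hb.1⟩)
  · ext b
    simp only [Finset.mem_biUnion, Finset.mem_univ, true_and, Finset.mem_sdiff, Finset.mem_Ioi,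
      not_exists, not_and]
    constructor
    · rintro ⟨i, hi⟩
      obtain ⟨j, hj, hjmax⟩ := Finset.exists_max_image (Finset.univ.filter (b ∈ f ·)) id
        ⟨i, by simpa using hi⟩
      simp only [Finset.mem_filter, Finset.mem_univ, true_and, id] at hj hjmax
      exact ⟨j, hj, fun k hjk hk => (hjmax k hk).not_gt hjk⟩
    · rintro ⟨i, hi, -⟩
      exact ⟨i, hi⟩

theorem card_le_of_mem_one {F : Finset ℕ} (hF : F ∈ 𝒮.S 1) : ∀ a ∈ F, F.card ≤ a := by
  rw [← zero_add 1, 𝒮.succ 0 (omega_pos 1)] at hF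
  obtain rfl | ⟨n, f, hf, -, hmin, rfl⟩ := hF
  · simp
  intro a ha
  refine (Finset.card_biUnion_le_card_mul _ _ 1 fun i _ => ?_).trans ?_
  · simpa [𝒮.zero] using hf i
  · simpa using hmin a ha

theorem mem_of_card_le {F : Finset ℕ} (hF : ∀ a ∈ F, F.card ≤ a) {ξ : Ordinal} (hξ : 1 ≤ ξ) :
    F ∈ 𝒮.S ξ := by
  induction ξ using 𝒮.induction generalizing F with
  | top ξ h => simp [𝒮.top ξ h]
  | zero => exact absurd hξ (by simp)
  | succ ζ hζ _ =>
    rw [𝒮.succ ζ hζ]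
    refine Or.inr ⟨F.card, fun i => {(F.orderEmbOfFin rfl i : ℕ)}, fun i => ?_, ?_, hF, ?_⟩
    · refine 𝒮.mem_of_card_le_one (by simp) ?_ ζ
      simp only [Finset.mem_singleton, forall_eq]
      exact i.pos.trans_le (hF _ (F.orderEmbOfFin_mem rfl i))
    · intro i j hij a ha b hb
      rw [Finset.mem_singleton] at ha hb
      exact ha ▸ hb ▸ (F.orderEmbOfFin rfl).strictMono hij
    · rw [Finset.biUnion_singleton, Finset.image_orderEmbOfFin_univ]
  | limit ξ ζs hmono hS ih =>
    rw [hS]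
    rcases le_or_gt F.card 1 with h | h
    · refine ⟨0, 𝒮.mem_of_card_le_one h (fun a ha => ?_) _, fun a ha => ?_⟩ <;>
        have := hF a ha <;> have := Finset.card_pos.2 ⟨a, ha⟩ <;> omega
    · refine ⟨1, ih 1 hF (Order.one_le_iff_pos.2 (pos_of_gt (hmono zero_lt_one))),
        fun a ha => ?_⟩
      have := hF a ha
      omega

theorem double_mem {ξ : Ordinal} (hξ : 1 ≤ ξ) {A : Finset ℕ}
    (hA : A ∈ 𝒮.S ξ) : A.double ∈ 𝒮.S ξ := by
  induction ξ using 𝒮.induction generalizing A with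
  | top ξ h => simp [𝒮.top ξ h]
  | zero => exact absurd hξ (by simp)
  | succ ζ hζ ih =>
    rcases eq_zero_or_pos ζ with rfl | hζpos
    · rw [zero_add] at hA ⊢
      exact 𝒮.mem_of_card_le (Finset.card_double_le_of_card_le (𝒮.card_le_of_mem_one hA)) le_rfl
    have hA' := hA
    rw [𝒮.succ ζ hζ] at hA'
    obtain rfl | ⟨n, f, hf, hord, hmin, rfl⟩ := hA'
    · simpa [Finset.double] using hA
    rw [Finset.double_biUnion]
    refine 𝒮.biUnion_mem_succ hζ _ (fun i => ih (Order.one_le_iff_pos.2 hζpos) (hf i)) ?_ ?_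
    · intro i j hij a ha b hb
      obtain ⟨x, hx, hax⟩ := Finset.mem_double.1 ha
      obtain ⟨y, hy, hby⟩ := Finset.mem_double.1 hb
      have := hord i j hij x hx y hy
      omega
    · rw [← Finset.double_biUnion]
      intro b hb
      have := Finset.two_mul_le_of_mem_double hmin b hb
      omega
  | limit ξ ζs hmono hS ih =>
    rw [hS] at hA ⊢
    obtain ⟨n, hAn, hmin⟩ := hA
    have hdouble := Finset.two_mul_le_of_mem_double hmin
    rcases eq_zero_or_pos (ζs n) with h0 | hpos
    · have hcard : A.card ≤ 1 := by simpa [h0, 𝒮.zero] using hAn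
      refine ⟨n + 1, 𝒮.mem_of_card_le (Finset.card_double_le_of_card_le fun a ha => ?_)
        (Order.one_le_iff_pos.2 (h0 ▸ hmono n.lt_succ_self)), fun b hb => ?_⟩
      · have := hmin a ha
        omega
      · have := hdouble b hb
        omega
    · refine ⟨n, ih n (Order.one_le_iff_pos.2 hpos) hAn, fun b hb => ?_⟩
      have := hdouble b hb
      omega

end SchreierSystem

theorem stmt3_general (𝒮 : SchreierSystem) (ξ : Ordinal) (hξ1 : 1 ≤ ξ)
    (A : Finset ℕ) (hA : A ∈ 𝒮.S ξ) :
    (A.image fun n => 2 * n) ∪ (A.image fun n => 2 * n + 2) ∈ 𝒮.S ξ :=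
  𝒮.double_mem hξ1 hA

/-- Let `1 ≤ ξ ≤ ω₁` and `A ∈ S_ξ`.  Then
`{2n : n ∈ A} ∪ {2n+2 : n ∈ A} ∈ S_ξ`. -/
theorem stmt3 (𝒮 : SchreierSystem) (ξ : Ordinal) (hξ1 : 1 ≤ ξ) (hξ : ξ ≤ ω₁)
    (A : Finset ℕ) (hA : A ∈ 𝒮.S ξ) :
    (A.image fun n => 2 * n) ∪ (A.image fun n => 2 * n + 2) ∈ 𝒮.S ξ :=
  stmt3_general 𝒮 ξ hξ1 A hA
end

section
/- Let X and Y be Banach spaces and T ∈ L(X,Y). If (x_n) is a bounded sequence in X, then there exists a subsequence (x_{n_k}) so that exactly one of the following holds: (a) (T x_{n_k}) is norm-convergent; (b) the difference sequences (x_{n_{4k+2}} − x_{n_{4k}}) and (T x_{n_{4k+2}} − T x_{n_{4k}}) are both seminormalized basic sequences, and each of them is either weakly null or equivalent to the canonical basis of ℓ₁. -/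
open Filter Topology

/-- `x` is a basic sequence: nonzero terms whose partial-sum projections are uniformly
bounded (the standard Grunblum criterion for being a Schauder basis of the closed span). -/
def IsBasicSeq {X : Type*} [NormedAddCommGroup X] [NormedSpace ℝ X] (x : ℕ → X) : Prop :=
  (∀ n, x n ≠ 0) ∧ ∃ K : ℝ, 1 ≤ K ∧ ∀ (a : ℕ → ℝ) (m n : ℕ), m ≤ n →
    ‖∑ i ∈ Finset.range m, a i • x i‖ ≤ K * ‖∑ i ∈ Finset.range n, a i • x i‖

/-- `x` dominates `y`: `‖∑ a n • y n‖ ≤ C ‖∑ a n • x n‖` for all finitely supported scalars. -/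
def Dominates {X Y : Type*} [NormedAddCommGroup X] [NormedSpace ℝ X]
    [NormedAddCommGroup Y] [NormedSpace ℝ Y] (x : ℕ → X) (y : ℕ → Y) : Prop :=
  ∃ C : ℝ, 0 < C ∧ ∀ (a : ℕ → ℝ) (F : Finset ℕ),
    ‖∑ n ∈ F, a n • y n‖ ≤ C * ‖∑ n ∈ F, a n • x n‖

/-- `e` has the norm of the canonical basis of `ℓ_p`. -/
def IsLpBasis (p : ℝ) {E : Type*} [NormedAddCommGroup E] [NormedSpace ℝ E]
    (e : ℕ → E) : Prop :=
  ∀ (a : ℕ → ℝ) (F : Finset ℕ),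
    ‖∑ n ∈ F, a n • e n‖ = (∑ n ∈ F, |a n| ^ p) ^ (1 / p)

/-- `e` has the norm of the canonical basis of `c₀`. -/
def IsC0Basis {E : Type*} [NormedAddCommGroup E] [NormedSpace ℝ E] (e : ℕ → E) : Prop :=
  ∀ (a : ℕ → ℝ) (F : Finset ℕ),
    ‖∑ n ∈ F, a n • e n‖ = ((F.sup fun n => ‖a n‖₊ : NNReal) : ℝ)

/-- A sequence is seminormalized if its norms are bounded above and away from zero. -/
def Seminormalized {X : Type*} [NormedAddCommGroup X] (x : ℕ → X) : Prop :=
  ∃ c C : ℝ, 0 < c ∧ ∀ n, c ≤ ‖x n‖ ∧ ‖x n‖ ≤ C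

/-- A sequence is weakly null if `f (x n) → 0` for every continuous functional `f`. -/
def WeaklyNull {X : Type*} [NormedAddCommGroup X] [NormedSpace ℝ X] (x : ℕ → X) : Prop :=
  ∀ f : X →L[ℝ] ℝ, Tendsto (fun n => f (x n)) atTop (𝓝 0)

/-- A sequence is equivalent to the canonical basis of `ℓ₁`. -/
def EquivL1Basis {X : Type*} [NormedAddCommGroup X] [NormedSpace ℝ X] (x : ℕ → X) : Prop :=
  ∃ c C : ℝ, 0 < c ∧ ∀ (a : ℕ → ℝ) (F : Finset ℕ),
    c * ∑ n ∈ F, |a n| ≤ ‖∑ n ∈ F, a n • x n‖ ∧ ‖∑ n ∈ F, a n • x n‖ ≤ C * ∑ n ∈ F, |a n|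

/-!
If the range of `T x` is totally bounded, a subsequence of `T xₙ` converges. Otherwise a subsequence
of `T xₙ` is uniformly separated, and Rosenthal's ℓ₁ theorem, applied to `T x` and then to `x`,
makes each of the two sequences weakly Cauchy or equivalent to the ℓ₁ basis. Their differences
`x (φ (4k+2)) - x (φ (4k))` are then weakly null or again ℓ₁, and seminormalized by the separation.
A weakly null seminormalized sequence eventually almost misses the norming functionals of any
finite-dimensional subspace (Mazur), which yields a common subsequence on which both difference
sequences are basic; ℓ₁ sequences are basic anyway.

Rosenthal's theorem comes from the Nash-Williams partition theorem, proved by Galvin–Prikry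
combinatorial forcing: the pairs `{g | g (xₙ) < r}`, `{g | s < g (xₙ)}` of sets of unit-ball
functionals have either a Boolean independent subsequence, which gives an ℓ₁ lower estimate with
constant `(s - r) / 2`, or a subsequence along which no `g` oscillates between them; diagonalising
over rational `r < s` makes every `g (xₙ)` converge.
-/

open Finset

theorem extraction_of_frequently_prefix {P : ℕ → Finset ℕ → ℕ → Prop}
    (h : ∀ m s, ∃ᶠ n in atTop, P m s n) :
    ∃ θ : ℕ → ℕ, StrictMono θ ∧ ∀ m, P m ((range m).image θ) (θ m) := by
  choose next hnext_gt hnext using fun m s => (h m s).forall_exists_of_atTop (s.sup id + 1)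
  let S : ℕ → Finset ℕ := fun m => Nat.rec ∅ (fun m s => insert (next m s) s) m
  have hS : ∀ m, (range m).image (fun k => next k (S k)) = S m := by
    intro m
    induction m with
    | zero => rfl
    | succ m ih => rw [range_add_one, image_insert, ih]
  refine ⟨fun m => next m (S m), strictMono_nat_of_lt_succ fun m => ?_, fun m => ?_⟩
  · exact (le_sup (f := id) (mem_insert_self _ (S m))).trans_lt (hnext_gt (m + 1) _)
  · rw [hS]; exact hnext m (S m)

theorem exists_diagonal_subseq (Q : ℕ → (ℕ → ℕ) → Prop)
    (h : ∀ j (ψ : ℕ → ℕ), StrictMono ψ → ∃ θ, StrictMono θ ∧ Q j (ψ ∘ θ)) :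
    ∃ δ : ℕ → ℕ, StrictMono δ ∧ ∀ j, ∃ ψ, Q j ψ ∧ Tendsto δ atTop (map ψ atTop) := by
  choose θ hθ hQ using h
  let c : ℕ → {ψ : ℕ → ℕ // StrictMono ψ} := fun j =>
    Nat.rec ⟨id, strictMono_id⟩ (fun j ψ => ⟨ψ.1 ∘ θ j ψ.1 ψ.2, ψ.2.comp (hθ _ _ _)⟩) j
  have hfac : ∀ j k, j ≤ k → ∃ ρ, StrictMono ρ ∧ (c k).1 = (c j).1 ∘ ρ := by
    intro j k hjk
    induction k, hjk using Nat.le_induction with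
    | base => exact ⟨id, strictMono_id, rfl⟩
    | succ k _ ih =>
      obtain ⟨ρ, hρ, e⟩ := ih
      exact ⟨ρ ∘ θ k (c k).1 (c k).2, hρ.comp (hθ _ _ _), by
        rw [← Function.comp_assoc, ← e]⟩
  refine ⟨fun k => (c k).1 k, strictMono_nat_of_lt_succ fun k => ?_,
    fun j => ⟨(c (j + 1)).1, hQ _ _ _, fun S hS => ?_⟩⟩
  · calc (c k).1 k < (c k).1 (k + 1) := (c k).2 (Nat.lt_succ_self k)
      _ ≤ (c k).1 (θ k (c k).1 (c k).2 (k + 1)) := (c k).2.monotone (hθ _ _ _).le_apply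
  · obtain ⟨N, hN⟩ := mem_atTop_sets.1 (mem_map.1 hS)
    refine mem_map.2 (mem_atTop_sets.2 ⟨max (j + 1) N, fun k hk => ?_⟩)
    obtain ⟨ρ, hρ, e⟩ := hfac (j + 1) k (le_of_max_le_left hk)
    show (c k).1 k ∈ S
    rw [e]
    exact hN _ ((le_of_max_le_right hk).trans hρ.le_apply)

namespace NashWilliams

def IsInitSeg (E : Finset ℕ) (L : Set ℕ) : Prop :=
  ↑E ⊆ L ∧ ∀ x ∈ L, x ∉ E → ∀ y ∈ E, y < x

variable (𝓕 : Finset ℕ → Prop)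

def Accepts (F : Finset ℕ) (M : Set ℕ) : Prop :=
  ∀ L ⊆ M, L.Infinite → ∃ E, IsInitSeg E L ∧ 𝓕 (F ∪ E)

def Rejects (F : Finset ℕ) (M : Set ℕ) : Prop :=
  ∀ L ⊆ M, L.Infinite → ¬ Accepts 𝓕 F L

variable {𝓕}

theorem IsInitSeg.insert_of_isLeast {E : Finset ℕ} {L : Set ℕ} {a : ℕ} (ha : IsLeast L a)
    (hE : IsInitSeg E (L \ {a})) : IsInitSeg (insert a E) L := by
  refine ⟨?_, fun x hx hxE y hy => ?_⟩
  · rw [coe_insert]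
    exact Set.insert_subset ha.1 (hE.1.trans Set.sdiff_subset)
  · rw [mem_insert, not_or] at hxE
    rcases mem_insert.1 hy with rfl | hy
    · exact (ha.2 hx).lt_of_ne (Ne.symm hxE.1)
    · exact hE.2 x ⟨hx, hxE.1⟩ hxE.2 y hy

theorem IsInitSeg.card_filter_lt {E : Finset ℕ} {f : ℕ → ℕ} (hf : StrictMono f)
    (hE : IsInitSeg E (Set.range f)) {j : ℕ} (hj : f j ∈ E) : #{i ∈ E | i < f j} = j := by
  have : {i ∈ E | i < f j} = (range j).image f := by
    ext i
    simp only [mem_filter, mem_image, mem_range]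
    constructor
    · rintro ⟨hi, hlt⟩
      obtain ⟨k, rfl⟩ := hE.1 hi
      exact ⟨k, hf.lt_iff_lt.1 hlt, rfl⟩
    · rintro ⟨k, hk, rfl⟩
      refine ⟨by_contra fun h => ?_, hf hk⟩
      exact (hE.2 (f k) ⟨k, rfl⟩ h (f j) hj).not_gt (hf hk)
  rw [this, card_image_of_injective _ hf.injective, card_range]

theorem Accepts.mono {F : Finset ℕ} {M L : Set ℕ} (h : Accepts 𝓕 F M) (hL : L ⊆ M) :
    Accepts 𝓕 F L :=
  fun L' hL' => h L' (hL'.trans hL)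

theorem Rejects.mono {F : Finset ℕ} {M L : Set ℕ} (h : Rejects 𝓕 F M) (hL : L ⊆ M) :
    Rejects 𝓕 F L :=
  fun L' hL' => h L' (hL'.trans hL)

theorem accepts_of_mem {F : Finset ℕ} (h : 𝓕 F) (M : Set ℕ) : Accepts 𝓕 F M :=
  fun _ _ _ => ⟨∅, by simp [IsInitSeg], by simpa⟩

theorem exists_accepts_or_rejects (F : Finset ℕ) {M : Set ℕ} (hM : M.Infinite) :
    ∃ L ⊆ M, L.Infinite ∧ (Accepts 𝓕 F L ∨ Rejects 𝓕 F L) := by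
  by_cases h : Rejects 𝓕 F M
  · exact ⟨M, subset_rfl, hM, Or.inr h⟩
  · simp only [Rejects, not_forall, not_not] at h
    obtain ⟨L, hLM, hL, hacc⟩ := h
    exact ⟨L, hLM, hL, Or.inl hacc⟩

theorem exists_fusion_seq {Inv : Finset ℕ → Set ℕ → Prop} {M : Set ℕ} (hM : M.Infinite)
    (h₀ : Inv ∅ M)
    (step : ∀ s A, A.Infinite → Inv s A →
      ∃ n ∈ A, ∃ B ⊆ A, B.Infinite ∧ (∀ m ∈ B, n < m) ∧ Inv (insert n s) B) :
    ∃ e : ℕ → ℕ, StrictMono e ∧ (∀ k, e k ∈ M) ∧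
      ∀ k, ∃ B : Set ℕ, B.Infinite ∧ Inv ((range k).image e) B ∧ ∀ j ≥ k, e j ∈ B := by
  let S := {p : Finset ℕ × Set ℕ // p.2 ⊆ M ∧ p.2.Infinite ∧ Inv p.1 p.2}
  choose n hn B hBA hB hlt hInv using fun p : S => step p.1.1 p.1.2 p.2.2.1 p.2.2.2
  let c : ℕ → S := fun k => Nat.rec ⟨(∅, M), subset_rfl, hM, h₀⟩
    (fun _ p => ⟨(insert (n p) p.1.1, B p), (hBA p).trans p.2.1, hB p, hInv p⟩) k
  have hc : ∀ k, (range k).image (fun k => n (c k)) = (c k).1.1 := by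
    intro k
    induction k with
    | zero => rfl
    | succ k ih => rw [range_add_one, image_insert, ih]
  have hanti : ∀ k j, k ≤ j → (c j).1.2 ⊆ (c k).1.2 := by
    intro k j hkj
    induction j, hkj using Nat.le_induction with
    | base => exact subset_rfl
    | succ j _ ih => exact (hBA (c j)).trans ih
  refine ⟨fun k => n (c k), strictMono_nat_of_lt_succ fun k => hlt (c k) _ (hn (c (k + 1))),
    fun k => (c k).2.1 (hn (c k)), fun k => ⟨(c k).1.2, (c k).2.2.1, ?_,
      fun j hj => hanti k j hj (hn (c j))⟩⟩
  rw [hc]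
  exact (c k).2.2.2

theorem Rejects.exists_forall_insert {F : Finset ℕ} {M : Set ℕ} (hM : M.Infinite)
    (h : Rejects 𝓕 F M) : ∃ M' ⊆ M, M'.Infinite ∧ ∀ n ∈ M', Rejects 𝓕 (insert n F) M' := by
  -- Otherwise a fusion sequence `e` of sets accepting `insert (e i) F` has a range accepting `F`.
  by_contra! hcon
  obtain ⟨e, he, heM, hB⟩ := exists_fusion_seq
    (Inv := fun s A => A ⊆ M ∧ ∀ n ∈ s, Accepts 𝓕 (insert n F) A) hM ⟨subset_rfl, by simp⟩
    (by
      rintro s A hA ⟨hAM, hacc⟩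
      obtain ⟨n, hn, hrej⟩ := hcon A hAM hA
      simp only [Rejects, not_forall, not_not] at hrej
      obtain ⟨L, hLA, hL, hLacc⟩ := hrej
      refine ⟨n, hn, L \ Set.Iic n, Set.sdiff_subset.trans hLA, hL.sdiff (Set.finite_Iic n),
        fun m hm => not_le.1 hm.2, (Set.sdiff_subset.trans hLA).trans hAM, fun m hm => ?_⟩
      rcases mem_insert.1 hm with rfl | hm
      · exact hLacc.mono Set.sdiff_subset
      · exact (hacc m hm).mono (Set.sdiff_subset.trans hLA))
  refine h _ (Set.range_subset_iff.2 heM) (Set.infinite_range_of_injective he.injective)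
    fun L hLN hL => ?_
  have ha : IsLeast L (sInf L) := ⟨Nat.sInf_mem hL.nonempty, fun x hx => Nat.sInf_le hx⟩
  obtain ⟨i, hi⟩ := hLN ha.1
  obtain ⟨B, -, ⟨-, hacc⟩, hBe⟩ := hB (i + 1)
  have hsub : L \ {sInf L} ⊆ B := by
    rintro x ⟨hxL, hxa⟩
    obtain ⟨j, rfl⟩ := hLN hxL
    refine hBe j (he.lt_iff_lt.1 ?_)
    rw [hi]
    exact (ha.2 hxL).lt_of_ne (Ne.symm hxa)
  obtain ⟨E, hE, hFE⟩ := hacc (e i) (mem_image_of_mem e (self_mem_range_succ i)) _ hsub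
    (hL.sdiff (Set.finite_singleton _))
  refine ⟨insert (sInf L) E, hE.insert_of_isLeast ha, ?_⟩
  rwa [union_insert, ← insert_union, ← hi]

theorem Rejects.exists_forall_insert_of_forall_mem (G : Finset (Finset ℕ)) {M : Set ℕ}
    (hM : M.Infinite) (h : ∀ F ∈ G, Rejects 𝓕 F M) :
    ∃ M' ⊆ M, M'.Infinite ∧
      ∀ F ∈ G, Rejects 𝓕 F M' ∧ ∀ n ∈ M', Rejects 𝓕 (insert n F) M' := by
  classical
  induction G using Finset.induction_on generalizing M with
  | empty => exact ⟨M, subset_rfl, hM, by simp⟩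
  | insert F₀ G _ ih =>
    obtain ⟨M₁, hM₁, hM₁inf, h₁⟩ := ih hM fun F hF => h F (mem_insert_of_mem hF)
    obtain ⟨M₂, hM₂, hM₂inf, h₂⟩ :=
      ((h F₀ (mem_insert_self _ _)).mono hM₁).exists_forall_insert hM₁inf
    refine ⟨M₂, hM₂.trans hM₁, hM₂inf, fun F hF => ?_⟩
    rcases mem_insert.1 hF with rfl | hF
    · exact ⟨(h F (mem_insert_self _ _)).mono (hM₂.trans hM₁), h₂⟩
    · exact ⟨(h₁ F hF).1.mono hM₂, fun n hn => ((h₁ F hF).2 n (hM₂ hn)).mono hM₂⟩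

end NashWilliams

open NashWilliams in
theorem nashWilliams (𝓕 : Finset ℕ → Prop) {M₀ : Set ℕ} (hM₀ : M₀.Infinite) :
    ∃ M ⊆ M₀, M.Infinite ∧
      ((∀ F : Finset ℕ, ↑F ⊆ M → ¬ 𝓕 F) ∨ ∀ L ⊆ M, L.Infinite → ∃ E, IsInitSeg E L ∧ 𝓕 E) := by
  classical
  obtain ⟨L₀, hL₀, hL₀inf, hacc | hrej⟩ := exists_accepts_or_rejects (𝓕 := 𝓕) ∅ hM₀
  · exact ⟨L₀, hL₀, hL₀inf, Or.inr fun L hL hLinf => by simpa using hacc L hL hLinf⟩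
  obtain ⟨e, he, heL₀, hB⟩ := exists_fusion_seq (Inv := fun s A => ∀ F ⊆ s, Rejects 𝓕 F A)
    hL₀inf (by simpa using hrej) (by
      intro s A hA hs
      obtain ⟨A', hA'A, hA', h'⟩ := Rejects.exists_forall_insert_of_forall_mem s.powerset hA
        fun F hF => hs F (mem_powerset.1 hF)
      obtain ⟨n, hn⟩ := hA'.nonempty
      refine ⟨n, hA'A hn, A' \ Set.Iic n, Set.sdiff_subset.trans hA'A, hA'.sdiff (Set.finite_Iic n),
        fun m hm => not_le.1 hm.2, fun F hF => ?_⟩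
      by_cases hnF : n ∈ F
      · rw [← insert_erase hnF]
        have hF' : F.erase n ⊆ s := (erase_subset_erase n hF).trans (erase_insert_subset n s)
        exact ((h' _ (mem_powerset.2 hF')).2 n hn).mono Set.sdiff_subset
      · exact (h' F (mem_powerset.2 ((subset_insert_iff_of_notMem hnF).1 hF))).1.mono
          Set.sdiff_subset)
  refine ⟨Set.range e, Set.range_subset_iff.2 fun k => hL₀ (heL₀ k),
    Set.infinite_range_of_injective he.injective, Or.inl fun F hF hFF => ?_⟩
  obtain ⟨s, -, rfl⟩ := Finset.subset_set_image_iff.1 (Set.image_univ.symm ▸ hF)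
  obtain ⟨B, hB, hrejB, -⟩ := hB (s.sup id + 1)
  exact hrejB _ (image_subset_image (subset_range_sup_succ s)) B subset_rfl hB
    (accepts_of_mem hFF B)

section BoolIndependence

variable {S : Type*}

def IsBoolIndependent (C : ℕ → Bool → Set S) : Prop :=
  ∀ (F : Finset ℕ) (ε : ℕ → Bool), ∃ t, ∀ i ∈ F, t ∈ C i (ε i)

/-- `#{j ∈ F | j < i}` is the position of `i` in the increasing enumeration of `F`. -/
def RealizesAlternation (C : ℕ → Bool → Set S) (F : Finset ℕ) : Prop :=
  ∃ t, ∀ i ∈ F, t ∈ C i (#{j ∈ F | j < i}).bodd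

theorem exists_finset_bodd_card_filter_lt (ε : ℕ → Bool) (n : ℕ) :
    ∃ J : Finset ℕ, (∀ j ∈ J, j < 2 * n) ∧
      ∀ k < n, 2 * k + 1 ∈ J ∧ (#{j ∈ J | j < 2 * k + 1}).bodd = ε k := by
  induction n with
  | zero => exact ⟨∅, by simp, by simp⟩
  | succ n ih =>
    obtain ⟨J, hJ, hJk⟩ := ih
    -- `2 * n` is added exactly when `2 * n + 1` would otherwise get a position of wrong parity.
    let J' := if (#J).bodd = ε n then J else insert (2 * n) J
    have hJ' : ∀ j ∈ J', j < 2 * n + 1 := by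
      intro j hj
      by_cases h : (#J).bodd = ε n <;> simp only [J', h, if_true, if_false] at hj
      · linarith [hJ j hj]
      · rcases mem_insert.1 hj with rfl | hj
        · omega
        · linarith [hJ j hj]
    have hpos : (#J').bodd = ε n := by
      by_cases h : (#J).bodd = ε n
      · simp [J', h]
      · have : 2 * n ∉ J := fun hn => by linarith [hJ _ hn]
        simp only [J', h, if_false, card_insert_of_notMem this, Nat.bodd_succ]
        cases hε : ε n <;> simp_all
    refine ⟨insert (2 * n + 1) J', fun j hj => ?_, fun k hk => ⟨?_, ?_⟩⟩
    · rcases mem_insert.1 hj with rfl | hj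
      · omega
      · linarith [hJ' j hj]
    · rcases Nat.lt_succ_iff_lt_or_eq.1 hk with hk | rfl
      · exact mem_insert_of_mem (by by_cases h : (#J).bodd = ε n <;> simp [J', h, (hJk k hk).1])
      · exact mem_insert_self _ _
    · rcases Nat.lt_succ_iff_lt_or_eq.1 hk with hk | rfl
      · rw [← (hJk k hk).2, filter_insert, if_neg (by omega)]
        by_cases h : (#J).bodd = ε n
        · simp only [J', h, if_true]
        · simp only [J', h, if_false, filter_insert, if_neg (show ¬2 * n < 2 * k + 1 by omega)]
      · rw [filter_insert, if_neg (lt_irrefl _), filter_true_of_mem hJ', hpos]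

theorem exists_strictMono_isBoolIndependent_or_eventually_notMem (C : ℕ → Bool → Set S) :
    ∃ ψ : ℕ → ℕ, StrictMono ψ ∧
      (IsBoolIndependent (fun k => C (ψ k)) ∨ ∀ t, ∃ b, ∀ᶠ k in atTop, t ∉ C (ψ k) b) := by
  classical
  obtain ⟨M, -, hM, hM'⟩ :=
    nashWilliams (fun F => ¬ RealizesAlternation C F) Set.infinite_univ
  set e := Nat.nth (· ∈ M)
  have he : StrictMono e := Nat.nth_strictMono hM
  have heM : ∀ k, e k ∈ M := Nat.nth_mem_of_infinite hM
  rcases hM' with hgood | hbad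
  · refine ⟨fun k => e (2 * k + 1), he.comp fun a b h => by omega, Or.inl fun F ε => ?_⟩
    obtain ⟨J, -, hJ⟩ := exists_finset_bodd_card_filter_lt ε (F.sup id + 1)
    obtain ⟨t, ht⟩ := not_not.1 <| hgood (J.image e) <| by
      simpa [Set.subset_def] using fun j _ => heM j
    refine ⟨t, fun k hk => ?_⟩
    obtain ⟨hmem, hpos⟩ := hJ k (Nat.lt_succ_of_le (le_sup (f := id) hk))
    have := ht (e (2 * k + 1)) (mem_image_of_mem e hmem)
    simpa only [filter_image, he.lt_iff_lt, card_image_of_injective _ he.injective, hpos]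
      using this
  · refine ⟨e, he, Or.inr fun t => ?_⟩
    -- A point lying infinitely often in both families alternates along a subsequence `e ∘ a`,
    -- so it realizes the alternation on every initial segment of the range of `e ∘ a`.
    by_contra! h
    obtain ⟨a, ha, hta⟩ := extraction_forall_of_frequently fun j => h (Nat.bodd j)
    obtain ⟨E, hE, hbadE⟩ := hbad (Set.range (e ∘ a)) (Set.range_subset_iff.2 fun j => heM _)
      (Set.infinite_range_of_injective (he.comp ha).injective)
    refine hbadE ⟨t, fun i hi => ?_⟩
    obtain ⟨j, rfl⟩ := hE.1 hi
    rw [hE.card_filter_lt (he.comp ha) hi]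
    exact hta j

end BoolIndependence

theorem cauchySeq_of_forall_rat_not_oscillating {u : ℕ → ℝ} {C : ℝ} (hu : ∀ n, |u n| ≤ C)
    (h : ∀ r s : ℚ, r < s → (∀ᶠ n in atTop, (r : ℝ) ≤ u n) ∨ ∀ᶠ n in atTop, u n ≤ s) :
    CauchySeq u := by
  have hle : IsBoundedUnder (· ≤ ·) atTop u := isBoundedUnder_of ⟨C, fun n => (abs_le.1 (hu n)).2⟩
  have hge : IsBoundedUnder (· ≥ ·) atTop u := isBoundedUnder_of ⟨-C, fun n => (abs_le.1 (hu n)).1⟩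
  obtain heq | hlt := (liminf_le_limsup hle hge).eq_or_lt
  · exact (tendsto_of_liminf_eq_limsup heq rfl hle hge).cauchySeq
  obtain ⟨r, hr, hrs⟩ := exists_rat_btwn hlt
  obtain ⟨s, hrs, hs⟩ := exists_rat_btwn hrs
  rcases h r s (by exact_mod_cast hrs) with hev | hev
  · obtain ⟨n, hn, hn'⟩ := ((frequently_lt_of_liminf_lt hle.isCoboundedUnder_ge hr).and_eventually
      hev).exists
    exact absurd hn' (not_le.2 hn)
  · obtain ⟨n, hn, hn'⟩ := ((frequently_lt_of_lt_limsup hge.isCoboundedUnder_le hs).and_eventually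
      hev).exists
    exact absurd hn' (not_le.2 hn)

theorem Seminormalized.comp {X : Type*} [NormedAddCommGroup X] {x : ℕ → X}
    (hx : Seminormalized x) (θ : ℕ → ℕ) : Seminormalized (x ∘ θ) := by
  obtain ⟨c, C, hc, h⟩ := hx
  exact ⟨c, C, hc, fun n => h (θ n)⟩

theorem Seminormalized.ne_zero {X : Type*} [NormedAddCommGroup X] {x : ℕ → X}
    (hx : Seminormalized x) (n : ℕ) : x n ≠ 0 := by
  obtain ⟨c, C, hc, h⟩ := hx
  exact norm_pos_iff.1 (hc.trans_le (h n).1)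

section Sequences

variable {X : Type*} [NormedAddCommGroup X] [NormedSpace ℝ X]

def IsWeaklyCauchy (x : ℕ → X) : Prop :=
  ∀ f : X →L[ℝ] ℝ, CauchySeq fun n => f (x n)

theorem IsWeaklyCauchy.comp {x : ℕ → X} (hx : IsWeaklyCauchy x) {θ : ℕ → ℕ}
    (hθ : StrictMono θ) : IsWeaklyCauchy (x ∘ θ) :=
  fun f => (hx f).comp_tendsto hθ.tendsto_atTop

theorem isWeaklyCauchy_of_norm_le_one {x : ℕ → X}
    (h : ∀ g : X →L[ℝ] ℝ, ‖g‖ ≤ 1 → CauchySeq fun n => g (x n)) : IsWeaklyCauchy x := by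
  intro f
  have hpos : 0 < ‖f‖ + 1 := by positivity
  have hg : ‖(‖f‖ + 1)⁻¹ • f‖ ≤ 1 := by
    rw [norm_smul, norm_inv, Real.norm_of_nonneg hpos.le, inv_mul_le_one₀ hpos]
    linarith
  have := (uniformContinuous_const_smul (‖f‖ + 1)).comp_cauchySeq (h _ hg)
  simpa [Function.comp_def, smul_smul, hpos.ne'] using this

theorem WeaklyNull.comp {x : ℕ → X} (hx : WeaklyNull x) {θ : ℕ → ℕ} (hθ : StrictMono θ) :
    WeaklyNull (x ∘ θ) :=
  fun f => (hx f).comp hθ.tendsto_atTop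

theorem norm_sum_smul_le {v : ℕ → X} {C : ℝ} (hv : ∀ n, ‖v n‖ ≤ C) (a : ℕ → ℝ)
    (F : Finset ℕ) : ‖∑ n ∈ F, a n • v n‖ ≤ C * ∑ n ∈ F, |a n| := by
  rw [Finset.mul_sum]
  refine (norm_sum_le _ _).trans (Finset.sum_le_sum fun n _ => ?_)
  rw [norm_smul, Real.norm_eq_abs, mul_comm]
  exact mul_le_mul_of_nonneg_right (hv n) (abs_nonneg _)

theorem equivL1Basis_of_lower {v : ℕ → X} {c C : ℝ} (hc : 0 < c)
    (hlow : ∀ (a : ℕ → ℝ) (F : Finset ℕ), c * ∑ n ∈ F, |a n| ≤ ‖∑ n ∈ F, a n • v n‖)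
    (hv : ∀ n, ‖v n‖ ≤ C) : EquivL1Basis v :=
  ⟨c, C, hc, fun a F => ⟨hlow a F, norm_sum_smul_le hv a F⟩⟩

theorem EquivL1Basis.exists_norm_le {v : ℕ → X} (hv : EquivL1Basis v) :
    ∃ C, ∀ n, ‖v n‖ ≤ C := by
  obtain ⟨c, C, -, h⟩ := hv
  exact ⟨C, fun n => by simpa using (h 1 {n}).2⟩

theorem EquivL1Basis.ne_zero {v : ℕ → X} (hv : EquivL1Basis v) (n : ℕ) : v n ≠ 0 := by
  obtain ⟨c, C, hc, h⟩ := hv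
  have := (h 1 {n}).1
  simp only [Finset.sum_singleton, Pi.one_apply, abs_one, mul_one, one_smul] at this
  exact norm_pos_iff.1 (hc.trans_le this)

theorem l1_lower_comp {v : ℕ → X} {c : ℝ}
    (h : ∀ (a : ℕ → ℝ) (F : Finset ℕ), c * ∑ n ∈ F, |a n| ≤ ‖∑ n ∈ F, a n • v n‖)
    {θ : ℕ → ℕ} (hθ : θ.Injective) (a : ℕ → ℝ) (F : Finset ℕ) :
    c * ∑ n ∈ F, |a n| ≤ ‖∑ n ∈ F, a n • v (θ n)‖ := by
  classical
  have hinv : ∀ n, θ.invFun (θ n) = n := Function.leftInverse_invFun hθ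
  simpa only [sum_image hθ.injOn, Function.comp_apply, hinv] using h (a ∘ θ.invFun) (F.image θ)

theorem l1_lower_sub_comp {v : ℕ → X} {c : ℝ}
    (h : ∀ (a : ℕ → ℝ) (F : Finset ℕ), c * ∑ n ∈ F, |a n| ≤ ‖∑ n ∈ F, a n • v n‖)
    {P Q : ℕ → ℕ} (hP : P.Injective) (hQ : Q.Injective) (hPQ : ∀ k l, P k ≠ Q l)
    (a : ℕ → ℝ) (F : Finset ℕ) :
    2 * c * ∑ n ∈ F, |a n| ≤ ‖∑ n ∈ F, a n • (v (Q n) - v (P n))‖ := by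
  classical
  let b : ℕ → ℝ := fun j => if j ∈ Set.range Q then a (Q.invFun j) else -a (P.invFun j)
  have hbQ : ∀ n, b (Q n) = a n := fun n => by simp [b, Function.leftInverse_invFun hQ n]
  have hbP : ∀ n, b (P n) = -a n := fun n => by
    simp [b, Function.leftInverse_invFun hP n, fun m => (hPQ n m).symm]
  have hdisj : Disjoint (F.image Q) (F.image P) := by
    simpa [disjoint_left] using fun k _ l _ => hPQ l k
  have key := h b (F.image Q ∪ F.image P)
  simp only [sum_union hdisj, sum_image hQ.injOn, sum_image hP.injOn, hbQ, hbP, abs_neg,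
    neg_smul, sum_neg_distrib, ← sub_eq_add_neg, ← sum_sub_distrib, ← smul_sub] at key
  linarith

theorem EquivL1Basis.comp {v : ℕ → X} (hv : EquivL1Basis v) {θ : ℕ → ℕ} (hθ : θ.Injective) :
    EquivL1Basis (v ∘ θ) := by
  obtain ⟨C, hC⟩ := hv.exists_norm_le
  obtain ⟨c, _, hc, h⟩ := hv
  exact equivL1Basis_of_lower hc (l1_lower_comp (fun a F => (h a F).1) hθ) fun n => hC (θ n)

theorem EquivL1Basis.isBasicSeq {v : ℕ → X} (hv : EquivL1Basis v) : IsBasicSeq v := by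
  refine ⟨hv.ne_zero, ?_⟩
  obtain ⟨c, C, hc, h⟩ := hv
  have hC : 0 ≤ C := by
    have := (h 1 {0}).2
    simp only [Finset.sum_singleton, Pi.one_apply, abs_one, mul_one, one_smul] at this
    exact (norm_nonneg _).trans this
  refine ⟨max 1 (C / c), le_max_left _ _, fun a m n hmn => ?_⟩
  calc ‖∑ i ∈ range m, a i • v i‖ ≤ C * ∑ i ∈ range m, |a i| := (h a _).2
    _ ≤ C * ∑ i ∈ range n, |a i| := by gcongr
    _ = C / c * (c * ∑ i ∈ range n, |a i|) := by field_simp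
    _ ≤ C / c * ‖∑ i ∈ range n, a i • v i‖ := by gcongr; exact (h a _).1
    _ ≤ max 1 (C / c) * ‖∑ i ∈ range n, a i • v i‖ := by gcongr; exact le_max_right _ _

end Sequences

section Rosenthal

variable {X : Type*} [NormedAddCommGroup X] [NormedSpace ℝ X]

theorem l1_lower_of_isBoolIndependent {y : ℕ → X} {r s : ℝ}
    (h : IsBoolIndependent fun i b =>
      {g : X →L[ℝ] ℝ | ‖g‖ ≤ 1 ∧ bif b then s < g (y i) else g (y i) < r})
    (a : ℕ → ℝ) (F : Finset ℕ) : (s - r) / 2 * ∑ n ∈ F, |a n| ≤ ‖∑ n ∈ F, a n • y n‖ := by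
  rcases F.eq_empty_or_nonempty with rfl | ⟨i₀, hi₀⟩
  · simp
  obtain ⟨gp, hgp⟩ := h F fun i => decide (0 ≤ a i)
  obtain ⟨gm, hgm⟩ := h F fun i => !decide (0 ≤ a i)
  have key : ∀ i ∈ F, (s - r) * |a i| ≤ a i * gp (y i) - a i * gm (y i) := by
    intro i hi
    obtain ⟨-, hp⟩ := hgp i hi
    obtain ⟨-, hm⟩ := hgm i hi
    by_cases hai : 0 ≤ a i
    · simp only [hai, decide_true, cond_true, Bool.not_true, cond_false] at hp hm
      rw [abs_of_nonneg hai]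
      nlinarith
    · simp only [hai, decide_false, cond_false, Bool.not_false, cond_true] at hp hm
      rw [abs_of_neg (not_le.1 hai)]
      nlinarith
  have hsum : (s - r) * ∑ i ∈ F, |a i| ≤ gp (∑ n ∈ F, a n • y n) - gm (∑ n ∈ F, a n • y n) := by
    simp only [map_sum, map_smul, smul_eq_mul, Finset.mul_sum, ← Finset.sum_sub_distrib]
    exact Finset.sum_le_sum key
  have hp := gp.le_of_opNorm_le (hgp i₀ hi₀).1 (∑ n ∈ F, a n • y n)
  have hm := gm.le_of_opNorm_le (hgm i₀ hi₀).1 (∑ n ∈ F, a n • y n)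
  rw [Real.norm_eq_abs] at hp hm
  linarith [le_abs_self (gp (∑ n ∈ F, a n • y n)), neg_abs_le (gm (∑ n ∈ F, a n • y n))]

theorem exists_strictMono_equivL1Basis_or_not_oscillating {y : ℕ → X} {M : ℝ}
    (hy : ∀ n, ‖y n‖ ≤ M) {r s : ℝ} (hrs : r < s) :
    ∃ θ : ℕ → ℕ, StrictMono θ ∧ (EquivL1Basis (y ∘ θ) ∨ ∀ g : X →L[ℝ] ℝ, ‖g‖ ≤ 1 →
      (∀ᶠ k in atTop, r ≤ g (y (θ k))) ∨ ∀ᶠ k in atTop, g (y (θ k)) ≤ s) := by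
  obtain ⟨θ, hθ, hind | hosc⟩ := exists_strictMono_isBoolIndependent_or_eventually_notMem
    fun i b => {g : X →L[ℝ] ℝ | ‖g‖ ≤ 1 ∧ bif b then s < g (y i) else g (y i) < r}
  · exact ⟨θ, hθ, Or.inl <| equivL1Basis_of_lower (by linarith)
      (l1_lower_of_isBoolIndependent hind) fun n => hy (θ n)⟩
  refine ⟨θ, hθ, Or.inr fun g hg => ?_⟩
  obtain ⟨b, hb⟩ := hosc g
  cases b
  · exact Or.inl <| hb.mono fun k hk => not_lt.1 fun hlt => hk ⟨hg, hlt⟩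
  · exact Or.inr <| hb.mono fun k hk => not_lt.1 fun hlt => hk ⟨hg, hlt⟩

theorem exists_strictMono_isWeaklyCauchy_or_equivL1Basis {x : ℕ → X} {M : ℝ}
    (hx : ∀ n, ‖x n‖ ≤ M) :
    ∃ ψ : ℕ → ℕ, StrictMono ψ ∧ (IsWeaklyCauchy (x ∘ ψ) ∨ EquivL1Basis (x ∘ ψ)) := by
  by_cases hl1 : ∃ ψ : ℕ → ℕ, StrictMono ψ ∧ EquivL1Basis (x ∘ ψ)
  · obtain ⟨ψ, hψ, h⟩ := hl1
    exact ⟨ψ, hψ, Or.inr h⟩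
  let Q : ℕ → (ℕ → ℕ) → Prop := fun j ψ => ∀ p : ℚ × ℚ, (Denumerable.eqv (ℚ × ℚ)).symm j = p →
    p.1 < p.2 → ∀ g : X →L[ℝ] ℝ, ‖g‖ ≤ 1 →
      (∀ᶠ k in atTop, (p.1 : ℝ) ≤ g (x (ψ k))) ∨ ∀ᶠ k in atTop, g (x (ψ k)) ≤ p.2
  have hstep : ∀ j (ψ : ℕ → ℕ), StrictMono ψ → ∃ θ, StrictMono θ ∧ Q j (ψ ∘ θ) := by
    intro j ψ hψ
    by_cases hrs : ((Denumerable.eqv (ℚ × ℚ)).symm j).1 < ((Denumerable.eqv (ℚ × ℚ)).symm j).2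
    · obtain ⟨θ, hθ, hl1' | hosc⟩ := exists_strictMono_equivL1Basis_or_not_oscillating
        (y := x ∘ ψ) (fun n => hx (ψ n)) (Rat.cast_lt.2 hrs)
      · exact absurd ⟨ψ ∘ θ, hψ.comp hθ, hl1'⟩ hl1
      · exact ⟨θ, hθ, fun p hp _ => by subst hp; exact hosc⟩
    · exact ⟨id, strictMono_id, fun p hp hlt => by subst hp; exact absurd hlt hrs⟩
  obtain ⟨δ, hδ, hQ⟩ := exists_diagonal_subseq Q hstep
  refine ⟨δ, hδ, Or.inl <| isWeaklyCauchy_of_norm_le_one fun g hg => ?_⟩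
  refine cauchySeq_of_forall_rat_not_oscillating (C := M)
    (fun n => (g.le_of_opNorm_le hg _).trans (by simpa using hx (δ n))) fun r s hrs => ?_
  obtain ⟨j, hj⟩ := (Denumerable.eqv (ℚ × ℚ)).symm.surjective (r, s)
  obtain ⟨ψ, hQψ, hδψ⟩ := hQ j
  exact (hQψ (r, s) hj hrs g hg).imp (hδψ.eventually (p := fun n => (r : ℝ) ≤ g (x n)))
    (hδψ.eventually (p := fun n => g (x n) ≤ s))

end Rosenthal

section BasicSequences

variable {X : Type*} [NormedAddCommGroup X] [NormedSpace ℝ X]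

theorem WeaklyNull.eventually_le_norm_add_smul {d : ℕ → X} (hd : WeaklyNull d) {c : ℝ}
    (hc : 0 < c) (hdc : ∀ n, c ≤ ‖d n‖) (W : Submodule ℝ X) [FiniteDimensional ℝ W] {t : ℝ}
    (ht : t < 1) : ∀ᶠ n in atTop, ∀ w ∈ W, ‖w‖ = 1 → ∀ b : ℝ, t ≤ ‖w + b • d n‖ := by
  by_contra h
  simp only [not_eventually, not_forall, not_le] at h
  obtain ⟨φ, hφ, hex⟩ := extraction_of_frequently_atTop h
  choose w hwW hw1 b hwb using hex
  have hb : ∀ k, |b k| ≤ (t + 1) / c := by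
    intro k
    rw [le_div_iff₀ hc]
    calc |b k| * c ≤ ‖b k • d (φ k)‖ := by
          rw [norm_smul, Real.norm_eq_abs]; exact mul_le_mul_of_nonneg_left (hdc _) (abs_nonneg _)
      _ = ‖(w k + b k • d (φ k)) - w k‖ := by rw [add_sub_cancel_left]
      _ ≤ ‖w k + b k • d (φ k)‖ + ‖w k‖ := norm_sub_le _ _
      _ ≤ t + 1 := by linarith [hwb k, hw1 k]
  -- The unit vectors `w k` accumulate at some `w₀`; a norming functional of `w₀` tends to `1`
  -- along `w k + b k • d (φ k)`, although these vectors have norm `< t`.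
  obtain ⟨_, ⟨w₀, hw₀, rfl⟩, ψ, hψ, hlim⟩ :=
    ((isCompact_sphere (0 : W) 1).image continuous_subtype_val).tendsto_subseq (x := w)
      fun k => ⟨⟨w k, hwW k⟩, by simpa using hw1 k, rfl⟩
  have hw₀1 : ‖(w₀ : X)‖ = 1 := by simpa using hw₀
  obtain ⟨f, hf1, hfw⟩ := exists_dual_vector ℝ (w₀ : X) (by rw [hw₀1]; exact one_ne_zero)
  have hlim' : Tendsto (fun k => f (w (ψ k) + b (ψ k) • d (φ (ψ k)))) atTop (𝓝 1) := by
    simp only [map_add, map_smul, smul_eq_mul]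
    have h1 : Tendsto (fun k => f (w (ψ k))) atTop (𝓝 1) := by
      simpa [hfw, hw₀1, Function.comp_def] using (f.continuous.tendsto _).comp hlim
    have h2 : Tendsto (fun k => b (ψ k) * f (d (φ (ψ k)))) atTop (𝓝 0) :=
      bdd_le_mul_tendsto_zero (b := -((t + 1) / c)) (B := (t + 1) / c)
        (Eventually.of_forall fun k => (abs_le.1 (hb _)).1)
        (Eventually.of_forall fun k => (abs_le.1 (hb _)).2)
        ((hd f).comp (hφ.comp hψ).tendsto_atTop)
    simpa using h1.add h2
  have : (1 : ℝ) ≤ t := le_of_tendsto' hlim' fun k =>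
    (le_abs_self _).trans (((f.le_of_opNorm_le hf1.le _).trans_eq (one_mul _)).trans (hwb _).le)
  linarith

theorem WeaklyNull.eventually_mul_norm_le_norm_add_smul {d : ℕ → X} (hd : WeaklyNull d) {c : ℝ}
    (hc : 0 < c) (hdc : ∀ n, c ≤ ‖d n‖) (W : Submodule ℝ X) [FiniteDimensional ℝ W] {t : ℝ}
    (ht : t < 1) : ∀ᶠ n in atTop, ∀ u ∈ W, ∀ a : ℝ, t * ‖u‖ ≤ ‖u + a • d n‖ := by
  filter_upwards [hd.eventually_le_norm_add_smul hc hdc W ht] with n hn u huW a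
  rcases eq_or_ne u 0 with rfl | hu0
  · simp
  have hu : 0 < ‖u‖ := norm_pos_iff.2 hu0
  have := hn (‖u‖⁻¹ • u) (W.smul_mem _ huW) (by simp [norm_smul, hu.ne']) (‖u‖⁻¹ * a)
  rwa [mul_smul, ← smul_add, norm_smul, norm_inv, norm_norm, le_inv_mul_iff₀ hu, mul_comm] at this

theorem isBasicSeq_of_weights {v : ℕ → X} (hv : ∀ n, v n ≠ 0) {b : ℕ → ℝ} {K : ℝ}
    (hb1 : ∀ m, 1 ≤ b m) (hbK : ∀ m, b m ≤ K)
    (hstep : ∀ m, ∀ u ∈ Submodule.span ℝ (v '' Set.Iio m), ∀ a : ℝ,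
      b m * ‖u‖ ≤ b (m + 1) * ‖u + a • v m‖) :
    IsBasicSeq v := by
  refine ⟨hv, K, (hb1 0).trans (hbK 0), fun a m n hmn => ?_⟩
  have hmono : Monotone fun m => b m * ‖∑ i ∈ range m, a i • v i‖ := by
    refine monotone_nat_of_le_succ fun m => ?_
    rw [sum_range_succ]
    exact hstep m _ (Submodule.sum_mem _ fun i hi =>
      Submodule.smul_mem _ _ (Submodule.subset_span ⟨i, mem_range.1 hi, rfl⟩)) (a m)
  calc ‖∑ i ∈ range m, a i • v i‖ ≤ b m * ‖∑ i ∈ range m, a i • v i‖ :=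
        le_mul_of_one_le_left (norm_nonneg _) (hb1 m)
    _ ≤ b n * ‖∑ i ∈ range n, a i • v i‖ := hmono hmn
    _ ≤ K * ‖∑ i ∈ range n, a i • v i‖ := by gcongr; exact hbK n

/-- The weights `2 - 2⁻¹ ^ m` increase from `1` to `2`, so chaining these steps bounds the basis
constant by `2`. -/
def BasisStep (d : ℕ → X) (m : ℕ) (s : Finset ℕ) (n : ℕ) : Prop :=
  ∀ u ∈ Submodule.span ℝ (d '' s), ∀ a : ℝ,
    (2 - 2⁻¹ ^ m) * ‖u‖ ≤ (2 - 2⁻¹ ^ (m + 1)) * ‖u + a • d n‖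

theorem WeaklyNull.eventually_basisStep {d : ℕ → X} (hd : WeaklyNull d)
    (hd' : Seminormalized d) (m : ℕ) (s : Finset ℕ) : ∀ᶠ n in atTop, BasisStep d m s n := by
  obtain ⟨c, C, hc, hdc⟩ := hd'
  have := FiniteDimensional.span_of_finite ℝ (s.finite_toSet.image d)
  have hpos : (0 : ℝ) < 2 - 2⁻¹ ^ (m + 1) := by
    linarith [pow_le_one₀ (n := m + 1) (by norm_num : (0 : ℝ) ≤ 2⁻¹) (by norm_num)]
  have hlt : (2 - 2⁻¹ ^ m) / (2 - 2⁻¹ ^ (m + 1)) < (1 : ℝ) := by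
    have : (2⁻¹ : ℝ) ^ (m + 1) < 2⁻¹ ^ m :=
      pow_lt_pow_right_of_lt_one₀ (by norm_num) (by norm_num) (Nat.lt_succ_self m)
    rw [div_lt_one hpos]
    linarith
  filter_upwards [hd.eventually_mul_norm_le_norm_add_smul hc (fun n => (hdc n).1)
    (Submodule.span ℝ (d '' s)) hlt]
    with n hn u hu a
  have := hn u hu a
  rwa [div_mul_eq_mul_div, div_le_iff₀ hpos, mul_comm _ (2 - _)] at this

theorem isBasicSeq_comp_of_basisStep {d : ℕ → X} (hd : ∀ n, d n ≠ 0) {θ : ℕ → ℕ}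
    (h : ∀ m, BasisStep d m ((range m).image θ) (θ m)) : IsBasicSeq (d ∘ θ) := by
  refine isBasicSeq_of_weights (fun n => hd (θ n)) (b := fun m => 2 - 2⁻¹ ^ m) (K := 2)
    (fun m => ?_) (fun m => ?_) fun m => ?_
  · linarith [pow_le_one₀ (n := m) (by norm_num : (0 : ℝ) ≤ 2⁻¹) (by norm_num)]
  · linarith [pow_nonneg (by norm_num : (0 : ℝ) ≤ 2⁻¹) m]
  · rw [Set.image_comp, ← coe_range, ← coe_image]
    exact h m

theorem exists_strictMono_isBasicSeq_comp {Y : Type*} [NormedAddCommGroup Y] [NormedSpace ℝ Y]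
    {d : ℕ → X} {g : ℕ → Y} (hd : Seminormalized d) (hd' : WeaklyNull d ∨ EquivL1Basis d)
    (hg : Seminormalized g) (hg' : WeaklyNull g ∨ EquivL1Basis g) :
    ∃ θ : ℕ → ℕ, StrictMono θ ∧ IsBasicSeq (d ∘ θ) ∧ IsBasicSeq (g ∘ θ) := by
  obtain ⟨θ, hθ, hstep⟩ := extraction_of_frequently_prefix
    (P := fun m s n => (WeaklyNull d → BasisStep d m s n) ∧ (WeaklyNull g → BasisStep g m s n))
    fun m s => Eventually.frequently <| (eventually_imp_distrib_left.2 fun hwn =>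
      hwn.eventually_basisStep hd m s).and
      (eventually_imp_distrib_left.2 fun hwn => hwn.eventually_basisStep hg m s)
  refine ⟨θ, hθ, ?_, ?_⟩
  · rcases hd' with hwn | hl1
    · exact isBasicSeq_comp_of_basisStep hd.ne_zero fun m => (hstep m).1 hwn
    · exact (hl1.comp hθ.injective).isBasicSeq
  · rcases hg' with hwn | hl1
    · exact isBasicSeq_comp_of_basisStep hg.ne_zero fun m => (hstep m).2 hwn
    · exact (hl1.comp hθ.injective).isBasicSeq

end BasicSequences

theorem exists_strictMono_tendsto_or_separated {Y : Type*} [PseudoMetricSpace Y] [CompleteSpace Y]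
    (y : ℕ → Y) :
    (∃ ψ : ℕ → ℕ, StrictMono ψ ∧ ∃ z, Tendsto (y ∘ ψ) atTop (𝓝 z)) ∨
      ∃ σ : ℕ → ℕ, StrictMono σ ∧ ∃ ε > 0, Pairwise fun i j => ε ≤ dist (y (σ i)) (y (σ j)) := by
  by_cases h : TotallyBounded (Set.range y)
  · obtain ⟨z, -, ψ, hψ, hz⟩ := (h.closure.isCompact_of_isClosed isClosed_closure).tendsto_subseq
      fun n => subset_closure (Set.mem_range_self n)
    exact Or.inl ⟨ψ, hψ, z, hz⟩
  obtain ⟨ε, hε, hfar⟩ : ∃ ε > 0, ∀ t : Set Y, t.Finite →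
      ¬ Set.range y ⊆ ⋃ z ∈ t, Metric.ball z ε := by
    simpa [Metric.totallyBounded_iff] using h
  obtain ⟨σ, -, hσ⟩ := exists_seq_of_forall_finset_exists (fun _ : ℕ => True)
    (fun m n => m < n ∧ ε ≤ dist (y m) (y n)) fun s _ => by
      obtain ⟨_, ⟨n, rfl⟩, hn⟩ := Set.not_subset.1 (hfar _ ((Set.finite_Iic (s.sup id)).image y))
      simp only [Set.mem_iUnion, Metric.mem_ball, not_exists, not_lt] at hn
      refine ⟨n, trivial, fun m hm => ?_⟩
      have hm' : m ≤ s.sup id := le_sup (f := id) hm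
      refine ⟨lt_of_not_ge fun hnm => ?_, dist_comm (y n) (y m) ▸ hn _ ⟨m, hm', rfl⟩⟩
      have := hn _ ⟨n, hnm.trans hm', rfl⟩
      rw [dist_self] at this
      linarith
  refine Or.inr ⟨σ, fun i j hij => (hσ i j hij).1, ε, hε, fun i j hij => ?_⟩
  rcases hij.lt_or_gt with h | h
  · exact (hσ i j h).2
  · exact dist_comm (y (σ j)) (y (σ i)) ▸ (hσ j i h).2

section PairDiff

def pairDiff {E : Type*} [Sub E] (w : ℕ → E) (k : ℕ) : E := w (4 * k + 2) - w (4 * k)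

theorem Filter.Tendsto.pairDiff {E : Type*} [AddGroup E] [TopologicalSpace E]
    [IsTopologicalAddGroup E] {w : ℕ → E} {y : E} (hw : Tendsto w atTop (𝓝 y)) :
    Tendsto (pairDiff w) atTop (𝓝 0) := by
  rw [← sub_self y]
  exact (hw.comp (tendsto_atTop_mono (fun k => show k ≤ 4 * k + 2 by omega) tendsto_id)).sub
    (hw.comp (tendsto_atTop_mono (fun k => show k ≤ 4 * k by omega) tendsto_id))

theorem not_tendsto_of_seminormalized_pairDiff {E : Type*} [NormedAddCommGroup E] {w : ℕ → E}
    (hw : Seminormalized (pairDiff w)) : ¬ ∃ y, Tendsto w atTop (𝓝 y) := by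
  rintro ⟨y, hy⟩
  obtain ⟨c, C, hc, h⟩ := hw
  obtain ⟨k, hk⟩ := (hy.pairDiff.norm.eventually (gt_mem_nhds (by simpa using hc))).exists
  exact (h k).1.not_gt hk

theorem seminormalized_pairDiff {E : Type*} [NormedAddCommGroup E] {w : ℕ → E} {M ε : ℝ}
    (hw : ∀ n, ‖w n‖ ≤ M) (hε : 0 < ε) (hsep : Pairwise fun i j => ε ≤ dist (w i) (w j)) :
    Seminormalized (pairDiff w) :=
  ⟨ε, 2 * M, hε, fun k => ⟨dist_eq_norm (w _) (w _) ▸ hsep (by omega),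
    (norm_sub_le _ _).trans (by linarith [hw (4 * k + 2), hw (4 * k)])⟩⟩

theorem pairDiff_comp_blocks {E : Type*} [Sub E] (w : ℕ → E) (θ : ℕ → ℕ) :
    pairDiff (w ∘ fun n => 4 * θ (n / 4) + n % 4) = pairDiff w ∘ θ := by
  funext k
  simp only [pairDiff, Function.comp_apply]
  rw [show (4 * k + 2) / 4 = k by omega, show (4 * k + 2) % 4 = 2 by omega,
    show 4 * k / 4 = k by omega, show 4 * k % 4 = 0 by omega, add_zero]

theorem StrictMono.blocks {θ : ℕ → ℕ} (hθ : StrictMono θ) :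
    StrictMono fun n => 4 * θ (n / 4) + n % 4 := by
  refine strictMono_nat_of_lt_succ fun n => ?_
  by_cases h : n % 4 = 3
  · have := hθ (show n / 4 < n / 4 + 1 by omega)
    rw [show (n + 1) / 4 = n / 4 + 1 by omega, show (n + 1) % 4 = 0 by omega]
    omega
  · rw [show (n + 1) / 4 = n / 4 by omega, show (n + 1) % 4 = n % 4 + 1 by omega]
    omega

variable {X : Type*} [NormedAddCommGroup X] [NormedSpace ℝ X]

theorem IsWeaklyCauchy.weaklyNull_pairDiff {w : ℕ → X} (hw : IsWeaklyCauchy w) :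
    WeaklyNull (pairDiff w) := fun f => by
  obtain ⟨L, hL⟩ := cauchySeq_tendsto_of_complete (hw f)
  exact hL.pairDiff.congr fun k => by simp [pairDiff]

theorem EquivL1Basis.pairDiff {w : ℕ → X} (hw : EquivL1Basis w) : EquivL1Basis (pairDiff w) := by
  obtain ⟨C, hC⟩ := hw.exists_norm_le
  obtain ⟨c, _, hc, h⟩ := hw
  exact equivL1Basis_of_lower (C := 2 * C) (by positivity : 0 < 2 * c)
    (l1_lower_sub_comp (fun a F => (h a F).1) (fun a b hab => by omega)
      (fun a b hab => by omega) fun k l => by omega)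
    fun k => (norm_sub_le _ _).trans (by linarith [hC (4 * k + 2), hC (4 * k)])

end PairDiff

theorem exists_strictMono_pairDiff_isBasicSeq {X Y : Type*}
    [NormedAddCommGroup X] [NormedSpace ℝ X] [NormedAddCommGroup Y] [NormedSpace ℝ Y]
    (T : X →L[ℝ] Y) {u : ℕ → X} {M ε : ℝ} (hu : ∀ n, ‖u n‖ ≤ M) (hε : 0 < ε)
    (hsep : Pairwise fun i j => ε ≤ dist (T (u i)) (T (u j))) :
    ∃ φ : ℕ → ℕ, StrictMono φ ∧
      Seminormalized (pairDiff (u ∘ φ)) ∧ IsBasicSeq (pairDiff (u ∘ φ)) ∧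
      Seminormalized (pairDiff (T ∘ u ∘ φ)) ∧ IsBasicSeq (pairDiff (T ∘ u ∘ φ)) ∧
      (WeaklyNull (pairDiff (u ∘ φ)) ∨ EquivL1Basis (pairDiff (u ∘ φ))) ∧
      (WeaklyNull (pairDiff (T ∘ u ∘ φ)) ∨ EquivL1Basis (pairDiff (T ∘ u ∘ φ))) := by
  have hTu : ∀ n, ‖T (u n)‖ ≤ ‖T‖ * M := fun n => T.le_opNorm_of_le (hu n)
  obtain ⟨ρ₁, hρ₁, hT⟩ := exists_strictMono_isWeaklyCauchy_or_equivL1Basis hTu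
  obtain ⟨ρ₂, hρ₂, hx⟩ := exists_strictMono_isWeaklyCauchy_or_equivL1Basis fun n => hu (ρ₁ n)
  set ρ := ρ₁ ∘ ρ₂
  have hρ : StrictMono ρ := hρ₁.comp hρ₂
  have hsep' : Pairwise fun i j => ε ≤ dist (T (u (ρ i))) (T (u (ρ j))) :=
    fun i j hij => hsep (hρ.injective.ne hij)
  have hsepu : Pairwise fun i j => ε / (‖T‖ + 1) ≤ dist (u (ρ i)) (u (ρ j)) := by
    intro i j hij
    rw [div_le_iff₀ (by positivity), dist_eq_norm]
    calc ε ≤ ‖T (u (ρ i) - u (ρ j))‖ := by rw [map_sub, ← dist_eq_norm]; exact hsep' hij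
      _ ≤ ‖T‖ * ‖u (ρ i) - u (ρ j)‖ := T.le_opNorm _
      _ ≤ ‖u (ρ i) - u (ρ j)‖ * (‖T‖ + 1) := by nlinarith [norm_nonneg (u (ρ i) - u (ρ j))]
  have hD := seminormalized_pairDiff (w := u ∘ ρ) (fun n => hu _) (by positivity) hsepu
  have hTD := seminormalized_pairDiff (w := T ∘ u ∘ ρ) (fun n => hTu _) hε hsep'
  have hD' : WeaklyNull (pairDiff (u ∘ ρ)) ∨ EquivL1Basis (pairDiff (u ∘ ρ)) :=
    hx.imp IsWeaklyCauchy.weaklyNull_pairDiff EquivL1Basis.pairDiff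
  have hTD' : WeaklyNull (pairDiff (T ∘ u ∘ ρ)) ∨ EquivL1Basis (pairDiff (T ∘ u ∘ ρ)) :=
    hT.imp (fun h => (h.comp hρ₂).weaklyNull_pairDiff)
      (fun h => (h.comp hρ₂.injective).pairDiff)
  obtain ⟨θ, hθ, hbD, hbTD⟩ := exists_strictMono_isBasicSeq_comp hD hD' hTD hTD'
  refine ⟨ρ ∘ fun n => 4 * θ (n / 4) + n % 4, hρ.comp hθ.blocks, ?_⟩
  simp only [← Function.comp_assoc, pairDiff_comp_blocks] at hbD hbTD ⊢
  exact ⟨hD.comp θ, hbD, hTD.comp θ, hbTD, hD'.imp (·.comp hθ) (·.comp hθ.injective),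
    hTD'.imp (·.comp hθ) (·.comp hθ.injective)⟩

theorem stmt7_general {X Y : Type*}
    [NormedAddCommGroup X] [NormedSpace ℝ X]
    [NormedAddCommGroup Y] [NormedSpace ℝ Y] [CompleteSpace Y]
    (T : X →L[ℝ] Y) (x : ℕ → X) (hb : ∃ M : ℝ, ∀ n, ‖x n‖ ≤ M) :
    ∃ φ : ℕ → ℕ, StrictMono φ ∧
      Xor' (∃ y : Y, Tendsto (fun k => T (x (φ k))) atTop (𝓝 y))
        (Seminormalized (fun k => x (φ (4 * k + 2)) - x (φ (4 * k))) ∧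
         IsBasicSeq (fun k => x (φ (4 * k + 2)) - x (φ (4 * k))) ∧
         Seminormalized (fun k => T (x (φ (4 * k + 2))) - T (x (φ (4 * k)))) ∧
         IsBasicSeq (fun k => T (x (φ (4 * k + 2))) - T (x (φ (4 * k)))) ∧
         (WeaklyNull (fun k => x (φ (4 * k + 2)) - x (φ (4 * k))) ∨
          EquivL1Basis (fun k => x (φ (4 * k + 2)) - x (φ (4 * k)))) ∧
         (WeaklyNull (fun k => T (x (φ (4 * k + 2))) - T (x (φ (4 * k)))) ∨
          EquivL1Basis (fun k => T (x (φ (4 * k + 2))) - T (x (φ (4 * k)))))) := by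
  obtain ⟨M, hM⟩ := hb
  rcases exists_strictMono_tendsto_or_separated (T ∘ x) with ⟨ψ, hψ, y, hy⟩ | ⟨σ, hσ, ε, hε, hsep⟩
  · exact ⟨ψ, hψ, Or.inl ⟨⟨y, hy⟩, fun h =>
      not_tendsto_of_seminormalized_pairDiff (w := T ∘ x ∘ ψ) h.2.2.1 ⟨y, hy⟩⟩⟩
  · obtain ⟨φ, hφ, hdiff⟩ :=
      exists_strictMono_pairDiff_isBasicSeq T (u := x ∘ σ) (fun n => hM _) hε hsep
    exact ⟨σ ∘ φ, hσ.comp hφ,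
      Or.inr ⟨hdiff, not_tendsto_of_seminormalized_pairDiff hdiff.2.2.1⟩⟩

/-- If `(x n)` is a bounded sequence in a Banach space `X` and
`T : X → Y` is a bounded operator, then there is a subsequence `x ∘ φ` such that
exactly one of the following holds: (a) `(T (x (φ k)))` is norm-convergent; (b) the
difference sequences `(x (φ (4k+2)) - x (φ (4k)))` and `(T (x (φ (4k+2))) - T (x (φ (4k))))`
are both seminormalized basic, and each is weakly null or equivalent to the `ℓ₁` basis. -/
theorem stmt7 {X Y : Type*}
    [NormedAddCommGroup X] [NormedSpace ℝ X] [CompleteSpace X]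
    [NormedAddCommGroup Y] [NormedSpace ℝ Y] [CompleteSpace Y]
    (T : X →L[ℝ] Y) (x : ℕ → X) (hb : ∃ M : ℝ, ∀ n, ‖x n‖ ≤ M) :
    ∃ φ : ℕ → ℕ, StrictMono φ ∧
      Xor' (∃ y : Y, Tendsto (fun k => T (x (φ k))) atTop (𝓝 y))
        (Seminormalized (fun k => x (φ (4 * k + 2)) - x (φ (4 * k))) ∧
         IsBasicSeq (fun k => x (φ (4 * k + 2)) - x (φ (4 * k))) ∧
         Seminormalized (fun k => T (x (φ (4 * k + 2))) - T (x (φ (4 * k)))) ∧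
         IsBasicSeq (fun k => T (x (φ (4 * k + 2))) - T (x (φ (4 * k)))) ∧
         (WeaklyNull (fun k => x (φ (4 * k + 2)) - x (φ (4 * k))) ∨
          EquivL1Basis (fun k => x (φ (4 * k + 2)) - x (φ (4 * k)))) ∧
         (WeaklyNull (fun k => T (x (φ (4 * k + 2))) - T (x (φ (4 * k)))) ∨
          EquivL1Basis (fun k => T (x (φ (4 * k + 2))) - T (x (φ (4 * k)))))) :=
  stmt7_general T x hb
end

section
/- Let e = (e_n) be the canonical basis of ℓ_p for some 1 ≤ p < ∞ (or of c₀), let X, Y be Banach spaces, and let (T_j) be a sequence of operators in JS_{e,ξ}(X,Y) converging in operator norm to T ∈ L(X,Y). Then T ∈ JS_{e,ξ}(X,Y); that is, JS_{e,ξ}(X,Y) is norm-closed in L(X,Y). -/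
open Ordinal Filter Topology

/-- `x` `S_ξ`-dominates `e` (relative to the Schreier system `𝒮`). -/
def SDominates (𝒮 : SchreierSystem) (ξ : Ordinal) {X E : Type*}
    [NormedAddCommGroup X] [NormedSpace ℝ X] [NormedAddCommGroup E] [NormedSpace ℝ E]
    (x : ℕ → X) (e : ℕ → E) : Prop :=
  ∃ C : ℝ, 1 ≤ C ∧ ∀ (a : ℕ → ℝ), ∀ F ∈ 𝒮.S ξ,
    ‖∑ n ∈ F, a n • e n‖ ≤ C * ‖∑ n ∈ F, a n • x n‖

/-- `T` is `(e,ξ)`-singular (class `WS_{e,ξ}`): for every normalized basic sequence `x`,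
the image sequence `T ∘ x` fails to `S_ξ`-dominate `e`. -/
def MemWS (𝒮 : SchreierSystem) (ξ : Ordinal) {X Y E : Type*}
    [NormedAddCommGroup X] [NormedSpace ℝ X] [NormedAddCommGroup Y] [NormedSpace ℝ Y]
    [NormedAddCommGroup E] [NormedSpace ℝ E] (e : ℕ → E) (T : X →L[ℝ] Y) : Prop :=
  ∀ x : ℕ → X, (∀ n, ‖x n‖ = 1) → IsBasicSeq x →
    ¬ SDominates 𝒮 ξ (fun n => T (x n)) e

/-- `T` is of class `JS_{e,ξ}`: for every normalized basic sequence `x` which is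
dominated by `e`, the image sequence `T ∘ x` fails to `S_ξ`-dominate `e`. -/
def MemJS (𝒮 : SchreierSystem) (ξ : Ordinal) {X Y E : Type*}
    [NormedAddCommGroup X] [NormedSpace ℝ X] [NormedAddCommGroup Y] [NormedSpace ℝ Y]
    [NormedAddCommGroup E] [NormedSpace ℝ E] (e : ℕ → E) (T : X →L[ℝ] Y) : Prop :=
  ∀ x : ℕ → X, (∀ n, ‖x n‖ = 1) → IsBasicSeq x → Dominates e x →
    ¬ SDominates 𝒮 ξ (fun n => T (x n)) e

/-! The image of a fixed `e`-dominated sequence `x` under `T` `S_ξ`-dominating `e` is an open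
condition on `T`: if `‖∑ aₙ eₙ‖ ≤ C ‖∑ aₙ T xₙ‖` on `S_ξ` and `‖∑ aₙ xₙ‖ ≤ D ‖∑ aₙ eₙ‖`, then
any `S` with `‖S - T‖ < 1 / (2CD)` satisfies the first estimate with constant `2C`. Hence
`JS_{e,ξ}`, an intersection of complements of such open sets, is closed. -/

section

variable {X Y E : Type*} [NormedAddCommGroup X] [NormedSpace ℝ X]
  [NormedAddCommGroup Y] [NormedSpace ℝ Y] [NormedAddCommGroup E] [NormedSpace ℝ E]

lemma norm_sum_smul_apply_le (S T : X →L[ℝ] Y) (x : ℕ → X) (a : ℕ → ℝ) (F : Finset ℕ) :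
    ‖∑ n ∈ F, a n • T (x n)‖ ≤ ‖∑ n ∈ F, a n • S (x n)‖ + ‖T - S‖ * ‖∑ n ∈ F, a n • x n‖ := by
  have sum_apply (L : X →L[ℝ] Y) : ∑ n ∈ F, a n • L (x n) = L (∑ n ∈ F, a n • x n) := by
    simp only [map_sum, map_smul]
  rw [sum_apply T, sum_apply S]
  set v := ∑ n ∈ F, a n • x n
  calc ‖T v‖ = ‖S v + (T - S) v‖ := by simp
    _ ≤ ‖S v‖ + ‖(T - S) v‖ := norm_add_le _ _
    _ ≤ ‖S v‖ + ‖T - S‖ * ‖v‖ := by gcongr; exact (T - S).le_opNorm v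

lemma isOpen_setOf_sDominates_apply (𝒮 : SchreierSystem) (ξ : Ordinal) {e : ℕ → E} {x : ℕ → X}
    (hx : Dominates e x) :
    IsOpen {T : X →L[ℝ] Y | SDominates 𝒮 ξ (fun n => T (x n)) e} := by
  obtain ⟨D, hD, hxe⟩ := hx
  refine Metric.isOpen_iff.mpr fun T ⟨C, hC, hTe⟩ => ⟨1 / (2 * C * D), by positivity, ?_⟩
  intro S hS
  rw [Metric.mem_ball, dist_eq_norm, ← norm_neg, neg_sub] at hS
  refine ⟨2 * C, by linarith, fun a F hF => ?_⟩
  have hperturb : ‖T - S‖ * ‖∑ n ∈ F, a n • x n‖ ≤ ‖∑ n ∈ F, a n • e n‖ / (2 * C) :=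
    calc ‖T - S‖ * ‖∑ n ∈ F, a n • x n‖ ≤ 1 / (2 * C * D) * (D * ‖∑ n ∈ F, a n • e n‖) := by
          gcongr; exact hxe a F
      _ = ‖∑ n ∈ F, a n • e n‖ / (2 * C) := by field_simp
  have habsorb : ‖∑ n ∈ F, a n • e n‖ ≤ C * ‖∑ n ∈ F, a n • S (x n)‖ + ‖∑ n ∈ F, a n • e n‖ / 2 :=
    calc ‖∑ n ∈ F, a n • e n‖ ≤ C * ‖∑ n ∈ F, a n • T (x n)‖ := hTe a F hF
      _ ≤ C * (‖∑ n ∈ F, a n • S (x n)‖ + ‖∑ n ∈ F, a n • e n‖ / (2 * C)) := by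
          gcongr; exact (norm_sum_smul_apply_le S T x a F).trans (by gcongr)
      _ = C * ‖∑ n ∈ F, a n • S (x n)‖ + ‖∑ n ∈ F, a n • e n‖ / 2 := by field_simp
  linarith

lemma isClosed_setOf_memJS (𝒮 : SchreierSystem) (ξ : Ordinal) (e : ℕ → E) :
    IsClosed {T : X →L[ℝ] Y | MemJS 𝒮 ξ e T} := by
  simp only [MemJS, Set.ofPred_forall]
  exact isClosed_iInter fun x => isClosed_iInter fun _ => isClosed_iInter fun _ =>
    isClosed_iInter fun hx => (isOpen_setOf_sDominates_apply 𝒮 ξ hx).isClosed_compl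

end

open Filter Topology in
theorem stmt12_general (𝒮 : SchreierSystem) (ξ : Ordinal)
    {X Y E : Type*}
    [NormedAddCommGroup X] [NormedSpace ℝ X]
    [NormedAddCommGroup Y] [NormedSpace ℝ Y]
    [NormedAddCommGroup E] [NormedSpace ℝ E]
    (e : ℕ → E)
    (T : ℕ → (X →L[ℝ] Y)) (T₀ : X →L[ℝ] Y)
    (hTJS : ∀ j, MemJS 𝒮 ξ e (T j))
    (hconv : Tendsto T atTop (𝓝 T₀)) :
    MemJS 𝒮 ξ e T₀ :=
  (isClosed_setOf_memJS 𝒮 ξ e).mem_of_tendsto hconv (Eventually.of_forall hTJS)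

open Filter Topology in
/-- Let `e` be the canonical basis of `ℓ_p` (`1 ≤ p < ∞`) or of `c₀`.
If `(T j)` is a sequence in `JS_{e,ξ}(X,Y)` converging in operator norm to `T₀`,
then `T₀ ∈ JS_{e,ξ}(X,Y)`; i.e. `JS_{e,ξ}(X,Y)` is norm-closed. -/
theorem stmt12 (𝒮 : SchreierSystem) (ξ : Ordinal) (hξ1 : 1 ≤ ξ) (hξ : ξ ≤ ω₁)
    {X Y E : Type*}
    [NormedAddCommGroup X] [NormedSpace ℝ X] [CompleteSpace X]
    [NormedAddCommGroup Y] [NormedSpace ℝ Y] [CompleteSpace Y]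
    [NormedAddCommGroup E] [NormedSpace ℝ E] [CompleteSpace E]
    (e : ℕ → E) (hE : (∃ p : ℝ, 1 ≤ p ∧ IsLpBasis p e) ∨ IsC0Basis e)
    (T : ℕ → (X →L[ℝ] Y)) (T₀ : X →L[ℝ] Y)
    (hTJS : ∀ j, MemJS 𝒮 ξ e (T j))
    (hconv : Tendsto T atTop (𝓝 T₀)) :
    MemJS 𝒮 ξ e T₀ :=
  stmt12_general 𝒮 ξ e T T₀ hTJS hconv
end

section
/- Let e = (e_n) be the canonical basis of ℓ_p (1 ≤ p < ∞) or c₀, let X, Y be Banach spaces, let 1 ≤ ξ, ζ < ω₁ be countable ordinals, and suppose S ∈ JS_{e,ξ}(X,Y) and T ∈ JS_{e,ζ}(X,Y). Then S + T ∈ JS_{e,ξ+ζ}(X,Y). Moreover, if ξ = ω₁ or ζ = ω₁, then S + T ∈ JS_{e,ω₁}(X,Y). -/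
open Ordinal Filter Topology

/-!
Let `x` be a normalized basic sequence dominated by `e` on which `(S + T) x` `S_μ`-dominates
`e`. Applying `S ∈ JS_ξ` to the tails of `x` gives successive blocks
`v k = ∑_{n ∈ F k} a k n • x n` with `F k ∈ S_ξ`, `‖∑_{n ∈ F k} a k n • e n‖ = 1` and `‖S v k‖`
summably small. Normalized disjoint blocks of the `ℓ_p` or `c₀` basis are isometrically
equivalent to the basis, and `S_ζ`-unions of `S_ξ`-sets lying far enough out belong to
`S_{ξ+ζ}` (to `S_{ω₁}` when `ξ` or `ζ` is `ω₁`). So the normalized `v k` form again a normalized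
basic sequence dominated by `e`, and the lower `S_μ`-estimate for `(S + T) x` turns, up to the
small `S`-part, into a lower `S_ζ`-estimate for `T` on the normalized `v k`, contradicting
`T ∈ JS_ζ`.
-/

open Finset Function

@[elab_as_elim]
theorem Ordinal.induction_omega_one {motive : Ordinal → Prop} (ξ : Ordinal)
    (top : ∀ ξ, ω₁ ≤ ξ → motive ξ) (zero : motive 0)
    (succ : ∀ η < ω₁, motive η → motive (η + 1))
    (limit : ∀ ξ, Order.IsSuccLimit ξ → ξ < ω₁ → (∀ η < ξ, motive η) → motive ξ) :
    motive ξ := by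
  induction ξ using WellFoundedLT.induction with
  | _ ξ IH =>
    rcases le_or_gt ω₁ ξ with hξ | hξ
    · exact top ξ hξ
    rcases zero_or_succ_or_isSuccLimit ξ with rfl | ⟨η, rfl⟩ | hlim
    · exact zero
    · rw [Order.succ_eq_add_one]
      exact succ η ((Order.le_succ η).trans_lt hξ) (IH η (Order.lt_succ η))
    · exact limit ξ hlim hξ IH

namespace SchreierSystem

variable (𝒮 : SchreierSystem)

lemma exists_seq_of_isSuccLimit {ξ : Ordinal} (hlim : Order.IsSuccLimit ξ) (hξ : ξ < ω₁) :
    ∃ ζs : ℕ → Ordinal, (∀ n, ζs n < ξ) ∧ (∀ α < ξ, ∃ n, α < ζs n) ∧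
      𝒮.S ξ = {F | ∃ n : ℕ, F ∈ 𝒮.S (ζs n) ∧ ∀ a ∈ F, n + 1 ≤ a} := by
  obtain ⟨ζs, hmono, -, hsup, hS⟩ := 𝒮.limit ξ hlim hξ
  refine ⟨ζs, fun n => ?_, fun α hα => Ordinal.lt_iSup_iff.mp (hsup ▸ hα), hS⟩
  exact hsup ▸ (hmono n.lt_succ_self).trans_le (Ordinal.le_iSup ζs _)

lemma mem_succ_of_mem {η : Ordinal} (hη : η < ω₁) {F : Finset ℕ} (hF : F ∈ 𝒮.S η)
    (hF₁ : ∀ a ∈ F, 1 ≤ a) : F ∈ 𝒮.S (η + 1) := by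
  rw [𝒮.succ η hη]
  exact Or.inr ⟨1, fun _ => F, fun _ => hF, fun i j hij => absurd hij (by omega), hF₁, by simp⟩

lemma empty_mem (ξ : Ordinal) : ∅ ∈ 𝒮.S ξ := by
  induction ξ using Ordinal.induction_omega_one with
  | top ξ hξ => simp [𝒮.top ξ hξ]
  | zero => simp [𝒮.zero]
  | succ η hη _ => simp [𝒮.succ η hη]
  | limit ξ hlim hξ IH =>
    obtain ⟨ζs, hζs, -, hS⟩ := 𝒮.exists_seq_of_isSuccLimit hlim hξ
    exact hS ▸ ⟨0, IH _ (hζs 0), by simp⟩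

lemma singleton_mem (ξ : Ordinal) {k : ℕ} (hk : 1 ≤ k) : {k} ∈ 𝒮.S ξ := by
  induction ξ using Ordinal.induction_omega_one with
  | top ξ hξ => simp [𝒮.top ξ hξ]
  | zero => simp [𝒮.zero]
  | succ η hη IH => exact 𝒮.mem_succ_of_mem hη IH (by simpa using hk)
  | limit ξ hlim hξ IH =>
    obtain ⟨ζs, hζs, -, hS⟩ := 𝒮.exists_seq_of_isSuccLimit hlim hξ
    exact hS ▸ ⟨0, IH _ (hζs 0), by simpa using hk⟩

lemma map_addRight_mem (ξ : Ordinal) {F : Finset ℕ} (hF : F ∈ 𝒮.S ξ) (m : ℕ) :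
    F.map (addRightEmbedding m) ∈ 𝒮.S ξ := by
  induction ξ using Ordinal.induction_omega_one generalizing F with
  | top ξ hξ => simp [𝒮.top ξ hξ]
  | zero =>
    rw [𝒮.zero] at hF ⊢
    simpa using hF
  | succ η hη IH =>
    rw [𝒮.succ η hη] at hF ⊢
    rcases hF with rfl | ⟨n, f, hf, hlt, hn, rfl⟩
    · simp
    refine Or.inr ⟨n, fun i => (f i).map (addRightEmbedding m), fun i => IH (hf i), ?_, ?_, ?_⟩
    · simp only [Finset.mem_map, addRightEmbedding_apply]
      rintro i j hij _ ⟨a, ha, rfl⟩ _ ⟨b, hb, rfl⟩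
      exact Nat.add_lt_add_right (hlt i j hij a ha b hb) m
    · simp only [Finset.mem_map, mem_biUnion, addRightEmbedding_apply]
      rintro _ ⟨a, ⟨i, -, ha⟩, rfl⟩
      exact (hn a (mem_biUnion.mpr ⟨i, mem_univ i, ha⟩)).trans (Nat.le_add_right a m)
    · simp [map_eq_image, biUnion_image]
  | limit ξ hlim hξ IH =>
    obtain ⟨ζs, hζs, -, hS⟩ := 𝒮.exists_seq_of_isSuccLimit hlim hξ
    rw [hS] at hF ⊢
    obtain ⟨n, hFn, hF₁⟩ := hF
    refine ⟨n, IH _ (hζs n) hFn, ?_⟩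
    simp only [Finset.mem_map, addRightEmbedding_apply]
    rintro _ ⟨a, ha, rfl⟩
    exact (hF₁ a ha).trans (Nat.le_add_right a m)

lemma exists_mem_of_lt {β : Ordinal} (hβ : β < ω₁) {α : Ordinal} (hαβ : α < β) :
    ∃ N : ℕ, ∀ F ∈ 𝒮.S α, (∀ a ∈ F, N ≤ a) → F ∈ 𝒮.S β := by
  induction β using Ordinal.induction_omega_one generalizing α with
  | top β hβ' => exact absurd hβ (not_lt.mpr hβ')
  | zero => exact absurd hαβ not_lt_zero
  | succ η hη IH =>
    rcases (Order.lt_add_one_iff.mp hαβ).lt_or_eq with hαη | rfl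
    · obtain ⟨N, hN⟩ := IH hη hαη
      exact ⟨max N 1, fun F hF hFN => 𝒮.mem_succ_of_mem hη
        (hN F hF fun a ha => (le_max_left _ _).trans (hFN a ha))
        fun a ha => (le_max_right _ _).trans (hFN a ha)⟩
    · exact ⟨1, fun F hF hF₁ => 𝒮.mem_succ_of_mem hη hF hF₁⟩
  | limit β hlim _ IH =>
    obtain ⟨ζs, hζs, hcof, hS⟩ := 𝒮.exists_seq_of_isSuccLimit hlim hβ
    obtain ⟨n, hn⟩ := hcof α hαβ
    obtain ⟨N, hN⟩ := IH _ (hζs n) ((hζs n).trans hβ) hn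
    refine ⟨max N (n + 1), fun F hF hFN => hS ▸ ⟨n, ?_, ?_⟩⟩
    · exact hN F hF fun a ha => (le_max_left _ _).trans (hFN a ha)
    · exact fun a ha => (le_max_right _ _).trans (hFN a ha)

/-- `S_ζ[S_ξ] ⊆ S_μ`, as long as the `S_ξ`-set placed at position `k` starts beyond `h k`. -/
def ComposesInto (ξ ζ μ : Ordinal) : Prop :=
  ∃ h : ℕ → ℕ, ∀ G ∈ 𝒮.S ζ, ∀ F : ℕ → Finset ℕ, (∀ k ∈ G, F k ∈ 𝒮.S ξ) →
    (∀ k ∈ G, ∀ k' ∈ G, k < k' → ∀ a ∈ F k, ∀ b ∈ F k', a < b) →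
    (∀ k ∈ G, ∀ a ∈ F k, h k ≤ a) → G.biUnion F ∈ 𝒮.S μ

lemma composesInto_zero (ξ : Ordinal) : 𝒮.ComposesInto ξ 0 ξ := by
  refine ⟨0, fun G hG F hF _ _ => ?_⟩
  rw [𝒮.zero] at hG
  obtain ⟨k, hk⟩ := card_le_one_iff_subset_singleton.mp hG
  rcases subset_singleton_iff.mp hk with rfl | rfl
  · simpa using 𝒮.empty_mem ξ
  · simpa using hF k (mem_singleton_self k)

lemma composesInto_omega_one (ξ ζ : Ordinal) : 𝒮.ComposesInto ξ ζ ω₁ :=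
  ⟨0, fun _ _ _ _ _ _ => by simp [𝒮.top ω₁ le_rfl]⟩

variable {𝒮}

lemma ComposesInto.succ {ξ η μ : Ordinal} (hcomp : 𝒮.ComposesInto ξ η μ) (hη : η < ω₁)
    (hμ : μ < ω₁) : 𝒮.ComposesInto ξ (η + 1) (μ + 1) := by
  obtain ⟨h, hh⟩ := hcomp
  refine ⟨fun k => max (h k) k, fun G hG F hF hlt hge => ?_⟩
  rw [𝒮.succ η hη] at hG
  rw [𝒮.succ μ hμ]
  rcases hG with rfl | ⟨n, f, hf, hflt, hfn, rfl⟩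
  · simp
  have hsub : ∀ i, f i ⊆ univ.biUnion f := fun i => subset_biUnion_of_mem f (mem_univ i)
  refine Or.inr ⟨n, fun i => (f i).biUnion F, fun i => ?_, ?_, ?_, by rw [biUnion_biUnion]⟩
  · exact hh (f i) (hf i) F (fun k hk => hF k (hsub i hk))
      (fun k hk k' hk' => hlt k (hsub i hk) k' (hsub i hk'))
      (fun k hk a ha => (le_max_left _ _).trans (hge k (hsub i hk) a ha))
  · simp only [mem_biUnion]
    rintro i j hij a ⟨k, hk, ha⟩ b ⟨k', hk', hb⟩
    exact hlt k (hsub i hk) k' (hsub j hk') (hflt i j hij k hk k' hk') a ha b hb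
  · simp only [mem_biUnion]
    rintro a ⟨k, ⟨i, -, hk⟩, ha⟩
    have hk' : k ∈ univ.biUnion f := hsub i hk
    exact (hfn k hk').trans ((le_max_right _ _).trans (hge k hk' a ha))

lemma ComposesInto.mono {ξ ζ μ μ' : Ordinal} (hcomp : 𝒮.ComposesInto ξ ζ μ) {N : ℕ}
    (hN : ∀ F ∈ 𝒮.S μ, (∀ a ∈ F, N ≤ a) → F ∈ 𝒮.S μ') : 𝒮.ComposesInto ξ ζ μ' := by
  obtain ⟨h, hh⟩ := hcomp
  refine ⟨fun k => max (h k) N, fun G hG F hF hlt hge => hN _ ?_ ?_⟩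
  · exact hh G hG F hF hlt fun k hk a ha => (le_max_left _ _).trans (hge k hk a ha)
  · simp only [mem_biUnion]
    rintro a ⟨k, hk, ha⟩
    exact (le_max_right _ _).trans (hge k hk a ha)

lemma composesInto_of_eq_setOf {ξ ζ μ : Ordinal} {ζs : ℕ → Ordinal}
    (hS : 𝒮.S ζ = {G | ∃ n : ℕ, G ∈ 𝒮.S (ζs n) ∧ ∀ k ∈ G, n + 1 ≤ k})
    (hcomp : ∀ n, 𝒮.ComposesInto ξ (ζs n) μ) : 𝒮.ComposesInto ξ ζ μ := by
  choose h hh using hcomp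
  refine ⟨fun k => (range k).sup fun n => h n k, fun G hG F hF hlt hge => ?_⟩
  rw [hS] at hG
  obtain ⟨n, hGn, hGk⟩ := hG
  refine hh n G hGn F hF hlt fun k hk a ha => le_trans ?_ (hge k hk a ha)
  exact le_sup (f := fun n => h n k) (mem_range.mpr (hGk k hk))

variable (𝒮)

lemma composesInto_add {ξ ζ : Ordinal} (hξ : ξ < ω₁) (hζ : ζ < ω₁) :
    𝒮.ComposesInto ξ ζ (ξ + ζ) := by
  induction ζ using Ordinal.induction_omega_one with
  | top ζ hζ' => exact absurd hζ (not_lt.mpr hζ')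
  | zero => simpa using 𝒮.composesInto_zero ξ
  | succ η hη IH =>
    rw [← add_assoc]
    exact (IH hη).succ hη (Ordinal.isPrincipal_add_omega 1 hξ hη)
  | limit ζ hlim _ IH =>
    obtain ⟨ζs, hζs, -, hS⟩ := 𝒮.exists_seq_of_isSuccLimit hlim hζ
    refine composesInto_of_eq_setOf hS fun n => ?_
    obtain ⟨N, hN⟩ := 𝒮.exists_mem_of_lt (Ordinal.isPrincipal_add_omega 1 hξ hζ)
      (add_lt_add_right (hζs n) ξ)
    exact (IH _ (hζs n) ((hζs n).trans hζ)).mono hN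

end SchreierSystem

section Blocks

variable {V : Type*} [AddCommGroup V] [Module ℝ V]

def blockCoeff (G : Finset ℕ) (F : ℕ → Finset ℕ) (r : ℕ → ℝ) (a : ℕ → ℕ → ℝ) (n : ℕ) : ℝ :=
  ∑ k ∈ G, if n ∈ F k then r k * a k n else 0

lemma sum_blockCoeff_smul (s G : Finset ℕ) (F : ℕ → Finset ℕ) (r : ℕ → ℝ) (a : ℕ → ℕ → ℝ)
    (z : ℕ → V) :
    ∑ n ∈ s, blockCoeff G F r a n • z n = ∑ k ∈ G, r k • ∑ n ∈ s ∩ F k, a k n • z n := by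
  simp only [blockCoeff, sum_smul, ite_smul, zero_smul]
  rw [sum_comm]
  refine sum_congr rfl fun k _ => ?_
  rw [sum_ite_mem, smul_sum]
  simp only [mul_smul]

lemma sum_biUnion_blockCoeff_smul (G : Finset ℕ) (F : ℕ → Finset ℕ) (r : ℕ → ℝ)
    (a : ℕ → ℕ → ℝ) (z : ℕ → V) :
    ∑ n ∈ G.biUnion F, blockCoeff G F r a n • z n = ∑ k ∈ G, r k • ∑ n ∈ F k, a k n • z n := by
  rw [sum_blockCoeff_smul]
  refine sum_congr rfl fun k hk => ?_
  rw [inter_eq_right.mpr (subset_biUnion_of_mem F hk)]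

lemma blockCoeff_of_mem {G : Finset ℕ} {F : ℕ → Finset ℕ} (hF : (G : Set ℕ).PairwiseDisjoint F)
    (r : ℕ → ℝ) (a : ℕ → ℕ → ℝ) {k n : ℕ} (hk : k ∈ G) (hn : n ∈ F k) :
    blockCoeff G F r a n = r k * a k n := by
  rw [blockCoeff, sum_eq_single_of_mem k hk, if_pos hn]
  intro k' hk' hk'k
  rw [if_neg (disjoint_left.mp (hF hk hk' (Ne.symm hk'k)) hn)]

end Blocks

/-- An isometric form of Zippin's perfectly homogeneous bases; the unit vector bases of `ℓ_p`
and `c₀` are the examples. -/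
structure IsPerfectlyHomogeneous {E : Type*} [NormedAddCommGroup E] [NormedSpace ℝ E]
    (e : ℕ → E) : Prop where
  norm_eq_one : ∀ n, ‖e n‖ = 1
  norm_sum_le_of_abs_le : ∀ (r s : ℕ → ℝ) (F : Finset ℕ), (∀ n ∈ F, |r n| ≤ |s n|) →
    ‖∑ n ∈ F, r n • e n‖ ≤ ‖∑ n ∈ F, s n • e n‖
  norm_sum_blocks : ∀ (G : Finset ℕ) (F : ℕ → Finset ℕ) (a : ℕ → ℕ → ℝ),
    (G : Set ℕ).PairwiseDisjoint F → (∀ k ∈ G, ‖∑ n ∈ F k, a k n • e n‖ = 1) → ∀ r : ℕ → ℝ,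
    ‖∑ k ∈ G, r k • ∑ n ∈ F k, a k n • e n‖ = ‖∑ k ∈ G, r k • e k‖

section Examples

variable {E : Type*} [NormedAddCommGroup E] [NormedSpace ℝ E] {e : ℕ → E}

lemma IsLpBasis.isPerfectlyHomogeneous {p : ℝ} (he : IsLpBasis p e) (hp : 0 < p) :
    IsPerfectlyHomogeneous e := by
  have hsum_nonneg : ∀ (F : Finset ℕ) (c : ℕ → ℝ), 0 ≤ ∑ n ∈ F, |c n| ^ p :=
    fun F c => sum_nonneg fun n _ => by positivity
  refine ⟨fun n => ?_, fun r s F h => ?_, fun G F a hF ha r => ?_⟩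
  · simpa [hp.ne'] using he (fun _ => 1) {n}
  · rw [he, he]
    exact Real.rpow_le_rpow (hsum_nonneg _ _)
      (sum_le_sum fun n hn => Real.rpow_le_rpow (abs_nonneg _) (h n hn) hp.le) (by positivity)
  · rw [← sum_biUnion_blockCoeff_smul, he, he, sum_biUnion hF]
    congr 1
    refine sum_congr rfl fun k hk => ?_
    have hblock : ∑ n ∈ F k, |a k n| ^ p = 1 := by
      have h1 := ha k hk
      rw [he] at h1
      rw [← Real.rpow_inv_rpow (hsum_nonneg (F k) (a k)) hp.ne', ← one_div, h1, Real.one_rpow]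
    calc ∑ n ∈ F k, |blockCoeff G F r a n| ^ p
        = ∑ n ∈ F k, |r k| ^ p * |a k n| ^ p := sum_congr rfl fun n hn => by
          rw [blockCoeff_of_mem hF r a hk hn, abs_mul, Real.mul_rpow (abs_nonneg _) (abs_nonneg _)]
      _ = |r k| ^ p := by rw [← mul_sum, hblock, mul_one]

lemma IsC0Basis.isPerfectlyHomogeneous (he : IsC0Basis e) : IsPerfectlyHomogeneous e := by
  refine ⟨fun n => by simpa using he (fun _ => 1) {n}, fun r s F h => ?_, fun G F a hF ha r => ?_⟩
  · rw [he, he, NNReal.coe_le_coe]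
    exact sup_mono_fun fun n hn => by simpa [← NNReal.coe_le_coe] using h n hn
  · rw [← sum_biUnion_blockCoeff_smul, he, he, sup_biUnion]
    congr 1
    refine sup_congr rfl fun k hk => ?_
    have hblock : ((F k).sup fun n => ‖a k n‖₊) = 1 := by
      exact_mod_cast (he _ _).symm.trans (ha k hk)
    calc ((F k).sup fun n => ‖blockCoeff G F r a n‖₊)
        = (F k).sup fun n => ‖r k‖₊ * ‖a k n‖₊ := sup_congr rfl fun n hn => by
          rw [blockCoeff_of_mem hF r a hk hn, nnnorm_mul]
      _ = ‖r k‖₊ := by rw [← NNReal.mul_finset_sup, hblock, mul_one]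

end Examples

namespace IsPerfectlyHomogeneous

variable {E X : Type*} [NormedAddCommGroup E] [NormedSpace ℝ E]
  [NormedAddCommGroup X] [NormedSpace ℝ X] {e : ℕ → E}

lemma norm_sum_le_mul (he : IsPerfectlyHomogeneous e) {r s : ℕ → ℝ} {F : Finset ℕ} {t : ℝ}
    (ht : 0 ≤ t) (h : ∀ n ∈ F, |r n| ≤ t * |s n|) :
    ‖∑ n ∈ F, r n • e n‖ ≤ t * ‖∑ n ∈ F, s n • e n‖ := by
  calc ‖∑ n ∈ F, r n • e n‖ ≤ ‖∑ n ∈ F, (t * s n) • e n‖ :=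
        he.norm_sum_le_of_abs_le r _ F fun n hn => by rw [abs_mul, abs_of_nonneg ht]; exact h n hn
    _ = t * ‖∑ n ∈ F, s n • e n‖ := by
        simp only [mul_smul, ← smul_sum, norm_smul, Real.norm_of_nonneg ht]

lemma abs_le_norm_sum (he : IsPerfectlyHomogeneous e) (b : ℕ → ℝ) {F : Finset ℕ} {k : ℕ}
    (hk : k ∈ F) : |b k| ≤ ‖∑ n ∈ F, b n • e n‖ := by
  have h := he.norm_sum_le_of_abs_le (fun n => if n = k then b k else 0) b F fun n _ => by
    split_ifs with hnk
    · rw [hnk]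
    · simp
  simpa [ite_smul, hk, norm_smul, he.norm_eq_one] using h

lemma norm_sum_smul_le_of_norm_le_geometric (he : IsPerfectlyHomogeneous e) {w : ℕ → X} {η : ℝ}
    (hη : 0 ≤ η) (hw : ∀ k, ‖w k‖ ≤ η * (1 / 2) ^ k) (b : ℕ → ℝ) (G : Finset ℕ) :
    ‖∑ k ∈ G, b k • w k‖ ≤ 2 * η * ‖∑ k ∈ G, b k • e k‖ :=
  calc ‖∑ k ∈ G, b k • w k‖ ≤ ∑ k ∈ G, ‖∑ n ∈ G, b n • e n‖ * (η * (1 / 2) ^ k) :=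
        (norm_sum_le _ _).trans <| sum_le_sum fun k hk => by
          rw [norm_smul, Real.norm_eq_abs]
          exact mul_le_mul (he.abs_le_norm_sum b hk) (hw k) (norm_nonneg _) (norm_nonneg _)
    _ = η * ‖∑ n ∈ G, b n • e n‖ * ∑ k ∈ G, (1 / 2 : ℝ) ^ k := by
        rw [mul_sum]
        exact sum_congr rfl fun k _ => by ring
    _ ≤ η * ‖∑ n ∈ G, b n • e n‖ * 2 := by
        gcongr
        exact (summable_geometric_two.sum_le_tsum G fun _ _ => by positivity).trans
          tsum_geometric_two.le
    _ = 2 * η * ‖∑ k ∈ G, b k • e k‖ := by ring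

lemma norm_sum_smul_blocks_le {z : ℕ → X} {G : Finset ℕ} {F : ℕ → Finset ℕ} {a : ℕ → ℕ → ℝ}
    {C : ℝ} (he : IsPerfectlyHomogeneous e) (hF : (G : Set ℕ).PairwiseDisjoint F)
    (ha : ∀ k ∈ G, ‖∑ n ∈ F k, a k n • e n‖ = 1)
    (hC : ∀ c : ℕ → ℝ, ‖∑ n ∈ G.biUnion F, c n • e n‖ ≤ C * ‖∑ n ∈ G.biUnion F, c n • z n‖)
    (r : ℕ → ℝ) :
    ‖∑ k ∈ G, r k • e k‖ ≤ C * ‖∑ k ∈ G, r k • ∑ n ∈ F k, a k n • z n‖ := by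
  rw [← he.norm_sum_blocks G F a hF ha r, ← sum_biUnion_blockCoeff_smul,
    ← sum_biUnion_blockCoeff_smul]
  exact hC _

lemma norm_sum_comp_add (he : IsPerfectlyHomogeneous e) (r : ℕ → ℝ)
    (F : Finset ℕ) (m : ℕ) : ‖∑ n ∈ F, r n • e (n + m)‖ = ‖∑ n ∈ F, r n • e n‖ := by
  have hF : (F : Set ℕ).PairwiseDisjoint fun k => ({k + m} : Finset ℕ) := fun k _ k' _ hkk' => by
    simpa [onFun] using hkk'
  simpa using he.norm_sum_blocks F _ (fun _ _ => 1) hF (by simp [he.norm_eq_one]) r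

lemma dominates_blocks (he : IsPerfectlyHomogeneous e) {x : ℕ → X} (hx : Dominates e x)
    {F : ℕ → Finset ℕ} (hF : Pairwise (Disjoint on F)) {a : ℕ → ℕ → ℝ}
    (ha : ∀ k, ‖∑ n ∈ F k, a k n • e n‖ = 1) :
    Dominates e fun k => ∑ n ∈ F k, a k n • x n := by
  obtain ⟨D, hD, hxD⟩ := hx
  refine ⟨D, hD, fun r G => ?_⟩
  rw [← sum_biUnion_blockCoeff_smul,
    ← he.norm_sum_blocks G F a (hF.set_pairwise _) (fun k _ => ha k) r,
    ← sum_biUnion_blockCoeff_smul]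
  exact hxD _ _

lemma dominates_comp_add (he : IsPerfectlyHomogeneous e) {x : ℕ → X} (hx : Dominates e x)
    (m : ℕ) : Dominates e fun n => x (n + m) := by
  have hF : Pairwise (Disjoint on fun k => ({k + m} : Finset ℕ)) := fun k k' hkk' => by
    simpa [onFun] using hkk'
  simpa using he.dominates_blocks hx hF (a := fun _ _ => 1) (by simp [he.norm_eq_one])

lemma dominates_smul (he : IsPerfectlyHomogeneous e) {x : ℕ → X} (hx : Dominates e x)
    {c : ℕ → ℝ} {t : ℝ} (ht : 0 < t) (hc : ∀ k, |c k| ≤ t) :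
    Dominates e fun k => c k • x k := by
  obtain ⟨D, hD, hxD⟩ := hx
  refine ⟨D * t, by positivity, fun r G => ?_⟩
  calc ‖∑ n ∈ G, r n • c n • x n‖ = ‖∑ n ∈ G, (r n * c n) • x n‖ := by simp only [mul_smul]
    _ ≤ D * ‖∑ n ∈ G, (r n * c n) • e n‖ := hxD _ _
    _ ≤ D * (t * ‖∑ n ∈ G, r n • e n‖) := by
        gcongr
        refine he.norm_sum_le_mul ht.le fun n _ => ?_
        rw [abs_mul, mul_comm t]
        exact mul_le_mul_of_nonneg_left (hc n) (abs_nonneg _)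
    _ = D * t * ‖∑ n ∈ G, r n • e n‖ := by ring

end IsPerfectlyHomogeneous

section BasicSequences

variable {X : Type*} [NormedAddCommGroup X] [NormedSpace ℝ X]

lemma lt_of_mem_of_subset_Ico {m : ℕ → ℕ} (hm : Monotone m) {F : ℕ → Finset ℕ}
    (hF : ∀ k, F k ⊆ Ico (m k) (m (k + 1))) {k k' a b : ℕ} (hkk' : k < k') (ha : a ∈ F k)
    (hb : b ∈ F k') : a < b :=
  calc a < m (k + 1) := (mem_Ico.mp (hF k ha)).2
    _ ≤ m k' := hm hkk'
    _ ≤ b := (mem_Ico.mp (hF k' hb)).1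

lemma pairwise_disjoint_of_subset_Ico {m : ℕ → ℕ} (hm : Monotone m) {F : ℕ → Finset ℕ}
    (hF : ∀ k, F k ⊆ Ico (m k) (m (k + 1))) : Pairwise (Disjoint on F) := by
  intro k k' hkk'
  rw [onFun, disjoint_left]
  intro a ha ha'
  rcases hkk'.lt_or_gt with h | h
  · exact (lt_of_mem_of_subset_Ico hm hF h ha ha').false
  · exact (lt_of_mem_of_subset_Ico hm hF h ha' ha).false

lemma exists_successive_blocks {α : Type*} (Q : ℕ → α → Finset ℕ → Prop) (L : ℕ → ℕ)
    (hQ : ∀ k m, ∃ a F, (∀ n ∈ F, m ≤ n) ∧ Q k a F) :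
    ∃ (a : ℕ → α) (F : ℕ → Finset ℕ) (m : ℕ → ℕ), Monotone m ∧ (∀ k, ∀ n ∈ F k, L k ≤ n) ∧
      (∀ k, Q k (a k) (F k)) ∧ ∀ k, F k ⊆ Ico (m k) (m (k + 1)) := by
  choose a F hFm hQ using hQ
  let m : ℕ → ℕ := fun k =>
    Nat.rec (L 0) (fun k mk => max (L (k + 1)) (max mk ((F k mk).sup id + 1))) k
  have hm_succ : ∀ k, m (k + 1) = max (L (k + 1)) (max (m k) ((F k (m k)).sup id + 1)) :=
    fun _ => rfl
  have hLm : ∀ k, L k ≤ m k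
    | 0 => le_rfl
    | k + 1 => le_max_left _ _
  refine ⟨fun k => a k (m k), fun k => F k (m k), m, monotone_nat_of_le_succ fun k => ?_,
    fun k n hn => (hLm k).trans (hFm k _ n hn), fun k => hQ k (m k),
    fun k n hn => mem_Ico.mpr ⟨hFm k _ n hn, ?_⟩⟩
  · rw [hm_succ]
    exact (le_max_left _ _).trans (le_max_right _ _)
  · rw [hm_succ, Nat.lt_iff_add_one_le]
    exact (Nat.add_le_add_right (le_sup (f := id) hn) 1).trans
      ((le_max_right _ _).trans (le_max_right _ _))

lemma IsBasicSeq.blocks {x : ℕ → X} (hx : IsBasicSeq x) {m : ℕ → ℕ} (hm : Monotone m)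
    {F : ℕ → Finset ℕ} (hF : ∀ k, F k ⊆ Ico (m k) (m (k + 1))) {a : ℕ → ℕ → ℝ}
    (hv : ∀ k, ∑ n ∈ F k, a k n • x n ≠ 0) :
    IsBasicSeq fun k => ∑ n ∈ F k, a k n • x n := by
  obtain ⟨-, K, hK, hxK⟩ := hx
  refine ⟨hv, K, hK, fun b M N hMN => ?_⟩
  have hsum : ∀ M ≤ N, ∑ k ∈ range M, b k • ∑ n ∈ F k, a k n • x n
      = ∑ n ∈ range (m M), blockCoeff (range N) F b a n • x n := by
    intro M hMN
    rw [sum_blockCoeff_smul]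
    refine sum_subset_zero_on_sdiff (range_subset_range.mpr hMN) (fun k hk => ?_)
      (fun k hk => ?_)
    · have hkM : M ≤ k := by simpa using (mem_sdiff.mp hk).2
      have hdisj : range (m M) ∩ F k = ∅ := disjoint_iff_inter_eq_empty.mp <|
        disjoint_left.mpr fun n hn hnk =>
          (mem_range.mp hn).not_ge ((hm hkM).trans (mem_Ico.mp (hF k hnk)).1)
      rw [hdisj, sum_empty, smul_zero]
    · have hsub : F k ⊆ range (m M) := fun n hn => mem_range.mpr
        ((mem_Ico.mp (hF k hn)).2.trans_le (hm (mem_range.mp hk)))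
      rw [inter_eq_right.mpr hsub]
  rw [hsum M hMN, hsum N le_rfl]
  exact hxK _ _ _ (hm hMN)

lemma IsBasicSeq.comp_add {x : ℕ → X} (hx : IsBasicSeq x) (m : ℕ) :
    IsBasicSeq fun n => x (n + m) := by
  have hF : ∀ k, ({k + m} : Finset ℕ) ⊆ Ico (k + m) (k + 1 + m) := fun k => by simp
  simpa using hx.blocks (add_left_mono (a := m)) hF (a := fun _ _ => 1)
    (by simpa using fun k => hx.1 _)

lemma IsBasicSeq.smul {x : ℕ → X} (hx : IsBasicSeq x) {c : ℕ → ℝ} (hc : ∀ n, c n ≠ 0) :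
    IsBasicSeq fun n => c n • x n := by
  obtain ⟨hx0, K, hK, hxK⟩ := hx
  refine ⟨fun n => smul_ne_zero (hc n) (hx0 n), K, hK, fun b M N hMN => ?_⟩
  simpa only [mul_smul] using hxK (fun n => b n * c n) M N hMN

end BasicSequences

section JamesSingular

variable {X Y E : Type*} [NormedAddCommGroup X] [NormedSpace ℝ X]
  [NormedAddCommGroup Y] [NormedSpace ℝ Y] [NormedAddCommGroup E] [NormedSpace ℝ E]
  {𝒮 : SchreierSystem} {e : ℕ → E}

lemma ContinuousLinearMap.inv_le_norm_of_one_le_mul_norm_apply (U : X →L[ℝ] Y) {C : ℝ}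
    (hC : 0 < C) {y : X} (hy : 1 ≤ C * ‖U y‖) : (C * max ‖U‖ 1)⁻¹ ≤ ‖y‖ := by
  rw [inv_le_iff_one_le_mul₀ (by positivity)]
  calc 1 ≤ C * ‖U y‖ := hy
    _ ≤ C * (max ‖U‖ 1 * ‖y‖) := by
        gcongr
        exact (U.le_opNorm y).trans (by gcongr; exact le_max_left _ _)
    _ = ‖y‖ * (C * max ‖U‖ 1) := by ring

lemma exists_of_not_sDominates {ξ : Ordinal} {z : ℕ → Y} (h : ¬ SDominates 𝒮 ξ z e) {ε : ℝ}
    (hε : 0 < ε) : ∃ a : ℕ → ℝ, ∃ F ∈ 𝒮.S ξ,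
      ‖∑ n ∈ F, a n • e n‖ = 1 ∧ ‖∑ n ∈ F, a n • z n‖ < ε := by
  simp only [SDominates, not_exists, not_and, not_forall, not_le] at h
  obtain ⟨a, F, hF, hlt⟩ := h (max 1 ε⁻¹) (le_max_left _ _)
  set ρ := ‖∑ n ∈ F, a n • e n‖
  have hρ : 0 < ρ := (by positivity : (0 : ℝ) ≤ _).trans_lt hlt
  have hερ : ε⁻¹ * ‖∑ n ∈ F, a n • z n‖ < ρ :=
    (mul_le_mul_of_nonneg_right (le_max_right _ _) (norm_nonneg _)).trans_lt hlt
  refine ⟨fun n => ρ⁻¹ * a n, F, hF, ?_, ?_⟩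
  · simp only [mul_smul, ← smul_sum, norm_smul, norm_inv, Real.norm_of_nonneg hρ.le]
    exact inv_mul_cancel₀ hρ.ne'
  · simp only [mul_smul, ← smul_sum, norm_smul, norm_inv, Real.norm_of_nonneg hρ.le]
    rw [inv_mul_lt_iff₀ hρ]
    rw [inv_mul_lt_iff₀ hε] at hερ
    linarith

lemma MemJS.exists_block_norm_apply_lt {ξ : Ordinal} {S : X →L[ℝ] Y} (hS : MemJS 𝒮 ξ e S)
    (he : IsPerfectlyHomogeneous e) {x : ℕ → X} (hx1 : ∀ n, ‖x n‖ = 1) (hxb : IsBasicSeq x)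
    (hxd : Dominates e x) (m : ℕ) {ε : ℝ} (hε : 0 < ε) :
    ∃ (a : ℕ → ℝ) (F : Finset ℕ), (∀ n ∈ F, m ≤ n) ∧ F ∈ 𝒮.S ξ ∧
      ‖∑ n ∈ F, a n • e n‖ = 1 ∧ ‖S (∑ n ∈ F, a n • x n)‖ < ε := by
  obtain ⟨a, F, hF, ha, hSa⟩ := exists_of_not_sDominates
    (hS _ (fun n => hx1 _) (hxb.comp_add m) (he.dominates_comp_add hxd m)) hε
  refine ⟨fun n => a (n - m), F.map (addRightEmbedding m), ?_, 𝒮.map_addRight_mem ξ hF m, ?_, ?_⟩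
  · simp
  · simpa [sum_map, he.norm_sum_comp_add] using ha
  · simpa [sum_map, map_sum] using hSa

lemma IsPerfectlyHomogeneous.sDominates_normalized_blocks (he : IsPerfectlyHomogeneous e)
    {ζ μ : Ordinal} {S T : X →L[ℝ] Y} {x v : ℕ → X} {F : ℕ → Finset ℕ} {a : ℕ → ℕ → ℝ}
    {C D : ℝ} (hv : ∀ k, v k = ∑ n ∈ F k, a k n • x n) (hF : Pairwise (Disjoint on F))
    (ha : ∀ k, ‖∑ n ∈ F k, a k n • e n‖ = 1) (hFμ : ∀ G ∈ 𝒮.S ζ, G.biUnion F ∈ 𝒮.S μ)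
    (hC : ∀ c : ℕ → ℝ, ∀ F' ∈ 𝒮.S μ,
      ‖∑ n ∈ F', c n • e n‖ ≤ C * ‖∑ n ∈ F', c n • (S + T) (x n)‖)
    (hC0 : 0 < C) (hv0 : ∀ k, 0 < ‖v k‖) (hvD : ∀ k, ‖v k‖ ≤ D)
    (hSv : ∀ k, ‖S (v k)‖ ≤ ‖v k‖ * ((4 * C * D)⁻¹ * (1 / 2) ^ k)) :
    SDominates 𝒮 ζ (fun k => T (‖v k‖⁻¹ • v k)) e := by
  have hD : 0 < D := (hv0 0).trans_le (hvD 0)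
  refine ⟨max 1 (2 * C * D), le_max_left _ _, fun b G hG => ?_⟩
  set B := ‖∑ k ∈ G, b k • e k‖
  set t := ‖∑ k ∈ G, b k • T (‖v k‖⁻¹ • v k)‖
  have hsplit : ∑ k ∈ G, (b k * ‖v k‖⁻¹) • ∑ n ∈ F k, a k n • (S + T) (x n)
      = ∑ k ∈ G, b k • T (‖v k‖⁻¹ • v k) + ∑ k ∈ G, b k • S (‖v k‖⁻¹ • v k) := by
    simp only [hv, ← map_smul, ← map_sum, _root_.add_apply, smul_add, mul_smul,
      sum_add_distrib, add_comm]
  have hlower : B ≤ D * C * ‖∑ k ∈ G, (b k * ‖v k‖⁻¹) • ∑ n ∈ F k, a k n • (S + T) (x n)‖ :=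
    calc B ≤ D * ‖∑ k ∈ G, (b k * ‖v k‖⁻¹) • e k‖ := he.norm_sum_le_mul hD.le fun k _ => by
          rw [abs_mul, abs_inv, abs_norm, ← mul_assoc, mul_comm D, mul_assoc]
          refine le_mul_of_one_le_right (abs_nonneg _) ?_
          rw [le_mul_inv_iff₀ (hv0 k), one_mul]
          exact hvD k
      _ ≤ D * (C * _) := by
          gcongr
          exact he.norm_sum_smul_blocks_le (hF.set_pairwise _) (fun k _ => ha k)
            (fun c => hC c _ (hFμ G hG)) _
      _ = _ := by ring
  have hsmall : ‖∑ k ∈ G, b k • S (‖v k‖⁻¹ • v k)‖ ≤ B / (2 * C * D) := by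
    refine (he.norm_sum_smul_le_of_norm_le_geometric (η := (4 * C * D)⁻¹) (by positivity)
      (fun k => ?_) b G).trans_eq (by field_simp; ring)
    rw [map_smul, norm_smul, norm_inv, norm_norm, inv_mul_le_iff₀ (hv0 k)]
    exact hSv k
  have hB : B ≤ D * C * t + B / 2 :=
    calc B ≤ D * C * (t + B / (2 * C * D)) := by
          refine hlower.trans (mul_le_mul_of_nonneg_left ?_ (by positivity))
          rw [hsplit]
          exact (norm_add_le _ _).trans (add_le_add le_rfl hsmall)
      _ = D * C * t + B / 2 := by field_simp
  calc B ≤ 2 * C * D * t := by linarith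
    _ ≤ max 1 (2 * C * D) * t := by gcongr; exact le_max_right _ _

theorem memJS_add_of_composesInto (he : IsPerfectlyHomogeneous e) {ξ ζ μ : Ordinal}
    (hcomp : 𝒮.ComposesInto ξ ζ μ) {S T : X →L[ℝ] Y} (hS : MemJS 𝒮 ξ e S)
    (hT : MemJS 𝒮 ζ e T) : MemJS 𝒮 μ e (S + T) := by
  rintro x hx1 hxb ⟨D, hD, hxD⟩ ⟨C, hC1, hC⟩
  obtain ⟨h, hh⟩ := hcomp
  have hC0 : 0 < C := one_pos.trans_le hC1
  set δ := (C * max ‖S + T‖ 1)⁻¹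
  obtain ⟨a, F, m, hm, hhm, hQ, hFm⟩ := exists_successive_blocks
    (fun k (a : ℕ → ℝ) F => F ∈ 𝒮.S ξ ∧ ‖∑ n ∈ F, a n • e n‖ = 1 ∧
      ‖S (∑ n ∈ F, a n • x n)‖ < δ * ((4 * C * D)⁻¹ * (1 / 2) ^ k))
    (fun k => max (h k) (h (k + 1)))
    fun k m => hS.exists_block_norm_apply_lt he hx1 hxb ⟨D, hD, hxD⟩ m (by positivity)
  set v := fun k => ∑ n ∈ F k, a k n • x n
  have hFμ : ∀ k, F k ∈ 𝒮.S μ := fun k => by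
    -- `{k + 1}` rather than `{k}`: singletons of `S_ζ` must avoid `0`
    simpa using hh {k + 1} (𝒮.singleton_mem ζ (Nat.le_add_left 1 k)) (fun _ => F k)
      (by simp [(hQ k).1]) (by simp)
      (by simpa using fun n hn => (le_max_right _ _).trans (hhm k n hn))
  have hvδ : ∀ k, δ ≤ ‖v k‖ := fun k => (S + T).inv_le_norm_of_one_le_mul_norm_apply hC0 <| by
    simpa [v, (hQ k).2.1, map_sum] using hC (a k) (F k) (hFμ k)
  have hv0 : ∀ k, 0 < ‖v k‖ := fun k => (by positivity : 0 < δ).trans_le (hvδ k)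
  have hvD : ∀ k, ‖v k‖ ≤ D := fun k => by simpa [(hQ k).2.1] using hxD (a k) (F k)
  have hdisj := pairwise_disjoint_of_subset_Ico hm hFm
  refine hT (fun k => ‖v k‖⁻¹ • v k) (fun k => ?_)
    ((hxb.blocks hm hFm fun k => norm_pos_iff.mp (hv0 k)).smul fun k => inv_ne_zero (hv0 k).ne')
    (he.dominates_smul (he.dominates_blocks ⟨D, hD, hxD⟩ hdisj fun k => (hQ k).2.1)
      (by positivity : 0 < δ⁻¹) fun k => ?_)
    (he.sDominates_normalized_blocks (fun _ => rfl) hdisj (fun k => (hQ k).2.1) ?_ hC hC0 hv0 hvD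
      fun k => ?_)
  · simp [norm_smul, (hv0 k).ne']
  · rw [abs_inv, abs_norm]
    exact inv_anti₀ (by positivity) (hvδ k)
  · intro G hG
    refine hh G hG F (fun k _ => (hQ k).1) (fun k _ k' _ hkk' _ ha _ hb => ?_) fun k _ n hn => ?_
    · exact lt_of_mem_of_subset_Ico hm hFm hkk' ha hb
    · exact (le_max_left _ _).trans (hhm k n hn)
  · exact (hQ k).2.2.le.trans (by gcongr; exact hvδ k)

end JamesSingular

theorem stmt15_general (𝒮 : SchreierSystem) {X Y E : Type*}
    [NormedAddCommGroup X] [NormedSpace ℝ X]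
    [NormedAddCommGroup Y] [NormedSpace ℝ Y]
    [NormedAddCommGroup E] [NormedSpace ℝ E]
    (e : ℕ → E) (hE : (∃ p : ℝ, 1 ≤ p ∧ IsLpBasis p e) ∨ IsC0Basis e) :
    (∀ ξ ζ : Ordinal, 1 ≤ ξ → ξ < ω₁ → 1 ≤ ζ → ζ < ω₁ →
      ∀ S T : X →L[ℝ] Y, MemJS 𝒮 ξ e S → MemJS 𝒮 ζ e T →
        MemJS 𝒮 (ξ + ζ) e (S + T)) ∧
    (∀ ξ ζ : Ordinal, 1 ≤ ξ → ξ ≤ ω₁ → 1 ≤ ζ → ζ ≤ ω₁ → (ξ = ω₁ ∨ ζ = ω₁) →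
      ∀ S T : X →L[ℝ] Y, MemJS 𝒮 ξ e S → MemJS 𝒮 ζ e T →
        MemJS 𝒮 ω₁ e (S + T)) := by
  have he : IsPerfectlyHomogeneous e := by
    rcases hE with ⟨p, hp, hlp⟩ | hc0
    · exact hlp.isPerfectlyHomogeneous (by linarith)
    · exact hc0.isPerfectlyHomogeneous
  refine ⟨fun ξ ζ _ hξ _ hζ S T hS hT => ?_, fun ξ ζ _ _ _ _ _ S T hS hT => ?_⟩
  · exact memJS_add_of_composesInto he (𝒮.composesInto_add hξ hζ) hS hT
  · exact memJS_add_of_composesInto he (𝒮.composesInto_omega_one ξ ζ) hS hT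

/-- Let `e` be the canonical basis of `ℓ_p` (`1 ≤ p < ∞`) or `c₀`.
If `S ∈ JS_{e,ξ}(X,Y)` and `T ∈ JS_{e,ζ}(X,Y)` for countable ordinals `1 ≤ ξ, ζ < ω₁`,
then `S + T ∈ JS_{e,ξ+ζ}(X,Y)`.  Moreover, if `ξ = ω₁` or `ζ = ω₁` then
`S + T ∈ JS_{e,ω₁}(X,Y)`. -/
theorem stmt15 (𝒮 : SchreierSystem) {X Y E : Type*}
    [NormedAddCommGroup X] [NormedSpace ℝ X] [CompleteSpace X]
    [NormedAddCommGroup Y] [NormedSpace ℝ Y] [CompleteSpace Y]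
    [NormedAddCommGroup E] [NormedSpace ℝ E] [CompleteSpace E]
    (e : ℕ → E) (hE : (∃ p : ℝ, 1 ≤ p ∧ IsLpBasis p e) ∨ IsC0Basis e) :
    (∀ ξ ζ : Ordinal, 1 ≤ ξ → ξ < ω₁ → 1 ≤ ζ → ζ < ω₁ →
      ∀ S T : X →L[ℝ] Y, MemJS 𝒮 ξ e S → MemJS 𝒮 ζ e T →
        MemJS 𝒮 (ξ + ζ) e (S + T)) ∧
    (∀ ξ ζ : Ordinal, 1 ≤ ξ → ξ ≤ ω₁ → 1 ≤ ζ → ζ ≤ ω₁ → (ξ = ω₁ ∨ ζ = ω₁) →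
      ∀ S T : X →L[ℝ] Y, MemJS 𝒮 ξ e S → MemJS 𝒮 ζ e T →
        MemJS 𝒮 ω₁ e (S + T)) :=
  stmt15_general 𝒮 e hE
end

section
/- Let X and Y be Banach spaces and let Z be a Banach space containing complemented copies of X and Y. For each closed subideal I of L(X,Y), define Ψ(I) to be the closed linear span in L(Z) of all operators of the form B T A where T ∈ I, A ∈ L(Z,X), B ∈ L(Y,Z). Then Ψ is an order-preserving injection from the set of closed subideals of L(X,Y) into the set of closed ideals of L(Z): I ⊆ J if and only if Ψ(I) ⊆ Ψ(J). -/
/-- `I` is a closed subideal of `L(X,Y)`: a norm-closed linear subspace with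
`B ∘ T ∘ A ∈ I` for all `T ∈ I`, `A ∈ L(X)`, `B ∈ L(Y)`. -/
def IsClosedSubideal {X Y : Type*}
    [NormedAddCommGroup X] [NormedSpace ℝ X] [NormedAddCommGroup Y] [NormedSpace ℝ Y]
    (I : Set (X →L[ℝ] Y)) : Prop :=
  IsClosed I ∧ (0 : X →L[ℝ] Y) ∈ I ∧
    (∀ S ∈ I, ∀ T ∈ I, S + T ∈ I) ∧ (∀ c : ℝ, ∀ T ∈ I, c • T ∈ I) ∧
    ∀ T ∈ I, ∀ (A : X →L[ℝ] X) (B : Y →L[ℝ] Y), B.comp (T.comp A) ∈ I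

/-- `Ψ(I)`: the closed linear span in `L(Z)` of all operators factoring as `B ∘ T ∘ A`
with `T ∈ I`, `A ∈ L(Z,X)`, `B ∈ L(Y,Z)`. -/
def Psi {X Y Z : Type*}
    [NormedAddCommGroup X] [NormedSpace ℝ X] [NormedAddCommGroup Y] [NormedSpace ℝ Y]
    [NormedAddCommGroup Z] [NormedSpace ℝ Z]
    (I : Set (X →L[ℝ] Y)) : Set (Z →L[ℝ] Z) :=
  closure (Submodule.span ℝ {W : Z →L[ℝ] Z |
    ∃ T ∈ I, ∃ (A : Z →L[ℝ] X) (B : Y →L[ℝ] Z), W = B.comp (T.comp A)} : Set (Z →L[ℝ] Z))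

/-!
`Ψ(I)` is the closed span of a set of operators that is stable under composition with
operators on `Z`, hence a closed ideal, and `Ψ` is clearly monotone. Conversely, for
`E : X → Z` and `P : Z → Y` the compression `W ↦ P ∘ W ∘ E` sends each generator `B ∘ T ∘ A`
of `Ψ(J)` to `(P ∘ B) ∘ T ∘ (A ∘ E) ∈ J`, so by linearity and continuity it maps all of `Ψ(J)`
into the closed subspace `J`. Any `T ∈ I` is the compression `QY ∘ (JY ∘ T ∘ QX) ∘ JX` of an
element of `Ψ(I) ⊆ Ψ(J)`.
-/

open Set ContinuousLinearMap

theorem Set.MapsTo.closure_span {R M N : Type*} [Semiring R]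
    [AddCommMonoid M] [Module R M] [TopologicalSpace M]
    [AddCommMonoid N] [Module R N] [TopologicalSpace N]
    {f : M →L[R] N} {s : Set M} {p : Submodule R N} (hp : IsClosed (p : Set N))
    (h : MapsTo f s p) : MapsTo f (closure (Submodule.span R s)) p := by
  have hspan : MapsTo f (Submodule.span R s) p := fun _ hx ↦
    (Submodule.span_le (p := p.comap (f : M →ₗ[R] N))).2 h hx
  simpa only [hp.closure_eq] using hspan.closure f.continuous

section

variable {X Y Z : Type*}
  [NormedAddCommGroup X] [NormedSpace ℝ X] [NormedAddCommGroup Y] [NormedSpace ℝ Y]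
  [NormedAddCommGroup Z] [NormedSpace ℝ Z]

namespace IsClosedSubideal

def toSubmodule {I : Set (X →L[ℝ] Y)} (hI : IsClosedSubideal I) : Submodule ℝ (X →L[ℝ] Y) where
  carrier := I
  zero_mem' := hI.2.1
  add_mem' ha hb := hI.2.2.1 _ ha _ hb
  smul_mem' := hI.2.2.2.1

end IsClosedSubideal

theorem isClosedSubideal_closure_span {S : Set (X →L[ℝ] Y)}
    (hS : ∀ T ∈ S, ∀ (A : X →L[ℝ] X) (B : Y →L[ℝ] Y), B.comp (T.comp A) ∈ S) :
    IsClosedSubideal (closure (Submodule.span ℝ S : Set (X →L[ℝ] Y))) := by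
  set p := (Submodule.span ℝ S).topologicalClosure
  have hp_closed : IsClosed (p : Set (X →L[ℝ] Y)) := Submodule.isClosed_topologicalClosure _
  rw [← Submodule.topologicalClosure_coe]
  refine ⟨hp_closed, p.zero_mem, fun _ h _ h' ↦ p.add_mem h h', fun c _ h ↦ p.smul_mem c h,
    fun T hT A B ↦ ?_⟩
  rw [Submodule.topologicalClosure_coe] at hT
  refine MapsTo.closure_span (f := postcomp X B ∘L precomp Y A) hp_closed (fun W hW ↦ ?_) hT
  exact Submodule.le_topologicalClosure _ (Submodule.subset_span (hS W hW A B))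

theorem isClosedSubideal_psi (I : Set (X →L[ℝ] Y)) : IsClosedSubideal (Psi (Z := Z) I) := by
  refine isClosedSubideal_closure_span ?_
  rintro _ ⟨T, hT, A, B, rfl⟩ A' B'
  exact ⟨T, hT, A.comp A', B'.comp B, rfl⟩

theorem psi_mono {I J : Set (X →L[ℝ] Y)} (hIJ : I ⊆ J) : Psi (Z := Z) I ⊆ Psi (Z := Z) J :=
  closure_mono <| Submodule.span_mono <| by
    rintro _ ⟨T, hT, A, B, rfl⟩
    exact ⟨T, hIJ hT, A, B, rfl⟩

theorem comp_comp_mem_of_mem_psi {J : Set (X →L[ℝ] Y)} (hJ : IsClosedSubideal J)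
    (E : X →L[ℝ] Z) (P : Z →L[ℝ] Y) {W : Z →L[ℝ] Z} (hW : W ∈ Psi (Z := Z) J) :
    P.comp (W.comp E) ∈ J := by
  refine MapsTo.closure_span (f := postcomp X P ∘L precomp Z E) (p := hJ.toSubmodule) hJ.1 ?_ hW
  rintro _ ⟨T, hT, A, B, rfl⟩
  exact hJ.2.2.2.2 T hT (A.comp E) (P.comp B)

theorem subset_of_psi_subset (JX : X →L[ℝ] Z) (QX : Z →L[ℝ] X)
    (hX : QX.comp JX = ContinuousLinearMap.id ℝ X)
    (JY : Y →L[ℝ] Z) (QY : Z →L[ℝ] Y) (hY : QY.comp JY = ContinuousLinearMap.id ℝ Y)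
    {I J : Set (X →L[ℝ] Y)} (hJ : IsClosedSubideal J) (hIJ : Psi (Z := Z) I ⊆ Psi (Z := Z) J) :
    I ⊆ J := by
  intro T hT
  have hW : JY.comp (T.comp QX) ∈ Psi (Z := Z) J :=
    hIJ (subset_closure (Submodule.subset_span ⟨T, hT, QX, JY, rfl⟩))
  have hcompress : QY.comp ((JY.comp (T.comp QX)).comp JX) = T := by
    rw [← comp_assoc, ← comp_assoc, hY, id_comp, comp_assoc, hX, comp_id]
  simpa only [hcompress] using comp_comp_mem_of_mem_psi hJ JX QY hW

end

theorem stmt16_general {X Y Z : Type*}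
    [NormedAddCommGroup X] [NormedSpace ℝ X]
    [NormedAddCommGroup Y] [NormedSpace ℝ Y]
    [NormedAddCommGroup Z] [NormedSpace ℝ Z]
    (JX : X →L[ℝ] Z) (QX : Z →L[ℝ] X) (hX : QX.comp JX = ContinuousLinearMap.id ℝ X)
    (JY : Y →L[ℝ] Z) (QY : Z →L[ℝ] Y) (hY : QY.comp JY = ContinuousLinearMap.id ℝ Y)
    (I J : Set (X →L[ℝ] Y)) (hJ : IsClosedSubideal J) :
    IsClosedSubideal (Psi (Z := Z) I) ∧ (I ⊆ J ↔ Psi (Z := Z) I ⊆ Psi (Z := Z) J) :=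
  ⟨isClosedSubideal_psi I, psi_mono, subset_of_psi_subset JX QX hX JY QY hY hJ⟩

/-- Let `X`, `Y` be Banach spaces and `Z` a Banach space containing
complemented copies of `X` and `Y`.  Then `Ψ` maps each closed subideal of `L(X,Y)`
to a closed ideal of `L(Z)`, and is an order-preserving injection:
`I ⊆ J ↔ Ψ(I) ⊆ Ψ(J)`. -/
theorem stmt16 {X Y Z : Type*}
    [NormedAddCommGroup X] [NormedSpace ℝ X] [CompleteSpace X]
    [NormedAddCommGroup Y] [NormedSpace ℝ Y] [CompleteSpace Y]
    [NormedAddCommGroup Z] [NormedSpace ℝ Z] [CompleteSpace Z]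
    (JX : X →L[ℝ] Z) (QX : Z →L[ℝ] X) (hX : QX.comp JX = ContinuousLinearMap.id ℝ X)
    (JY : Y →L[ℝ] Z) (QY : Z →L[ℝ] Y) (hY : QY.comp JY = ContinuousLinearMap.id ℝ Y)
    (I J : Set (X →L[ℝ] Y)) (hI : IsClosedSubideal I) (hJ : IsClosedSubideal J) :
    IsClosedSubideal (Psi (Z := Z) I) ∧ (I ⊆ J ↔ Psi (Z := Z) I ⊆ Psi (Z := Z) J) :=
  stmt16_general JX QX hX JY QY hY I J hJ
end

section
/- Let 1 ≤ p ≤ q < ∞ and let e = (e_n) be the canonical basis of ℓ_p. Then every normalized basic sequence in ℓ_q admits a subsequence that is dominated by (e_n); consequently, for every Banach space Y and every 1 ≤ ξ ≤ ω₁, JS_{e,ξ}(ℓ_q, Y) = WS_{e,ξ}(ℓ_q, Y). -/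
open Ordinal Filter Topology

/-!
Every normalized basic sequence in `ℓ_q` has a coordinatewise convergent subsequence, with limit
`y ∈ ℓ_q`. By a gliding hump, a further subsequence of `x_n - y` is a summable perturbation of a
disjointly supported sequence, hence has an upper `ℓ_q` estimate. For `q > 1` this forces `y = 0`:
the average of `M` consecutive terms `x_n` is close to `y`, the alternating average of `2M` terms
is close to `0`, and the former is a basis projection of the latter. An upper `ℓ_q` estimate is an
upper `ℓ_p` estimate for `p ≤ q`, i.e. domination by the `ℓ_p` basis; for `q = 1` every normalized
sequence has one. Since both the `ℓ_p` basis and the Schreier families are spreading,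
`S_ξ`-domination of `e` passes to subsequences, so an operator outside `WS` is already outside `JS`.
-/

open Finset
open scoped ENNReal

lemma Function.Injective.sum_image_extend {M γ : Type*} [AddCommMonoid M] [Zero γ]
    {φ : ℕ → ℕ} (hφ : Function.Injective φ) (g : ℕ → γ → M) (a : ℕ → γ) (F : Finset ℕ) :
    ∑ i ∈ F.image φ, g i (Function.extend φ a 0 i) = ∑ t ∈ F, g (φ t) (a t) := by
  rw [sum_image fun s _ t _ h => hφ h]
  simp only [hφ.extend_apply]

section Subsequences

variable {X : Type*} [NormedAddCommGroup X] [NormedSpace ℝ X]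

lemma StrictMono.sum_range_extend_smul {φ : ℕ → ℕ} (hφ : StrictMono φ) (a : ℕ → ℝ) (x : ℕ → X)
    (m : ℕ) :
    ∑ i ∈ range (φ m), Function.extend φ a 0 i • x i = ∑ t ∈ range m, a t • x (φ t) := by
  rw [← hφ.injective.sum_image_extend (fun i c => c • x i)]
  refine (sum_subset (fun i hi => ?_) fun i hi hni => ?_).symm
  · obtain ⟨t, ht, rfl⟩ := mem_image.1 hi
    exact mem_range.2 (hφ (mem_range.1 ht))
  · rw [Function.extend_apply' _ _ _ ?_, Pi.zero_apply, zero_smul]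
    rintro ⟨t, rfl⟩
    exact hni (mem_image_of_mem φ (mem_range.2 (hφ.lt_iff_lt.1 (mem_range.1 hi))))

lemma IsBasicSeq.comp_strictMono {x : ℕ → X} (hx : IsBasicSeq x) {φ : ℕ → ℕ}
    (hφ : StrictMono φ) : IsBasicSeq fun t => x (φ t) := by
  obtain ⟨hx0, K, hK1, hK⟩ := hx
  refine ⟨fun t => hx0 (φ t), K, hK1, fun a m n hmn => ?_⟩
  simp only [← hφ.sum_range_extend_smul]
  exact hK _ _ _ (hφ.monotone hmn)

lemma IsLpBasis.comp_injective {p : ℝ} {e : ℕ → X} (he : IsLpBasis p e) {φ : ℕ → ℕ}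
    (hφ : Function.Injective φ) : IsLpBasis p fun t => e (φ t) := by
  intro a F
  have h := he (Function.extend φ a 0) (F.image φ)
  rwa [hφ.sum_image_extend (fun i c => c • e i), hφ.sum_image_extend (fun _ c => |c| ^ p)] at h

end Subsequences

lemma SchreierSystem.image_mem (𝒮 : SchreierSystem) {φ : ℕ → ℕ} (hφ : StrictMono φ)
    (ξ : Ordinal) {F : Finset ℕ} (hF : F ∈ 𝒮.S ξ) : F.image φ ∈ 𝒮.S ξ := by
  have hmin : ∀ {n : ℕ} {F : Finset ℕ}, (∀ a ∈ F, n ≤ a) → ∀ a ∈ F.image φ, n ≤ a := by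
    intro n F h a ha
    obtain ⟨b, hb, rfl⟩ := mem_image.1 ha
    exact (h b hb).trans hφ.le_apply
  induction ξ using WellFoundedLT.induction generalizing F with
  | ind ξ ih =>
      rcases le_or_gt ω₁ ξ with hξ | hξ
      · rw [𝒮.top ξ hξ]
        trivial
      rcases Ordinal.zero_or_succ_or_isSuccLimit ξ with rfl | ⟨ζ, rfl⟩ | hlim
      · rw [𝒮.zero] at hF ⊢
        exact card_image_le.trans hF
      · have hζ := Order.lt_succ ζ
        rw [Order.succ_eq_add_one, 𝒮.succ ζ (hζ.trans hξ)] at hF ⊢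
        obtain rfl | ⟨n, f, hf, hord, hn, rfl⟩ := hF
        · exact Or.inl (image_empty φ)
        refine Or.inr ⟨n, fun i => (f i).image φ, fun i => ih ζ hζ (hf i), ?_, hmin hn,
          biUnion_image⟩
        intro i j hij a ha b hb
        simp only [mem_image] at ha hb
        obtain ⟨a, ha, rfl⟩ := ha
        obtain ⟨b, hb, rfl⟩ := hb
        exact hφ (hord i j hij a ha b hb)
      · obtain ⟨ζs, hζs, -, hsup, hS⟩ := 𝒮.limit ξ hlim hξ
        rw [hS] at hF ⊢
        obtain ⟨n, hFn, hn⟩ := hF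
        have hlt : ζs n < ξ :=
          hsup ▸ (hζs n.lt_succ_self).trans_le (Ordinal.le_iSup ζs (n + 1))
        exact ⟨n, ih _ hlt hFn, hmin hn⟩

lemma SDominates.comp_strictMono {𝒮 : SchreierSystem} {ξ : Ordinal} {p : ℝ}
    {Y E : Type*} [NormedAddCommGroup Y] [NormedSpace ℝ Y]
    [NormedAddCommGroup E] [NormedSpace ℝ E] {e : ℕ → E} (he : IsLpBasis p e)
    {y : ℕ → Y} (hy : SDominates 𝒮 ξ y e) {φ : ℕ → ℕ} (hφ : StrictMono φ) :
    SDominates 𝒮 ξ (fun t => y (φ t)) e := by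
  obtain ⟨C, hC1, hC⟩ := hy
  refine ⟨C, hC1, fun a F hF => ?_⟩
  have h := hC (Function.extend φ a 0) _ (𝒮.image_mem hφ ξ hF)
  rw [hφ.injective.sum_image_extend (fun i c => c • e i),
    hφ.injective.sum_image_extend (fun i c => c • y i), he.comp_injective hφ.injective] at h
  rwa [he]

def HasUpperLpEstimate {X : Type*} [NormedAddCommGroup X] [NormedSpace ℝ X]
    (p C : ℝ) (x : ℕ → X) : Prop :=
  ∀ (a : ℕ → ℝ) (F : Finset ℕ), ‖∑ n ∈ F, a n • x n‖ ≤ C * (∑ n ∈ F, |a n| ^ p) ^ (1 / p)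

lemma abs_le_rpow_sum_abs_rpow {p : ℝ} (hp : 0 < p) (a : ℕ → ℝ) {F : Finset ℕ} {t : ℕ}
    (ht : t ∈ F) : |a t| ≤ (∑ n ∈ F, |a n| ^ p) ^ (1 / p) := by
  calc |a t| = (|a t| ^ p) ^ (1 / p) := by
        rw [← Real.rpow_mul (abs_nonneg _), mul_one_div_cancel hp.ne', Real.rpow_one]
    _ ≤ (∑ n ∈ F, |a n| ^ p) ^ (1 / p) := by
        gcongr
        exact single_le_sum (fun n _ => Real.rpow_nonneg (abs_nonneg (a n)) p) ht

lemma rpow_sum_abs_rpow_le_rpow_sum_abs_rpow {p q : ℝ} (hp : 0 < p) (hpq : p ≤ q) (a : ℕ → ℝ)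
    (F : Finset ℕ) : (∑ n ∈ F, |a n| ^ q) ^ (1 / q) ≤ (∑ n ∈ F, |a n| ^ p) ^ (1 / p) := by
  have hq : 0 < q := hp.trans_le hpq
  set A := (∑ n ∈ F, |a n| ^ p) ^ (1 / p)
  have hA : 0 ≤ A := by positivity
  have hAp : ∑ n ∈ F, |a n| ^ p = A ^ p := by
    rw [← Real.rpow_mul (by positivity), one_div_mul_cancel hp.ne', Real.rpow_one]
  have hsum : ∑ n ∈ F, |a n| ^ q ≤ A ^ q :=
    calc ∑ n ∈ F, |a n| ^ q = ∑ n ∈ F, |a n| ^ p * |a n| ^ (q - p) := by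
          refine sum_congr rfl fun n _ => ?_
          rw [← Real.rpow_add' (abs_nonneg _) (by linarith), _root_.add_sub_cancel]
      _ ≤ ∑ n ∈ F, |a n| ^ p * A ^ (q - p) := by
          gcongr with n hn
          exact abs_le_rpow_sum_abs_rpow hp a hn
      _ = A ^ q := by
          rw [← sum_mul, hAp, ← Real.rpow_add' hA (by linarith), _root_.add_sub_cancel]
  calc (∑ n ∈ F, |a n| ^ q) ^ (1 / q) ≤ (A ^ q) ^ (1 / q) := by gcongr
    _ = A := by rw [← Real.rpow_mul hA, mul_one_div_cancel hq.ne', Real.rpow_one]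

namespace HasUpperLpEstimate

variable {X : Type*} [NormedAddCommGroup X] [NormedSpace ℝ X] {p q C : ℝ} {x : ℕ → X}

lemma nonneg (h : HasUpperLpEstimate p C x) : 0 ≤ C := by
  have h0 := h 1 {0}
  simp only [sum_singleton, Pi.one_apply, one_smul, abs_one, Real.one_rpow, mul_one] at h0
  exact (norm_nonneg _).trans h0

lemma dominates {E : Type*} [NormedAddCommGroup E] [NormedSpace ℝ E] {e : ℕ → E}
    (he : IsLpBasis p e) (h : HasUpperLpEstimate p C x) (hC : 0 < C) : Dominates e x :=
  ⟨C, hC, fun a F => he a F ▸ h a F⟩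

lemma of_exponent_le (h : HasUpperLpEstimate q C x) (hp : 0 < p) (hpq : p ≤ q) :
    HasUpperLpEstimate p C x := fun a F =>
  (h a F).trans <|
    mul_le_mul_of_nonneg_left (rpow_sum_abs_rpow_le_rpow_sum_abs_rpow hp hpq a F) h.nonneg

lemma of_sum_norm_sub_le {u : ℕ → X} {D : ℝ} (hu : HasUpperLpEstimate p C u) (hp : 0 < p)
    (hD : ∀ F : Finset ℕ, ∑ t ∈ F, ‖x t - u t‖ ≤ D) : HasUpperLpEstimate p (C + D) x := by
  intro a F
  set A := (∑ n ∈ F, |a n| ^ p) ^ (1 / p)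
  have hA : 0 ≤ A := by positivity
  have hsplit : ∑ t ∈ F, a t • x t = ∑ t ∈ F, a t • u t + ∑ t ∈ F, a t • (x t - u t) := by
    rw [← sum_add_distrib]
    simp only [smul_sub, _root_.add_sub_cancel]
  have herr : ‖∑ t ∈ F, a t • (x t - u t)‖ ≤ A * D :=
    calc ‖∑ t ∈ F, a t • (x t - u t)‖ ≤ ∑ t ∈ F, |a t| * ‖x t - u t‖ := by
          simpa only [norm_smul, Real.norm_eq_abs] using norm_sum_le F fun t => a t • (x t - u t)
      _ ≤ ∑ t ∈ F, A * ‖x t - u t‖ := by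
          gcongr with t ht
          exact abs_le_rpow_sum_abs_rpow hp a ht
      _ ≤ A * D := by rw [← mul_sum]; exact mul_le_mul_of_nonneg_left (hD F) hA
  calc ‖∑ t ∈ F, a t • x t‖ ≤ C * A + A * D := by
        rw [hsplit]; exact (norm_add_le _ _).trans (add_le_add (hu a F) herr)
    _ = (C + D) * A := by ring

end HasUpperLpEstimate

lemma hasUpperLpEstimate_one {X : Type*} [NormedAddCommGroup X] [NormedSpace ℝ X] {x : ℕ → X}
    (hx : ∀ n, ‖x n‖ ≤ 1) : HasUpperLpEstimate 1 1 x := fun a F => by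
  simp only [one_div_one, Real.rpow_one, one_mul]
  calc ‖∑ n ∈ F, a n • x n‖ ≤ ∑ n ∈ F, |a n| * ‖x n‖ := by
        simpa only [norm_smul, Real.norm_eq_abs] using norm_sum_le F fun n => a n • x n
    _ ≤ ∑ n ∈ F, |a n| := by
        gcongr with n
        exact mul_le_of_le_one_right (abs_nonneg _) (hx n)

lemma tendsto_two_mul_mul_inv_rpow {q : ℝ} (hq : 1 < q) :
    Tendsto (fun M : ℕ => (2 * M * (M : ℝ)⁻¹ ^ q) ^ (1 / q)) atTop (𝓝 0) := by
  have hq0 : 0 < q := one_pos.trans hq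
  have hlim : Tendsto (fun r : ℝ => 2 * r ^ (-(q - 1))) atTop (𝓝 (2 * 0)) :=
    (tendsto_rpow_neg_atTop (by linarith)).const_mul 2
  have heq : (fun r : ℝ => 2 * r ^ (-(q - 1))) =ᶠ[atTop] fun r => 2 * r * r⁻¹ ^ q := by
    filter_upwards [eventually_gt_atTop 0] with r hr
    rw [Real.inv_rpow hr.le, ← Real.rpow_neg hr.le, mul_assoc, neg_sub, Real.rpow_sub hr,
      Real.rpow_one, Real.rpow_neg hr.le, div_eq_mul_inv]
  have h := ((hlim.congr' heq).comp tendsto_natCast_atTop_atTop).rpow_const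
    (Or.inr (by positivity : (0 : ℝ) ≤ 1 / q))
  rwa [mul_zero, Real.zero_rpow (by positivity)] at h

lemma eq_zero_of_isBasicSeq_add {X : Type*} [NormedAddCommGroup X] [NormedSpace ℝ X]
    {q C : ℝ} (hq : 1 < q) {y : X} {v : ℕ → X} (hx : IsBasicSeq fun t => y + v t)
    (hv : HasUpperLpEstimate q C v) : y = 0 := by
  obtain ⟨-, K, hK1, hK⟩ := hx
  have hC := hv.nonneg
  suffices h : ∀ M : ℕ, 0 < M → ‖y‖ ≤ (K + 1) * C * (2 * M * (M : ℝ)⁻¹ ^ q) ^ (1 / q) by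
    refine norm_le_zero_iff.1 (ge_of_tendsto ?_ (eventually_atTop.2 ⟨1, h⟩))
    simpa using (tendsto_two_mul_mul_inv_rpow hq).const_mul ((K + 1) * C)
  intro M hM
  -- `a` averages the first `M` terms and subtracts the average of the next `M`
  set a : ℕ → ℝ := fun t => (if t < M then 1 else -1) / M
  have hMpos : (0 : ℝ) < M := Nat.cast_pos.2 hM
  have habs : ∀ t, |a t| = (M : ℝ)⁻¹ := fun t => by
    simp only [a, abs_div, Nat.abs_cast, apply_ite, abs_neg, abs_one, ite_self, one_div]
  have hsum : ∀ n, ∑ t ∈ range n, |a t| ^ q = n * (M : ℝ)⁻¹ ^ q := fun n => by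
    simp only [habs, sum_const, card_range, _root_.nsmul_eq_mul]
  have ha₁ : ∑ t ∈ range M, a t = 1 := by
    rw [sum_congr rfl fun t ht => show a t = 1 / M by simp only [a, if_pos (mem_range.1 ht)],
      sum_const, card_range, _root_.nsmul_eq_mul, mul_one_div_cancel hMpos.ne']
  have ha₂ : ∑ t ∈ range (2 * M), a t = 0 := by
    rw [two_mul, sum_range_add, ha₁]
    simp only [a, show ∀ t, ¬ M + t < M by omega, if_false, sum_const, card_range,
      _root_.nsmul_eq_mul]
    field_simp
    ring
  obtain ⟨ρ, hρ⟩ : ∃ ρ, ρ = (2 * M * (M : ℝ)⁻¹ ^ q) ^ (1 / q) := ⟨_, rfl⟩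
  have hv₁ : ‖∑ t ∈ range M, a t • v t‖ ≤ C * ρ := by
    refine (hv a _).trans (mul_le_mul_of_nonneg_left ?_ hC)
    rw [hρ, hsum]
    gcongr
    linarith
  have hv₂ : ‖∑ t ∈ range (2 * M), a t • v t‖ ≤ C * ρ := by
    have h := hv a (range (2 * M))
    rwa [hsum, Nat.cast_mul, Nat.cast_ofNat, ← hρ] at h
  have hS (n : ℕ) : ∑ t ∈ range n, a t • (y + v t) =
      (∑ t ∈ range n, a t) • y + ∑ t ∈ range n, a t • v t := by
    simp only [smul_add, sum_add_distrib, sum_smul]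
  have hbasic := hK a M (2 * M) (by omega)
  rw [hS, hS, ha₁, ha₂, one_smul, zero_smul, zero_add] at hbasic
  calc ‖y‖ ≤ ‖y + ∑ t ∈ range M, a t • v t‖ + ‖∑ t ∈ range M, a t • v t‖ :=
        norm_le_add_norm_add _ _
    _ ≤ K * (C * ρ) + C * ρ :=
        add_le_add (hbasic.trans (mul_le_mul_of_nonneg_left hv₂ (by linarith))) hv₁
    _ = (K + 1) * C * (2 * M * (M : ℝ)⁻¹ ^ q) ^ (1 / q) := by rw [hρ]; ring

namespace lp

section Disjoint

variable {α : Type*} {E : α → Type*} [∀ i, NormedAddCommGroup (E i)] {P : ℝ≥0∞}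

lemma norm_add_rpow_of_disjoint (hP : 0 < P.toReal) {f g : lp E P}
    (hfg : ∀ i, f i = 0 ∨ g i = 0) :
    ‖f + g‖ ^ P.toReal = ‖f‖ ^ P.toReal + ‖g‖ ^ P.toReal := by
  simp only [lp.norm_rpow_eq_tsum hP]
  rw [← ((lp.memℓp f).summable hP).tsum_add ((lp.memℓp g).summable hP)]
  congr 1
  funext i
  rcases hfg i with h | h <;> simp [h, Real.zero_rpow hP.ne']

variable [∀ i, NormedSpace ℝ (E i)] [Fact (1 ≤ P)]

lemma norm_sum_smul_rpow_of_disjoint (hP : 0 < P.toReal) {u : ℕ → lp E P}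
    (hu : Pairwise fun s t => ∀ i, u s i = 0 ∨ u t i = 0) (a : ℕ → ℝ) (F : Finset ℕ) :
    ‖∑ t ∈ F, a t • u t‖ ^ P.toReal = ∑ t ∈ F, |a t| ^ P.toReal * ‖u t‖ ^ P.toReal := by
  classical
  induction F using Finset.induction_on with
  | empty => simp [Real.zero_rpow hP.ne']
  | insert t F htF ih =>
    rw [sum_insert htF, sum_insert htF, norm_add_rpow_of_disjoint hP, ih, norm_smul,
      Real.norm_eq_abs, Real.mul_rpow (abs_nonneg _) (norm_nonneg _)]
    intro i
    by_cases h : u t i = 0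
    · left
      simp [h]
    · right
      rw [lp.coeFn_sum, Finset.sum_apply]
      refine sum_eq_zero fun s hs => ?_
      have hs0 := (hu (ne_of_mem_of_not_mem hs htF).symm i).resolve_left h
      simp [hs0]

end Disjoint

section Sequences

variable {E : ℕ → Type*} [∀ i, NormedAddCommGroup (E i)] {P : ℝ≥0∞}

lemma sum_single_apply (f : ∀ i, E i) (s : Finset ℕ) (j : ℕ) :
    (∑ i ∈ s, lp.single P i (f i)) j = if j ∈ s then f j else 0 := by
  rw [lp.coeFn_sum, Finset.sum_apply]
  exact sum_pi_single ..

variable [Fact (1 ≤ P)]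

lemma norm_sum_single_le (hP : 0 < P.toReal) (f : lp E P) (s : Finset ℕ) :
    ‖∑ i ∈ s, lp.single P i (f i)‖ ≤ ‖f‖ := by
  rw [← Real.rpow_le_rpow_iff (norm_nonneg _) (norm_nonneg _) hP, lp.norm_sum_single hP]
  exact lp.sum_rpow_le_norm_rpow hP f s

lemma exists_subseq_near_disjoint (hP : P ≠ ⊤) {z : ℕ → lp E P}
    (hz : Tendsto (fun k => ⇑(z k)) atTop (𝓝 0)) {δ : ℕ → ℝ} (hδ : ∀ t, 0 < δ t) :
    ∃ k : ℕ → ℕ, StrictMono k ∧ ∃ u : ℕ → lp E P,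
      (Pairwise fun s t => ∀ i, u s i = 0 ∨ u t i = 0) ∧ (∀ t, ‖u t‖ ≤ ‖z (k t)‖) ∧
      ∀ t, ‖z (k t) - u t‖ ≤ δ t := by
  have hP0 : 0 < P.toReal := ENNReal.toReal_pos (zero_lt_one.trans_le Fact.out).ne' hP
  have hhead (N : ℕ) : ∀ ε > 0, ∀ᶠ k in atTop, ‖∑ i ∈ range N, lp.single P i (z k i)‖ ≤ ε := by
    have hc : Continuous fun f : ∀ i, E i => ∑ i ∈ range N, lp.single P i (f i) :=
      continuous_finsetSum _ fun i _ => (lp.isometry_single i).continuous.comp (continuous_apply i)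
    have h := ((hc.tendsto 0).comp hz).norm
    simp only [Pi.zero_apply, lp.single_zero, sum_const_zero, norm_zero] at h
    exact fun ε hε => h.eventually (eventually_le_nhds hε)
  have htail (f : lp E P) :
      ∀ ε > 0, ∀ᶠ N in atTop, ‖f - ∑ i ∈ range N, lp.single P i (f i)‖ ≤ ε := by
    have h := tendsto_iff_norm_sub_tendsto_zero.1 (lp.hasSum_single hP f).tendsto_sum_nat
    exact fun ε hε => (h.eventually (eventually_le_nhds hε)).mono fun N hN => by
      rwa [norm_sub_rev]
  have hstep (t : ℕ) (kN : ℕ × ℕ) : ∃ kN' : ℕ × ℕ, kN.1 < kN'.1 ∧ kN.2 < kN'.2 ∧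
      ‖∑ i ∈ range kN.2, lp.single P i (z kN'.1 i)‖ ≤ δ t / 2 ∧
      ‖z kN'.1 - ∑ i ∈ range kN'.2, lp.single P i (z kN'.1 i)‖ ≤ δ t / 2 := by
    obtain ⟨k, hk, hkt⟩ :=
      ((eventually_gt_atTop kN.1).and (hhead kN.2 _ (half_pos (hδ t)))).exists
    obtain ⟨N, hN, hNt⟩ :=
      ((eventually_gt_atTop kN.2).and (htail (z k) _ (half_pos (hδ t)))).exists
    exact ⟨(k, N), hk, hN, hkt, hNt⟩
  choose next hnext₁ hnext₂ hhead' htail' using hstep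
  -- `s t = (k (t - 1), N t)`: the block of `z (k t)` kept in `u t` is `[N t, N (t + 1))`
  let s : ℕ → ℕ × ℕ := fun t => Nat.rec (0, 0) (fun t kN => next t kN) t
  set k : ℕ → ℕ := fun t => (s (t + 1)).1
  set N : ℕ → ℕ := fun t => (s t).2
  have hN : StrictMono N := strictMono_nat_of_lt_succ fun t => hnext₂ t (s t)
  refine ⟨k, strictMono_nat_of_lt_succ fun t => hnext₁ (t + 1) (s (t + 1)),
    fun t => ∑ i ∈ Ico (N t) (N (t + 1)), lp.single P i (z (k t) i), ?_, fun t => ?_, fun t => ?_⟩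
  · intro t t' hne i
    simp only [sum_single_apply]
    by_cases ht : i ∈ Ico (N t) (N (t + 1))
    · refine Or.inr (if_neg fun ht' => ?_)
      rw [mem_Ico] at ht ht'
      rcases hne.lt_or_gt with hlt | hlt
      · have := hN.monotone (show t + 1 ≤ t' by omega); omega
      · have := hN.monotone (show t' + 1 ≤ t by omega); omega
    · exact Or.inl (if_neg ht)
  · exact norm_sum_single_le hP0 _ _
  · dsimp only
    rw [sum_Ico_eq_sub _ (hN t.lt_succ_self).le]
    calc ‖z (k t) - (∑ i ∈ range (N (t + 1)), lp.single P i (z (k t) i) -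
          ∑ i ∈ range (N t), lp.single P i (z (k t) i))‖
        ≤ ‖z (k t) - ∑ i ∈ range (N (t + 1)), lp.single P i (z (k t) i)‖ +
          ‖∑ i ∈ range (N t), lp.single P i (z (k t) i)‖ := by
          rw [sub_sub_eq_add_sub, add_sub_right_comm]
          exact norm_add_le _ _
      _ ≤ δ t / 2 + δ t / 2 := add_le_add (htail' t (s t)) (hhead' t (s t))
      _ = δ t := add_halves _

variable [∀ i, NormedSpace ℝ (E i)]

lemma hasUpperLpEstimate_of_disjoint (hP : 0 < P.toReal) {u : ℕ → lp E P}
    (hu : Pairwise fun s t => ∀ i, u s i = 0 ∨ u t i = 0) {R : ℝ} (hR : ∀ t, ‖u t‖ ≤ R) :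
    HasUpperLpEstimate P.toReal R u := by
  intro a F
  have hR0 : 0 ≤ R := (norm_nonneg _).trans (hR 0)
  have hS : 0 ≤ ∑ t ∈ F, |a t| ^ P.toReal := by positivity
  rw [← Real.rpow_le_rpow_iff (norm_nonneg _) (by positivity) hP,
    norm_sum_smul_rpow_of_disjoint hP hu, Real.mul_rpow hR0 (by positivity), ← Real.rpow_mul hS,
    one_div_mul_cancel hP.ne', Real.rpow_one, mul_sum]
  refine sum_le_sum fun t _ => ?_
  rw [mul_comm]
  gcongr
  exact hR t

end Sequences

section Real

variable {P : ℝ≥0∞} [Fact (1 ≤ P)]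

lemma exists_subseq_tendsto_pi {x : ℕ → lp (fun _ : ℕ => ℝ) P} {R : ℝ} (hx : ∀ n, ‖x n‖ ≤ R) :
    ∃ y : lp (fun _ : ℕ => ℝ) P, ∃ φ : ℕ → ℕ, StrictMono φ ∧
      Tendsto (fun k => ⇑(x (φ k))) atTop (𝓝 ⇑y) := by
  have hP : P ≠ 0 := (zero_lt_one.trans_le Fact.out).ne'
  have hmem (n : ℕ) : ⇑(x n) ∈ Set.univ.pi fun _ => Set.Icc (-R) R := fun i _ =>
    abs_le.1 ((lp.norm_apply_le_norm hP (x n) i).trans (hx n))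
  obtain ⟨y, -, φ, hφ, hlim⟩ := (isCompact_univ_pi fun _ => isCompact_Icc).tendsto_subseq hmem
  have hbdd : Bornology.IsBounded (Set.range fun k => x (φ k)) :=
    isBounded_iff_forall_norm_le.2 ⟨R, Set.forall_mem_range.2 fun k => hx (φ k)⟩
  exact ⟨⟨y, lp.memℓp_of_tendsto hbdd hlim⟩, φ, hφ, hlim⟩

lemma exists_subseq_hasUpperLpEstimate (hP : 1 < P.toReal) {x : ℕ → lp (fun _ : ℕ => ℝ) P}
    {R : ℝ} (hx : ∀ n, ‖x n‖ ≤ R) (hb : IsBasicSeq x) :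
    ∃ φ : ℕ → ℕ, StrictMono φ ∧ ∃ C, 0 < C ∧ HasUpperLpEstimate P.toReal C fun t => x (φ t) := by
  have hP0 : 0 < P.toReal := one_pos.trans hP
  have hPtop : P ≠ ⊤ := by
    rintro rfl
    norm_num at hP
  have hR : 0 ≤ R := (norm_nonneg _).trans (hx 0)
  obtain ⟨y, φ, hφ, hlim⟩ := exists_subseq_tendsto_pi hx
  set z := fun k => x (φ k) - y
  have hz : Tendsto (fun k => ⇑(z k)) atTop (𝓝 0) := tendsto_sub_nhds_zero_iff.2 hlim
  obtain ⟨k, hk, u, hdisj, hu, hzu⟩ :=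
    exists_subseq_near_disjoint hPtop hz (δ := fun t => (1 / 2) ^ t) fun t => by positivity
  have hzR (k : ℕ) : ‖z k‖ ≤ R + ‖y‖ := (norm_sub_le _ _).trans (by linarith [hx (φ k)])
  have hU : HasUpperLpEstimate P.toReal (R + ‖y‖) u :=
    hasUpperLpEstimate_of_disjoint hP0 hdisj fun t => (hu t).trans (hzR (k t))
  have hZ : HasUpperLpEstimate P.toReal (R + ‖y‖ + 2) fun t => z (k t) :=
    hU.of_sum_norm_sub_le hP0 fun F => (sum_le_sum fun t _ => hzu t).trans <|
      (summable_geometric_two.sum_le_tsum F fun _ _ => by positivity).trans_eq tsum_geometric_two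
  have hy : y = 0 := by
    refine eq_zero_of_isBasicSeq_add hP ?_ hZ
    simp only [z, _root_.add_sub_cancel]
    exact hb.comp_strictMono (hφ.comp hk)
  refine ⟨fun t => φ (k t), hφ.comp hk, R + ‖y‖ + 2, by positivity, ?_⟩
  simpa only [z, hy, _root_.sub_zero] using hZ

end Real

end lp

theorem exists_subseq_dominates_of_isBasicSeq {p : ℝ} {P : ℝ≥0∞} [Fact (1 ≤ P)] (hp : 1 ≤ p)
    (hpP : p ≤ P.toReal) {E : Type*} [NormedAddCommGroup E] [NormedSpace ℝ E] {e : ℕ → E}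
    (he : IsLpBasis p e) {x : ℕ → lp (fun _ : ℕ => ℝ) P} (hx : ∀ n, ‖x n‖ = 1)
    (hb : IsBasicSeq x) : ∃ φ : ℕ → ℕ, StrictMono φ ∧ Dominates e fun k => x (φ k) := by
  rcases (hp.trans hpP).eq_or_lt with hP | hP
  · have hp1 : p = 1 := le_antisymm (hpP.trans hP.ge) hp
    subst hp1
    exact ⟨id, strictMono_id, (hasUpperLpEstimate_one fun n => (hx n).le).dominates he one_pos⟩
  · obtain ⟨φ, hφ, C, hC, hest⟩ := lp.exists_subseq_hasUpperLpEstimate hP (fun n => (hx n).le) hb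
    exact ⟨φ, hφ, (hest.of_exponent_le (by linarith) hpP).dominates he hC⟩

theorem memJS_iff_memWS_of_exists_subseq_dominates (𝒮 : SchreierSystem) (ξ : Ordinal)
    {X Y E : Type*} [NormedAddCommGroup X] [NormedSpace ℝ X] [NormedAddCommGroup Y]
    [NormedSpace ℝ Y] [NormedAddCommGroup E] [NormedSpace ℝ E] {p : ℝ} {e : ℕ → E}
    (he : IsLpBasis p e)
    (h : ∀ x : ℕ → X, (∀ n, ‖x n‖ = 1) → IsBasicSeq x →
      ∃ φ : ℕ → ℕ, StrictMono φ ∧ Dominates e fun k => x (φ k))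
    (T : X →L[ℝ] Y) : MemJS 𝒮 ξ e T ↔ MemWS 𝒮 ξ e T := by
  refine ⟨fun hJS x hx hb hdom => ?_, fun hWS x hx hb _ => hWS x hx hb⟩
  obtain ⟨φ, hφ, hφdom⟩ := h x hx hb
  exact hJS _ (fun t => hx (φ t)) (hb.comp_strictMono hφ) hφdom (hdom.comp_strictMono he hφ)

theorem stmt19_general (p q : ℝ) (hp : 1 ≤ p) (hpq : p ≤ q)
    [Fact (1 ≤ ENNReal.ofReal q)]
    {E : Type} [NormedAddCommGroup E] [NormedSpace ℝ E]
    (e : ℕ → E) (he : IsLpBasis p e) :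
    (∀ x : ℕ → lp (fun _ : ℕ => ℝ) (ENNReal.ofReal q),
      (∀ n, ‖x n‖ = 1) → IsBasicSeq x →
        ∃ φ : ℕ → ℕ, StrictMono φ ∧ Dominates e (fun k => x (φ k))) ∧
    (∀ (𝒮 : SchreierSystem) (ξ : Ordinal), 1 ≤ ξ → ξ ≤ ω₁ →
      ∀ (Y : Type) [NormedAddCommGroup Y] [NormedSpace ℝ Y] [CompleteSpace Y]
        (T : lp (fun _ : ℕ => ℝ) (ENNReal.ofReal q) →L[ℝ] Y),
        (MemJS 𝒮 ξ e T ↔ MemWS 𝒮 ξ e T)) := by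
  have hpq' : p ≤ (ENNReal.ofReal q).toReal := by
    rwa [ENNReal.toReal_ofReal (by linarith)]
  have hsub : ∀ x : ℕ → lp (fun _ : ℕ => ℝ) (ENNReal.ofReal q), (∀ n, ‖x n‖ = 1) →
      IsBasicSeq x → ∃ φ : ℕ → ℕ, StrictMono φ ∧ Dominates e fun k => x (φ k) :=
    fun _ => exists_subseq_dominates_of_isBasicSeq hp hpq' he
  exact ⟨hsub, fun 𝒮 ξ _ _ Y _ _ _ T => memJS_iff_memWS_of_exists_subseq_dominates 𝒮 ξ he hsub T⟩

/-- Let `1 ≤ p ≤ q < ∞` and let `e` be the canonical basis of `ℓ_p`.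
Then every normalized basic sequence in `ℓ_q` admits a subsequence dominated by `e`;
consequently, for every Banach space `Y` and every `1 ≤ ξ ≤ ω₁`,
`JS_{e,ξ}(ℓ_q, Y) = WS_{e,ξ}(ℓ_q, Y)`. -/
theorem stmt19 (p q : ℝ) (hp : 1 ≤ p) (hpq : p ≤ q)
    [Fact (1 ≤ ENNReal.ofReal q)]
    {E : Type} [NormedAddCommGroup E] [NormedSpace ℝ E] [CompleteSpace E]
    (e : ℕ → E) (he : IsLpBasis p e) :
    (∀ x : ℕ → lp (fun _ : ℕ => ℝ) (ENNReal.ofReal q),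
      (∀ n, ‖x n‖ = 1) → IsBasicSeq x →
        ∃ φ : ℕ → ℕ, StrictMono φ ∧ Dominates e (fun k => x (φ k))) ∧
    (∀ (𝒮 : SchreierSystem) (ξ : Ordinal), 1 ≤ ξ → ξ ≤ ω₁ →
      ∀ (Y : Type) [NormedAddCommGroup Y] [NormedSpace ℝ Y] [CompleteSpace Y]
        (T : lp (fun _ : ℕ => ℝ) (ENNReal.ofReal q) →L[ℝ] Y),
        (MemJS 𝒮 ξ e T ↔ MemWS 𝒮 ξ e T)) :=
  stmt19_general p q hp hpq e he
end
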